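/- arXiv:1904.10694 — 10 statements merged into one kernel-verified Lean document; each statement's English description precedes it below -/
import Mathlib

section
/- Let P be a monic hyperbolic polynomial of degree d (all roots real) with all coefficients nonzero. If the sequence of coefficients of P (from leading to constant) consists of m pluses followed by n minuses, where m+n = d+1 and 1 ≤ n ≤ m, then the number of negative roots of P whose modulus is strictly less than the modulus of the unique positive root of P is at most 2n−2. -/
/-!
By Descartes' rule of signs the roots of `P` other than `α` are negative, so
`P = (X - α) * G` with `G = ∏ (X + tᵢ)`, `tᵢ > 0`, and positivity of the coefficient
of `Xⁿ` reads `G_{n-1} > α G_n`. Conversely, if at least `2k + 1` of the `tᵢ` lie in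
`(0, α)`, then `G_k < α G_{k+1}`: for the product over those `tᵢ` alone this follows from
the inequalities `(N - j) c_j < (j + 1) α c_{j+1}` between its coefficients, proved by
induction on `N`, and multiplying by further factors `X + t`, `t > 0`, preserves
`c_i < α c_{i+1}` for all `i ≤ k`. With `k = n - 1` this bounds the number of `tᵢ < α`
by `2n - 2`.
-/

open Polynomial

theorem List.destutter'_append_of_forall_eq {α : Type*} [DecidableEq α] {a : α}
    {l : List α} (h : ∀ x ∈ l, x = a) (l' : List α) :
    (l ++ l').destutter' (· ≠ ·) a = l'.destutter' (· ≠ ·) a := by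
  induction l with
  | nil => rfl
  | cons x l ih =>
    obtain rfl := h x List.mem_cons_self
    rw [List.cons_append, List.destutter'_cons, if_neg (not_not.mpr rfl)]
    exact ih fun y hy => h y (List.mem_cons_of_mem _ hy)

theorem List.destutter_replicate_append_replicate {α : Type*} [DecidableEq α] {a b : α}
    (hab : a ≠ b) (i j : ℕ) :
    (List.replicate (i + 1) a ++ List.replicate (j + 1) b).destutter (· ≠ ·) = [a, b] := by
  rw [List.replicate_succ, List.cons_append, List.destutter_cons',
    List.destutter'_append_of_forall_eq (fun _ => List.eq_of_mem_replicate),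
    List.replicate_succ, List.destutter'_cons, if_pos hab,
    ← List.append_nil (List.replicate j b),
    List.destutter'_append_of_forall_eq (fun _ => List.eq_of_mem_replicate)]
  rfl

namespace Polynomial

theorem signVariations_eq_one_of_coeff_sign {R : Type*} [Semiring R] [LinearOrder R] {P : R[X]}
    {n : ℕ} (hn : 0 < n) (hnd : n ≤ P.natDegree)
    (hsign : ∀ j ≤ P.natDegree, (n ≤ j → 0 < P.coeff j) ∧ (j < n → P.coeff j < 0)) :
    P.signVariations = 1 := by
  have hP : P ≠ 0 := fun h => by simpa [h] using (hsign 0 (Nat.zero_le _)).2 hn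
  have hsigns : P.coeffList.map SignType.sign =
      List.replicate (P.natDegree - n + 1) 1 ++ List.replicate (n - 1 + 1) (-1) := by
    rw [coeffList, degree_eq_natDegree hP, WithBot.succ_natCast]
    apply List.ext_getElem
    · simp; omega
    · intro i h1 h2
      simp only [List.map_map, List.getElem_map, List.getElem_reverse, List.getElem_range,
        List.getElem_append, List.getElem_replicate, List.length_replicate, List.length_range,
        Function.comp]
      simp only [List.length_map, List.length_reverse, List.length_range] at h1
      split_ifs with h
      · exact sign_eq_one_iff.mpr ((hsign _ (Nat.sub_le _ _)).1 (by omega))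
      · exact sign_eq_neg_one_iff.mpr ((hsign _ (Nat.sub_le _ _)).2 (by omega))
  rw [signVariations, hsigns, List.filter_eq_self.mpr (by simp),
    List.destutter_replicate_append_replicate (by decide)]
  rfl

variable {R : Type*} [CommRing R] [LinearOrder R] [IsStrictOrderedRing R] {α : R}

theorem neg_of_mem_roots_erase {P : R[X]} {n : ℕ} (hn : 0 < n) (hnd : n ≤ P.natDegree)
    (hsign : ∀ j ≤ P.natDegree, (n ≤ j → 0 < P.coeff j) ∧ (j < n → P.coeff j < 0))
    (hα : α ∈ P.roots) (hαpos : 0 < α) : ∀ x ∈ P.roots.erase α, x < 0 := by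
  have hdescartes := P.roots_countP_pos_le_signVariations
  rw [signVariations_eq_one_of_coeff_sign hn hnd hsign, ← Multiset.cons_erase hα,
    Multiset.countP_cons_of_pos _ hαpos, add_le_iff_nonpos_left, Nat.le_zero,
    Multiset.countP_eq_zero] at hdescartes
  intro x hx
  refine (not_lt.mp (hdescartes x hx)).lt_of_ne fun hx0 => ?_
  have hroot := (mem_roots'.mp (Multiset.mem_of_mem_erase hx)).2
  rw [hx0, IsRoot, ← coeff_zero_eq_eval_zero] at hroot
  exact ((hsign 0 (Nat.zero_le _)).2 hn).ne hroot

theorem coeff_prod_X_sub_C_nonneg {s : Multiset R} (hs : ∀ x ∈ s, x ≤ 0) (j : ℕ) :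
    0 ≤ (s.map fun x => X - C x).prod.coeff j := by
  induction s using Multiset.induction_on generalizing j with
  | empty => by_cases h : j = 0 <;> simp [h, coeff_one]
  | cons a s ih =>
    have ha := hs a (Multiset.mem_cons_self a s)
    have ih := ih fun x hx => hs x (Multiset.mem_cons_of_mem hx)
    rw [Multiset.map_cons, Multiset.prod_cons]
    cases j with
    | zero => rw [mul_coeff_zero]; simpa using mul_nonneg (neg_nonneg.mpr ha) (ih 0)
    | succ j => rw [coeff_X_sub_C_mul]; nlinarith [ih j, ih (j + 1)]

theorem coeff_prod_X_sub_C_pos {s : Multiset R} (hs : ∀ x ∈ s, x < 0) {j : ℕ}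
    (hj : j ≤ Multiset.card s) : 0 < (s.map fun x => X - C x).prod.coeff j := by
  induction s using Multiset.induction_on generalizing j with
  | empty =>
    obtain rfl : j = 0 := by simpa using hj
    simp
  | cons a s ih =>
    have ha := hs a (Multiset.mem_cons_self a s)
    have hs' : ∀ x ∈ s, x < 0 := fun x hx => hs x (Multiset.mem_cons_of_mem hx)
    have hnonneg := coeff_prod_X_sub_C_nonneg fun x hx => (hs' x hx).le
    rw [Multiset.card_cons] at hj
    rw [Multiset.map_cons, Multiset.prod_cons]
    cases j with
    | zero => rw [mul_coeff_zero]; simpa using mul_pos (neg_pos.mpr ha) (ih hs' (Nat.zero_le _))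
    | succ j => rw [coeff_X_sub_C_mul]; nlinarith [ih hs' (by omega : j ≤ _), hnonneg (j + 1)]

-- Equivalently `c_j / (N choose j) < α * c_{j+1} / (N choose (j + 1))`.
theorem card_sub_mul_coeff_prod_X_sub_C_lt {s : Multiset R} (hs : ∀ x ∈ s, -α < x ∧ x < 0)
    {j : ℕ} (hj : j < Multiset.card s) :
    ((Multiset.card s : R) - j) * (s.map fun x => X - C x).prod.coeff j <
      (j + 1) * α * (s.map fun x => X - C x).prod.coeff (j + 1) := by
  induction s using Multiset.induction_on generalizing j with
  | empty => simp at hj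
  | cons a s ih =>
    obtain ⟨hαa, ha⟩ := hs a (Multiset.mem_cons_self a s)
    have hs' : ∀ x ∈ s, -α < x ∧ x < 0 := fun x hx => hs x (Multiset.mem_cons_of_mem hx)
    have hα : 0 < α := by linarith
    rw [Multiset.card_cons] at hj ⊢
    rw [Multiset.map_cons, Multiset.prod_cons]
    set G := (s.map fun x => X - C x).prod
    have hnonneg : ∀ i, 0 ≤ G.coeff i := coeff_prod_X_sub_C_nonneg fun x hx => (hs' x hx).2.le
    have hweak : ∀ i ≤ Multiset.card s,
        ((Multiset.card s : R) - i) * G.coeff i ≤ (i + 1) * α * G.coeff (i + 1) := by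
      intro i hi
      rcases hi.lt_or_eq with hi | hi
      · exact (ih hs' hi).le
      · rw [hi, sub_self, zero_mul]
        exact mul_nonneg (mul_nonneg (by positivity) hα.le) (hnonneg _)
    have hj' : j ≤ Multiset.card s := by omega
    have hpos : 0 < G.coeff j := coeff_prod_X_sub_C_pos (fun x hx => (hs' x hx).2) hj'
    have hshrink : -a * G.coeff j < α * G.coeff j := by nlinarith
    have hnext := mul_le_mul_of_nonneg_left (hweak j hj') (neg_nonneg.mpr ha.le)
    push_cast
    cases j with
    | zero =>
      rw [mul_coeff_zero, zero_add, coeff_X_sub_C_mul]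
      simp only [coeff_sub, coeff_X_zero, coeff_C_zero, zero_sub, CharP.cast_eq_zero] at hnext ⊢
      linarith
    | succ i =>
      rw [coeff_X_sub_C_mul, coeff_X_sub_C_mul]
      have hprev := hweak i (by omega)
      push_cast at hnext hprev ⊢
      linarith

theorem coeff_mul_X_sub_C_lt {Q : R[X]} {k : ℕ} (hα : 0 ≤ α) (hQ0 : 0 ≤ Q.coeff 0)
    (hQ : ∀ i ≤ k, Q.coeff i < α * Q.coeff (i + 1)) {a : R} (ha : a < 0) :
    ∀ i ≤ k, (Q * (X - C a)).coeff i < α * (Q * (X - C a)).coeff (i + 1) := by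
  intro i hi
  have hcur := mul_lt_mul_of_pos_left (hQ i hi) (neg_pos.mpr ha)
  cases i with
  | zero =>
    rw [mul_coeff_zero, coeff_mul_X_sub_C]
    simp only [coeff_sub, coeff_X_zero, coeff_C_zero, zero_sub]
    nlinarith
  | succ i =>
    rw [coeff_mul_X_sub_C, coeff_mul_X_sub_C]
    linarith [hQ i (by omega)]

theorem coeff_mul_prod_X_sub_C_lt {s : Multiset R} (hs : ∀ x ∈ s, x < 0) {Q : R[X]} {k : ℕ}
    (hα : 0 ≤ α) (hQ0 : 0 ≤ Q.coeff 0) (hQ : ∀ i ≤ k, Q.coeff i < α * Q.coeff (i + 1)) :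
    ∀ i ≤ k, (Q * (s.map fun x => X - C x).prod).coeff i <
      α * (Q * (s.map fun x => X - C x).prod).coeff (i + 1) := by
  induction s using Multiset.induction_on generalizing Q with
  | empty => simpa using hQ
  | cons a s ih =>
    have ha := hs a (Multiset.mem_cons_self a s)
    rw [Multiset.map_cons, Multiset.prod_cons, ← mul_assoc]
    refine ih (fun x hx => hs x (Multiset.mem_cons_of_mem hx)) ?_
      (coeff_mul_X_sub_C_lt hα hQ0 hQ ha)
    rw [mul_coeff_zero]
    simpa using mul_nonneg hQ0 (neg_nonneg.mpr ha.le)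

theorem coeff_prod_X_sub_C_lt {s : Multiset R} (hα : 0 < α) (hs : ∀ x ∈ s, x < 0) {k : ℕ}
    (hk : 2 * k + 1 ≤ Multiset.card (s.filter (-α < ·))) :
    (s.map fun x => X - C x).prod.coeff k < α * (s.map fun x => X - C x).prod.coeff (k + 1) := by
  set b := s.filter (-α < ·)
  have hb : ∀ x ∈ b, -α < x ∧ x < 0 := fun x hx =>
    ⟨(Multiset.mem_filter.mp hx).2, hs x (Multiset.mem_filter.mp hx).1⟩
  have hbase : ∀ i ≤ k, (b.map fun x => X - C x).prod.coeff i <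
      α * (b.map fun x => X - C x).prod.coeff (i + 1) := by
    intro i hi
    have hlt := card_sub_mul_coeff_prod_X_sub_C_lt hb (j := i) (by omega)
    have hcard : (i : R) + 1 ≤ Multiset.card b - i := by
      rw [le_sub_iff_add_le]; exact_mod_cast (by omega : i + 1 + i ≤ Multiset.card b)
    have hnonneg := coeff_prod_X_sub_C_nonneg (fun x hx => (hb x hx).2.le) i
    nlinarith
  have hsplit := Multiset.filter_add_not (-α < ·) s
  rw [← hsplit, Multiset.map_add, Multiset.prod_add]
  exact coeff_mul_prod_X_sub_C_lt (fun x hx => hs x (Multiset.mem_filter.mp hx).1) hα.le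
    (coeff_prod_X_sub_C_nonneg (fun x hx => (hb x hx).2.le) 0) hbase k le_rfl

end Polynomial

theorem stmt0_general (d n : ℕ) (P : Polynomial ℝ)
    (hmonic : P.Monic) (hdeg : P.natDegree = d)
    (hhyp : Multiset.card P.roots = d)
    (hn1 : 1 ≤ n)
    (hsign : ∀ j ≤ d, (n ≤ j → 0 < P.coeff j) ∧ (j < n → P.coeff j < 0))
    (α : ℝ) (hα : α ∈ P.roots) (hαpos : 0 < α) :
    Multiset.card (P.roots.filter (fun x => x < 0 ∧ |x| < α)) ≤ 2 * n - 2 := by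
  subst hdeg
  set M := P.roots.erase α
  have hroots : P.roots = α ::ₘ M := (Multiset.cons_erase hα).symm
  rw [hroots, Multiset.filter_cons_of_neg _ fun h => hαpos.not_gt h.1]
  by_contra! hcount
  have hMcard : Multiset.card M = P.natDegree - 1 := by
    rw [Multiset.card_erase_of_mem hα, hhyp, Nat.pred_eq_sub_one]
  have hnd : n < P.natDegree := by
    have hsub := Multiset.card_le_card (Multiset.filter_le (fun x => x < 0 ∧ |x| < α) M)
    omega
  have hneg : ∀ x ∈ M, x < 0 :=
    neg_of_mem_roots_erase hn1 hnd.le hsign hα hαpos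
  have hfilter : M.filter (fun x => x < 0 ∧ |x| < α) = M.filter (-α < ·) :=
    Multiset.filter_congr fun x hx => by
      rw [abs_of_neg (hneg x hx), neg_lt, and_iff_right (hneg x hx)]
  have hfactor : P = (M.map fun x => X - C x).prod * (X - C α) := by
    conv_lhs => rw [← prod_multiset_X_sub_C_of_monic_of_roots_card_eq hmonic hhyp]
    rw [hroots, Multiset.map_cons, Multiset.prod_cons, mul_comm]
  obtain ⟨k, rfl⟩ : ∃ k, n = k + 1 := ⟨n - 1, by omega⟩
  have hcoeff := (hsign (k + 1) hnd.le).1 le_rfl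
  rw [hfactor, coeff_mul_X_sub_C] at hcoeff
  have hgrowth := coeff_prod_X_sub_C_lt hαpos hneg (k := k) (by rw [← hfilter]; omega)
  linarith

/-- For a monic hyperbolic polynomial of degree `d` with all coefficients
nonzero, whose coefficient sign sequence is `m` pluses followed by `n` minuses
(`m + n = d + 1`, `1 ≤ n ≤ m`), the number of negative roots whose modulus is strictly
less than the modulus of the (unique) positive root is at most `2n - 2`. -/
theorem stmt0 (d m n : ℕ) (P : Polynomial ℝ)
    (hmonic : P.Monic) (hdeg : P.natDegree = d)
    (hhyp : Multiset.card P.roots = d)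
    (hmn : m + n = d + 1) (hn1 : 1 ≤ n) (hnm : n ≤ m)
    (hsign : ∀ j ≤ d, (n ≤ j → 0 < P.coeff j) ∧ (j < n → P.coeff j < 0))
    (α : ℝ) (hα : α ∈ P.roots) (hαpos : 0 < α) :
    Multiset.card (P.roots.filter (fun x => x < 0 ∧ |x| < α)) ≤ 2 * n - 2 :=
  stmt0_general d n P hmonic hdeg hhyp hn1 hsign α hα hαpos
end

section
/- Let P be a monic hyperbolic polynomial of degree d with all coefficients nonzero realizing the sign pattern with 1 plus followed by d minuses (i.e., P = x^d + a_{d-1}x^{d-1} + ... + a_0 with a_j < 0 for all j ≤ d−1). Then the modulus of the unique positive root of P is strictly larger than the modulus of every negative root of P. -/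
open Polynomial

/-- For a monic hyperbolic polynomial of degree `d` with sign pattern
one plus followed by `d` minuses, the modulus of the unique positive root is strictly
larger than the modulus of every negative root. -/
theorem stmt2 (d : ℕ) (P : Polynomial ℝ)
    (hmonic : P.Monic) (hdeg : P.natDegree = d) (hd : 1 ≤ d)
    (hhyp : Multiset.card P.roots = d)
    (hsign : ∀ j ≤ d - 1, P.coeff j < 0)
    (α : ℝ) (hα : α ∈ P.roots) (hαpos : 0 < α)
    (x : ℝ) (hx : x ∈ P.roots) (hxneg : x < 0) :
    |x| < α := by
  have hb : ∀ i < d, 0 < -(P.coeff i) := by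
    intro i hi
    have := hsign i (Nat.le_sub_one_of_lt hi)
    linarith
  have key : ∀ r : ℝ, r ∈ P.roots →
      r ^ d = ∑ i ∈ Finset.range d, (-(P.coeff i)) * r ^ i := by
    intro r hr
    have h0 : P.eval r = 0 := Polynomial.isRoot_of_mem_roots hr
    have he : P.eval r = ∑ i ∈ Finset.range (d + 1), P.coeff i * r ^ i := by
      rw [Polynomial.eval_eq_sum_range, hdeg]
    have hc : P.coeff d = 1 := by rw [← hdeg]; exact hmonic.coeff_natDegree
    rw [Finset.sum_range_succ, hc, one_mul, h0] at he
    have hsum : ∑ i ∈ Finset.range d, (-(P.coeff i)) * r ^ i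
        = -∑ i ∈ Finset.range d, P.coeff i * r ^ i := by
      rw [← Finset.sum_neg_distrib]
      exact Finset.sum_congr rfl fun i _ => by ring
    rw [hsum]; linarith
  have hα0 : α ^ d = ∑ i ∈ Finset.range d, (-(P.coeff i)) * α ^ i := key α hα
  have hx0 : x ^ d = ∑ i ∈ Finset.range d, (-(P.coeff i)) * x ^ i := key x hx
  rcases eq_or_lt_of_le hd with hd1 | hd2
  · -- case d = 1 : the only root is positive, contradiction with x < 0
    exfalso
    rw [← hd1] at hx0
    simp [Finset.sum_range_one] at hx0
    have hb0 := hb 0 (by omega)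
    linarith
  · -- case 2 ≤ d
    by_contra hcon
    push_neg at hcon
    have hxabs : 0 < |x| := abs_pos.mpr (ne_of_lt hxneg)
    set S := ∑ i ∈ Finset.range d, (-(P.coeff i)) * |x| ^ i with hS
    have h1 : x ^ d < S := by
      rw [hx0]
      apply Finset.sum_lt_sum
      · intro i hi
        have hbi := le_of_lt (hb i (Finset.mem_range.mp hi))
        have hpow : x ^ i ≤ |x| ^ i := by
          calc x ^ i ≤ |x ^ i| := le_abs_self _
            _ = |x| ^ i := abs_pow x i
        exact mul_le_mul_of_nonneg_left hpow hbi
      · refine ⟨1, Finset.mem_range.mpr (by omega), ?_⟩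
        have hb1 := hb 1 (by omega)
        have hpx : x ^ 1 < |x| ^ 1 := by
          simp only [pow_one]
          have : |x| = -x := abs_of_neg hxneg
          linarith
        exact mul_lt_mul_of_pos_left hpx hb1
    have h2 : -(x ^ d) < S := by
      have hneg : -(x ^ d) = ∑ i ∈ Finset.range d, (-(P.coeff i)) * (-(x ^ i)) := by
        rw [hx0, ← Finset.sum_neg_distrib]
        exact Finset.sum_congr rfl fun i _ => by ring
      rw [hneg]
      apply Finset.sum_lt_sum
      · intro i hi
        have hbi := le_of_lt (hb i (Finset.mem_range.mp hi))
        have hpow : -(x ^ i) ≤ |x| ^ i := by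
          have := neg_abs_le (x ^ i)
          rw [abs_pow] at this
          linarith
        exact mul_le_mul_of_nonneg_left hpow hbi
      · refine ⟨0, Finset.mem_range.mpr (by omega), ?_⟩
        have hb0 := hb 0 (by omega)
        have : -(x ^ 0) < |x| ^ 0 := by norm_num
        exact mul_lt_mul_of_pos_left this hb0
    have h3 : |x| ^ d < S := by
      rw [← abs_pow]
      exact abs_lt.mpr ⟨by linarith, h1⟩
    have hB : S * α ^ (d - 1) ≤
        (∑ i ∈ Finset.range d, (-(P.coeff i)) * α ^ i) * |x| ^ (d - 1) := by
      rw [hS, Finset.sum_mul, Finset.sum_mul]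
      apply Finset.sum_le_sum
      intro i hi
      have hi' := Finset.mem_range.mp hi
      have hbi := le_of_lt (hb i hi')
      have hle : |x| ^ i * α ^ (d - 1) ≤ α ^ i * |x| ^ (d - 1) := by
        have e1 : α ^ (d - 1) = α ^ i * α ^ (d - 1 - i) := by
          rw [← pow_add]; congr 1; omega
        have e2 : |x| ^ (d - 1) = |x| ^ i * |x| ^ (d - 1 - i) := by
          rw [← pow_add]; congr 1; omega
        have hple : α ^ (d - 1 - i) ≤ |x| ^ (d - 1 - i) :=
          pow_le_pow_left₀ (le_of_lt hαpos) hcon _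
        rw [e1, e2]
        calc |x| ^ i * (α ^ i * α ^ (d - 1 - i))
            = (α ^ i * |x| ^ i) * α ^ (d - 1 - i) := by ring
          _ ≤ (α ^ i * |x| ^ i) * |x| ^ (d - 1 - i) := by
              apply mul_le_mul_of_nonneg_left hple
              positivity
          _ = α ^ i * (|x| ^ i * |x| ^ (d - 1 - i)) := by ring
      calc (-(P.coeff i)) * |x| ^ i * α ^ (d - 1)
          = (-(P.coeff i)) * (|x| ^ i * α ^ (d - 1)) := by ring
        _ ≤ (-(P.coeff i)) * (α ^ i * |x| ^ (d - 1)) :=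
            mul_le_mul_of_nonneg_left hle hbi
        _ = (-(P.coeff i)) * α ^ i * |x| ^ (d - 1) := by ring
    have hfin : |x| ^ d * α ^ (d - 1) < α ^ d * |x| ^ (d - 1) := by
      calc |x| ^ d * α ^ (d - 1) < S * α ^ (d - 1) :=
            mul_lt_mul_of_pos_right h3 (pow_pos hαpos _)
        _ ≤ (∑ i ∈ Finset.range d, (-(P.coeff i)) * α ^ i) * |x| ^ (d - 1) := hB
        _ = α ^ d * |x| ^ (d - 1) := by rw [← hα0]
    have e3 : |x| ^ d = |x| ^ (d - 1) * |x| := by rw [← pow_succ]; congr 1; omega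
    have e4 : α ^ d = α ^ (d - 1) * α := by rw [← pow_succ]; congr 1; omega
    rw [e3, e4] at hfin
    have hpos : 0 < |x| ^ (d - 1) * α ^ (d - 1) := by positivity
    have h' : (|x| ^ (d - 1) * α ^ (d - 1)) * |x| < (|x| ^ (d - 1) * α ^ (d - 1)) * α := by
      calc (|x| ^ (d - 1) * α ^ (d - 1)) * |x|
          = |x| ^ (d - 1) * |x| * α ^ (d - 1) := by ring
        _ < α ^ (d - 1) * α * |x| ^ (d - 1) := hfin
        _ = (|x| ^ (d - 1) * α ^ (d - 1)) * α := by ring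
    have hlt : |x| < α := lt_of_mul_lt_mul_left h' (le_of_lt hpos)
    linarith
end

section
/- Let d ≥ 3 and let P be a monic degree d hyperbolic polynomial with all coefficients nonzero whose sign sequence consists of m pluses followed by n minuses (m+n = d+1). If n* denotes the number of negative roots of P with modulus strictly less than the modulus of the unique positive root, and all moduli of roots of P are distinct, then max(0, 2n−d−1) ≤ n* ≤ min(2n−2, d−1). -/
open Polynomial




lemma key_identity (s A : Finset ℝ) (hA : A ⊆ s) (p : ℕ) :
    ∑ S ∈ s.powersetCard (p+1), (((A ∩ S).card : ℝ) * ∏ x ∈ S, x)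
      = ∑ T ∈ s.powersetCard p, ∑ a ∈ A \ T, ∏ x ∈ insert a T, x := by
  have L : ∀ S : Finset ℝ, (((A ∩ S).card : ℝ) * ∏ x ∈ S, x) = ∑ a ∈ A ∩ S, ∏ x ∈ S, x := by
    intro S; rw [Finset.sum_const, nsmul_eq_mul]
  simp_rw [L]
  rw [Finset.sum_sigma', Finset.sum_sigma']
  refine Finset.sum_bij' (fun x _ => ⟨x.1.erase x.2, x.2⟩) (fun x _ => ⟨insert x.2 x.1, x.2⟩)
    ?_ ?_ ?_ ?_ ?_
  · rintro ⟨S, a⟩ hx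
    rw [Finset.mem_sigma, Finset.mem_powersetCard] at hx ⊢
    obtain ⟨⟨hSs, hScard⟩, haS⟩ := hx
    rw [Finset.mem_inter] at haS
    refine ⟨⟨(Finset.erase_subset _ _).trans hSs, ?_⟩, ?_⟩
    · rw [Finset.card_erase_of_mem haS.2, hScard]; rfl
    · rw [Finset.mem_sdiff]
      exact ⟨haS.1, Finset.notMem_erase _ _⟩
  · rintro ⟨T, a⟩ hx
    rw [Finset.mem_sigma, Finset.mem_powersetCard] at hx ⊢
    obtain ⟨⟨hTs, hTcard⟩, haT⟩ := hx
    rw [Finset.mem_sdiff] at haT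
    refine ⟨⟨Finset.insert_subset (hA haT.1) hTs, ?_⟩, ?_⟩
    · rw [Finset.card_insert_of_notMem haT.2, hTcard]
    · rw [Finset.mem_inter]
      exact ⟨haT.1, Finset.mem_insert_self _ _⟩
  · rintro ⟨S, a⟩ hx
    rw [Finset.mem_sigma] at hx
    have : a ∈ S := (Finset.mem_inter.1 hx.2).2
    simp [Finset.insert_erase this]
  · rintro ⟨T, a⟩ hx
    rw [Finset.mem_sigma, Finset.mem_sdiff] at hx
    simp [Finset.erase_insert hx.2.2]
  · rintro ⟨S, a⟩ hx
    rw [Finset.mem_sigma] at hx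
    have : a ∈ S := (Finset.mem_inter.1 hx.2).2
    simp [Finset.insert_erase this]

lemma prodpos {s T : Finset ℝ} (hpos : ∀ x ∈ s, 0 < x) (hT : T ⊆ s) :
    0 < ∏ x ∈ T, x :=
  Finset.prod_pos fun x hx => hpos x (hT hx)

lemma lemA (s A : Finset ℝ) (hA : A ⊆ s) (α : ℝ) (hαpos : 0 < α)
    (hpos : ∀ x ∈ s, 0 < x) (hAgt : ∀ a ∈ A, α < a) (p : ℕ)
    (hp : p + 1 ≤ s.card) (hcard : 2 * p + 1 ≤ A.card)
    (keyid : ∑ S ∈ s.powersetCard (p+1), (((A ∩ S).card : ℝ) * ∏ x ∈ S, x)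
      = ∑ T ∈ s.powersetCard p, ∑ a ∈ A \ T, ∏ x ∈ insert a T, x) :
    α * ∑ T ∈ s.powersetCard p, ∏ x ∈ T, x
      < ∑ S ∈ s.powersetCard (p+1), ∏ x ∈ S, x := by
  have hc : (0:ℝ) < (p:ℝ) + 1 := by positivity
  rw [← mul_lt_mul_iff_right₀ hc]
  calc ((p:ℝ)+1) * (α * ∑ T ∈ s.powersetCard p, ∏ x ∈ T, x)
      = ∑ T ∈ s.powersetCard p, ((p:ℝ)+1) * (α * ∏ x ∈ T, x) := by
        rw [Finset.mul_sum, Finset.mul_sum]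
    _ ≤ ∑ T ∈ s.powersetCard p, (((A \ T).card : ℝ)) * (α * ∏ x ∈ T, x) := by
        refine Finset.sum_le_sum fun T hT => ?_
        rw [Finset.mem_powersetCard] at hT
        obtain ⟨hTs, hTc⟩ := hT
        have h1 : p + 1 ≤ (A \ T).card := by
          have := Finset.le_card_sdiff T A
          omega
        have h2 : (0:ℝ) < α * ∏ x ∈ T, x := mul_pos hαpos (prodpos hpos hTs)
        have h3 : ((p:ℝ)+1) ≤ ((A \ T).card : ℝ) := by exact_mod_cast h1
        exact mul_le_mul_of_nonneg_right h3 h2.le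
    _ = ∑ T ∈ s.powersetCard p, ∑ a ∈ A \ T, (α * ∏ x ∈ T, x) := by
        refine Finset.sum_congr rfl fun T hT => ?_
        rw [Finset.sum_const, nsmul_eq_mul]
    _ < ∑ T ∈ s.powersetCard p, ∑ a ∈ A \ T, ∏ x ∈ insert a T, x := by
        rw [Finset.sum_sigma', Finset.sum_sigma']
        refine Finset.sum_lt_sum_of_nonempty ?_ ?_
        · obtain ⟨T₀, hT₀⟩ := Finset.powersetCard_nonempty_of_le (le_trans (Nat.le_succ p) hp)
          have hTmem := hT₀
          rw [Finset.mem_powersetCard] at hTmem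
          obtain ⟨hT₀s, hT₀c⟩ := hTmem
          have h1 : p + 1 ≤ (A \ T₀).card := by
            have := Finset.le_card_sdiff T₀ A
            omega
          have h2 : 0 < (A \ T₀).card := by omega
          obtain ⟨a₀, ha₀⟩ := Finset.card_pos.1 h2
          exact ⟨⟨T₀, a₀⟩, Finset.mem_sigma.2 ⟨hT₀, ha₀⟩⟩
        · rintro ⟨T, a⟩ hx
          rw [Finset.mem_sigma, Finset.mem_powersetCard] at hx
          obtain ⟨⟨hTs, hTc⟩, haT⟩ := hx
          rw [Finset.mem_sdiff] at haT
          rw [Finset.prod_insert haT.2]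
          exact mul_lt_mul_of_pos_right (hAgt a haT.1) (prodpos hpos hTs)
    _ = ∑ S ∈ s.powersetCard (p+1), (((A ∩ S).card : ℝ) * ∏ x ∈ S, x) := keyid.symm
    _ ≤ ∑ S ∈ s.powersetCard (p+1), ((p:ℝ)+1) * ∏ x ∈ S, x := by
        refine Finset.sum_le_sum fun S hS => ?_
        rw [Finset.mem_powersetCard] at hS
        obtain ⟨hSs, hSc⟩ := hS
        have h1 : (A ∩ S).card ≤ p + 1 := by
          have := Finset.card_le_card ((Finset.inter_subset_right : A ∩ S ⊆ S))
          omega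
        have h3 : ((A ∩ S).card : ℝ) ≤ (p:ℝ)+1 := by exact_mod_cast h1
        exact mul_le_mul_of_nonneg_right h3 (prodpos hpos hSs).le
    _ = ((p:ℝ)+1) * ∑ S ∈ s.powersetCard (p+1), ∏ x ∈ S, x := by
        rw [Finset.mul_sum]

lemma prodpos' {s T : Finset ℝ} (hpos : ∀ x ∈ s, 0 < x) (hT : T ⊆ s) :
    0 < ∏ x ∈ T, x :=
  Finset.prod_pos fun x hx => hpos x (hT hx)

lemma lemB (s B : Finset ℝ) (hB : B ⊆ s) (α : ℝ)
    (hpos : ∀ x ∈ s, 0 < x) (hBlt : ∀ b ∈ B, b < α) (p : ℕ)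
    (hp : p + 1 ≤ s.card) (hcard : 2 * (s.card - (p+1)) + 1 ≤ B.card)
    (keyid : ∑ S ∈ s.powersetCard (p+1), (((B ∩ S).card : ℝ) * ∏ x ∈ S, x)
      = ∑ T ∈ s.powersetCard p, ∑ a ∈ B \ T, ∏ x ∈ insert a T, x) :
    ∑ S ∈ s.powersetCard (p+1), ∏ x ∈ S, x
      < α * ∑ T ∈ s.powersetCard p, ∏ x ∈ T, x := by
  set N := s.card with hN
  set c : ℕ := N - (p+1) + 1 with hcdef
  have hc0 : 0 < c := by omega
  have hc : (0:ℝ) < (c:ℝ) := by exact_mod_cast hc0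
  have hαpos : 0 < α := by
    -- B is nonempty and its elements are positive and < α
    have h2 : 0 < B.card := by omega
    obtain ⟨b₀, hb₀⟩ := Finset.card_pos.1 h2
    exact lt_trans (hpos b₀ (hB hb₀)) (hBlt b₀ hb₀)
  rw [← mul_lt_mul_iff_right₀ hc]
  calc (c:ℝ) * ∑ S ∈ s.powersetCard (p+1), ∏ x ∈ S, x
      = ∑ S ∈ s.powersetCard (p+1), (c:ℝ) * ∏ x ∈ S, x := by rw [Finset.mul_sum]
    _ ≤ ∑ S ∈ s.powersetCard (p+1), (((B ∩ S).card : ℝ) * ∏ x ∈ S, x) := by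
        refine Finset.sum_le_sum fun S hS => ?_
        rw [Finset.mem_powersetCard] at hS
        obtain ⟨hSs, hSc⟩ := hS
        have h1 : (B ∩ S).card + (B ∪ S).card = B.card + S.card :=
          Finset.card_inter_add_card_union B S
        have h2 : (B ∪ S).card ≤ N := Finset.card_le_card (Finset.union_subset hB hSs)
        have h3 : c ≤ (B ∩ S).card := by omega
        have h4 : (c:ℝ) ≤ ((B ∩ S).card : ℝ) := by exact_mod_cast h3
        exact mul_le_mul_of_nonneg_right h4 (prodpos' hpos hSs).le
    _ = ∑ T ∈ s.powersetCard p, ∑ a ∈ B \ T, ∏ x ∈ insert a T, x := keyid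
    _ < ∑ T ∈ s.powersetCard p, ∑ a ∈ B \ T, (α * ∏ x ∈ T, x) := by
        rw [Finset.sum_sigma', Finset.sum_sigma']
        refine Finset.sum_lt_sum_of_nonempty ?_ ?_
        · -- construct (T₀, b₀): take S₀ of size p+1, b₀ ∈ B ∩ S₀
          obtain ⟨S₀, hS₀⟩ := Finset.powersetCard_nonempty_of_le hp
          have hSmem := hS₀
          rw [Finset.mem_powersetCard] at hSmem
          obtain ⟨hS₀s, hS₀c⟩ := hSmem
          have h1 : (B ∩ S₀).card + (B ∪ S₀).card = B.card + S₀.card :=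
            Finset.card_inter_add_card_union B S₀
          have h2 : (B ∪ S₀).card ≤ N := Finset.card_le_card (Finset.union_subset hB hS₀s)
          have h3 : 0 < (B ∩ S₀).card := by omega
          obtain ⟨b₀, hb₀⟩ := Finset.card_pos.1 h3
          rw [Finset.mem_inter] at hb₀
          refine ⟨⟨S₀.erase b₀, b₀⟩, Finset.mem_sigma.2 ⟨?_, ?_⟩⟩
          · rw [Finset.mem_powersetCard]
            refine ⟨(Finset.erase_subset _ _).trans hS₀s, ?_⟩
            rw [Finset.card_erase_of_mem hb₀.2, hS₀c]; rfl
          · rw [Finset.mem_sdiff]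
            exact ⟨hb₀.1, Finset.notMem_erase _ _⟩
        · rintro ⟨T, b⟩ hx
          rw [Finset.mem_sigma, Finset.mem_powersetCard] at hx
          obtain ⟨⟨hTs, hTc⟩, hbT⟩ := hx
          rw [Finset.mem_sdiff] at hbT
          rw [Finset.prod_insert hbT.2]
          exact mul_lt_mul_of_pos_right (hBlt b hbT.1) (prodpos' hpos hTs)
    _ = ∑ T ∈ s.powersetCard p, (((B \ T).card : ℝ)) * (α * ∏ x ∈ T, x) := by
        refine Finset.sum_congr rfl fun T hT => ?_
        rw [Finset.sum_const, nsmul_eq_mul]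
    _ ≤ ∑ T ∈ s.powersetCard p, (c:ℝ) * (α * ∏ x ∈ T, x) := by
        refine Finset.sum_le_sum fun T hT => ?_
        rw [Finset.mem_powersetCard] at hT
        obtain ⟨hTs, hTc⟩ := hT
        have h1 : (B \ T).card ≤ N - p := by
          have hsub : B \ T ⊆ s \ T := Finset.sdiff_subset_sdiff hB (le_refl T)
          have h2 := Finset.card_le_card hsub
          have h3 : (s \ T).card = N - T.card := Finset.card_sdiff_of_subset hTs
          omega
        have h4 : ((B \ T).card : ℝ) ≤ (c:ℝ) := by
          have : (B \ T).card ≤ c := by omega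
          exact_mod_cast this
        exact mul_le_mul_of_nonneg_right h4 (mul_pos hαpos (prodpos' hpos hTs)).le
    _ = (c:ℝ) * (α * ∑ T ∈ s.powersetCard p, ∏ x ∈ T, x) := by
        rw [Finset.mul_sum, Finset.mul_sum]

lemma no_two_pos (d n : ℕ) (P : Polynomial ℝ) (hdeg : P.natDegree = d)
    (hn1 : 1 ≤ n) (hnd : n ≤ d)
    (hsign : ∀ j ≤ d, (n ≤ j → 0 < P.coeff j) ∧ (j < n → P.coeff j < 0))
    (x y : ℝ) (hx : P.IsRoot x) (hy : P.IsRoot y) (hxpos : 0 < x) (hxy : x < y) :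
    False := by
  have hypos : 0 < y := lt_trans hxpos hxy
  have hex : ∑ j ∈ Finset.range (d+1), P.coeff j * x^j = 0 := by
    have := Polynomial.eval_eq_sum_range (p := P) x
    rw [hdeg] at this
    rw [← this]; exact hx
  have hey : ∑ j ∈ Finset.range (d+1), P.coeff j * y^j = 0 := by
    have := Polynomial.eval_eq_sum_range (p := P) y
    rw [hdeg] at this
    rw [← this]; exact hy
  have hE : ∑ j ∈ Finset.range (d+1), P.coeff j * (x^j * y^n - y^j * x^n) = 0 := by
    have : ∑ j ∈ Finset.range (d+1), P.coeff j * (x^j * y^n - y^j * x^n)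
        = (∑ j ∈ Finset.range (d+1), P.coeff j * x^j) * y^n
          - (∑ j ∈ Finset.range (d+1), P.coeff j * y^j) * x^n := by
      rw [Finset.sum_mul, Finset.sum_mul, ← Finset.sum_sub_distrib]
      refine Finset.sum_congr rfl fun j hj => by ring
    rw [this, hex, hey]; ring
  have hlt : ∑ j ∈ Finset.range (d+1), P.coeff j * (x^j * y^n - y^j * x^n) < 0 := by
    have h0 : (0:ℝ) = ∑ j ∈ Finset.range (d+1), (0:ℝ) := by simp
    rw [h0]
    refine Finset.sum_lt_sum ?_ ⟨0, Finset.mem_range.2 (by omega), ?_⟩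
    · intro j hj
      rw [Finset.mem_range] at hj
      have hjd : j ≤ d := by omega
      rcases lt_trichotomy j n with hjn | hjn | hjn
      · -- j < n : coeff < 0, factor > 0
        have hc := (hsign j hjd).2 hjn
        have hfac : 0 < x^j * y^n - y^j * x^n := by
          have h1 : y^n = y^j * y^(n-j) := by rw [← pow_add]; congr 1; omega
          have h2 : x^n = x^j * x^(n-j) := by rw [← pow_add]; congr 1; omega
          have h3 : x^(n-j) < y^(n-j) := by
            refine pow_lt_pow_left₀ hxy hxpos.le ?_
            omega
          rw [h1, h2]
          have : x^j * (y^j * y^(n-j)) - y^j * (x^j * x^(n-j))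
              = (x^j * y^j) * (y^(n-j) - x^(n-j)) := by ring
          rw [this]
          have h4 : (0:ℝ) < x^j * y^j := by positivity
          exact mul_pos h4 (by linarith)
        nlinarith
      · subst hjn; nlinarith
      · -- n < j : coeff > 0, factor < 0
        have hc := (hsign j hjd).1 (le_of_lt hjn)
        have hfac : x^j * y^n - y^j * x^n < 0 := by
          have h1 : x^j = x^n * x^(j-n) := by rw [← pow_add]; congr 1; omega
          have h2 : y^j = y^n * y^(j-n) := by rw [← pow_add]; congr 1; omega
          have h3 : x^(j-n) < y^(j-n) := by
            refine pow_lt_pow_left₀ hxy hxpos.le ?_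
            omega
          rw [h1, h2]
          have : x^n * x^(j-n) * y^n - y^n * y^(j-n) * x^n
              = (x^n * y^n) * (x^(j-n) - y^(j-n)) := by ring
          rw [this]
          have h4 : (0:ℝ) < x^n * y^n := by positivity
          nlinarith
        nlinarith
    · -- j = 0 strict
      have hc := (hsign 0 (by omega)).2 (by omega)
      have hfac : 0 < x^0 * y^n - y^0 * x^n := by
        simp only [pow_zero, one_mul, mul_one]
        have : x^n < y^n := pow_lt_pow_left₀ hxy hxpos.le (by omega)
        linarith
      nlinarith
  linarith


/-- For `d ≥ 3` and a monic degree-`d` hyperbolic polynomial with sign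
sequence `m` pluses followed by `n` minuses (`m + n = d + 1`), all root moduli distinct,
the number `n*` of negative roots of modulus strictly less than the modulus of the
positive root satisfies `max (0, 2n - d - 1) ≤ n* ≤ min (2n - 2, d - 1)`. -/
theorem stmt3 (d m n : ℕ) (P : Polynomial ℝ)
    (hd : 3 ≤ d)
    (hmonic : P.Monic) (hdeg : P.natDegree = d)
    (hhyp : Multiset.card P.roots = d)
    (hmn : m + n = d + 1) (hm1 : 1 ≤ m) (hn1 : 1 ≤ n)
    (hsign : ∀ j ≤ d, (n ≤ j → 0 < P.coeff j) ∧ (j < n → P.coeff j < 0))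
    (hnodup : P.roots.Nodup)
    (hmoduli : ∀ x ∈ P.roots, ∀ y ∈ P.roots, |x| = |y| → x = y)
    (α : ℝ) (hα : α ∈ P.roots) (hαpos : 0 < α) :
    2 * n - (d + 1) ≤ Multiset.card (P.roots.filter (fun x => x < 0 ∧ |x| < α)) ∧
      Multiset.card (P.roots.filter (fun x => x < 0 ∧ |x| < α)) ≤ min (2 * n - 2) (d - 1) := by
  have hP0 : P ≠ 0 := hmonic.ne_zero
  have hnd : n ≤ d := by omega
  have hc0 : P.coeff 0 < 0 := (hsign 0 (by omega)).2 (by omega)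
  set M := P.roots.erase α with hMdef
  have hM : P.roots = α ::ₘ M := (Multiset.cons_erase hα).symm
  have hMnodup : M.Nodup := hnodup.erase α
  have hαnotM : α ∉ M := fun h => hnodup.notMem_erase h
  have hcardM : Multiset.card M = d - 1 := by
    have := hhyp
    rw [hM, Multiset.card_cons] at this
    omega
  have hMneg : ∀ x ∈ M, x < 0 := by
    intro x hxM
    have hxroot : x ∈ P.roots := by rw [hM]; exact Multiset.mem_cons_of_mem hxM
    have hxne : x ≠ α := by rintro rfl; exact hαnotM hxM
    have hxIsRoot : P.IsRoot x := isRoot_of_mem_roots hxroot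
    have hαIsRoot : P.IsRoot α := isRoot_of_mem_roots hα
    by_contra hge
    push_neg at hge
    have hx0 : x ≠ 0 := by
      rintro rfl
      have h0 : P.coeff 0 = P.eval 0 := Polynomial.coeff_zero_eq_eval_zero P
      rw [Polynomial.IsRoot.def] at hxIsRoot
      rw [hxIsRoot] at h0
      linarith
    have hxpos : 0 < x := lt_of_le_of_ne hge (Ne.symm hx0)
    rcases lt_or_gt_of_ne hxne with h | h
    · exact no_two_pos d n P hdeg hn1 hnd hsign x α hxIsRoot hαIsRoot hxpos h
    · exact no_two_pos d n P hdeg hn1 hnd hsign α x hαIsRoot hxIsRoot hαpos h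
  have hBnodup : (M.map (fun x => -x)).Nodup := hMnodup.map neg_injective
  set Bf : Finset ℝ := ⟨M.map (fun x => -x), hBnodup⟩ with hBfdef
  set N := d - 1 with hNdef
  have hBfcard : Bf.card = N := by
    show Multiset.card (M.map (fun x => -x)) = N
    rw [Multiset.card_map, hcardM]
  have hBpos : ∀ b ∈ Bf, 0 < b := by
    intro b hb
    obtain ⟨x, hxM, rfl⟩ := Multiset.mem_map.1 hb
    linarith [hMneg x hxM]
  -- product decomposition
  set Q : Polynomial ℝ := ∏ b ∈ Bf, (X + C b) with hQdef
  have hPQ : P = (X - C α) * Q := by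
    have hprod : (P.roots.map fun a => X - C a).prod = P :=
      prod_multiset_X_sub_C_of_monic_of_roots_card_eq hmonic (by rw [hhyp, hdeg])
    rw [← hprod, hM, Multiset.map_cons, Multiset.prod_cons]
    congr 1
    rw [hQdef, Finset.prod_eq_multiset_prod]
    show (M.map fun a => X - C a).prod = ((M.map (fun x => -x)).map (fun b => X + C b)).prod
    rw [Multiset.map_map]
    congr 1
    apply Multiset.map_congr rfl
    intro x hx
    show X - C x = X + C (-x)
    rw [Polynomial.C_neg, sub_eq_add_neg]
  set e : ℕ → ℝ := fun k => ∑ T ∈ Bf.powersetCard k, ∏ x ∈ T, x with hedef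
  have hQcoeff : ∀ k, k ≤ N → Q.coeff k = e (N - k) := by
    intro k hk
    rw [hQdef]
    have h := Finset.prod_X_add_C_coeff Bf (fun b => b) (k := k) (by rw [hBfcard]; exact hk)
    rw [hBfcard] at h
    exact h
  have hPcoeff : ∀ j, 1 ≤ j → j ≤ N → P.coeff j = e (N - (j-1)) - α * e (N - j) := by
    intro j hj1 hjN
    obtain ⟨i, rfl⟩ : ∃ i, j = i + 1 := ⟨j - 1, by omega⟩
    rw [hPQ, sub_mul, Polynomial.coeff_sub, Polynomial.coeff_X_mul, Polynomial.coeff_C_mul]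
    rw [hQcoeff i (by omega), hQcoeff (i+1) (by omega)]
    norm_num
  -- counting
  set nstar := Multiset.card (P.roots.filter (fun x => x < 0 ∧ |x| < α)) with hnstardef
  have hfiltM : nstar = (Bf.filter (fun b => b < α)).card := by
    rw [hnstardef, hM]
    rw [Multiset.filter_cons_of_neg _ (by push_neg; intro h; linarith)]
    show Multiset.card (M.filter _) = Multiset.card ((M.map (fun x => -x)).filter (fun b => b < α))
    rw [Multiset.filter_map]
    rw [Multiset.card_map]
    congr 1
    apply Multiset.filter_congr
    intro x hx
    have hneg := hMneg x hx
    simp only [Function.comp]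
    constructor
    · rintro ⟨-, h2⟩; rwa [abs_of_neg hneg] at h2
    · intro h; exact ⟨hneg, by rwa [abs_of_neg hneg]⟩
  have hBne : ∀ b ∈ Bf, b ≠ α := by
    intro b hb hbα
    obtain ⟨x, hxM, rfl⟩ := Multiset.mem_map.1 hb
    have hxroot : x ∈ P.roots := by rw [hM]; exact Multiset.mem_cons_of_mem hxM
    have : |x| = |α| := by
      rw [abs_of_neg (hMneg x hxM), abs_of_pos hαpos, hbα]
    have := hmoduli x hxroot α hα this
    rw [this] at hxM
    exact hαnotM hxM
  have hsplit : (Bf.filter (fun b => b < α)).card + (Bf.filter (fun b => α < b)).card = N := by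
    have h1 := Finset.card_filter_add_card_filter_not (s := Bf) (p := fun b => b < α)
    have hfe : Bf.filter (fun b => ¬ b < α) = Bf.filter (fun b => α < b) := by
      apply Finset.filter_congr
      intro b hb
      simp only [not_lt, eq_iff_iff]
      exact ⟨fun h => lt_of_le_of_ne h (Ne.symm (hBne b hb)), le_of_lt⟩
    rw [hfe] at h1
    rw [h1, hBfcard]
  have hub1 : nstar ≤ N := by
    rw [hfiltM, ← hBfcard]
    exact Finset.card_filter_le _ _
  -- upper bound 2n-2
  have hub2 : nstar ≤ 2*n - 2 := by
    by_contra hcon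
    push_neg at hcon
    have h2n1 : 2*n - 1 ≤ nstar := by omega
    have hmd : 2 ≤ m := by omega
    have hcoeffn : 0 < P.coeff n := (hsign n hnd).1 le_rfl
    have hform := hPcoeff n (by omega) (by omega)
    have hidx1 : N - (n-1) = (m-2)+1 := by omega
    have hidx2 : N - n = m-2 := by omega
    rw [hidx1, hidx2] at hform
    have hkey := key_identity Bf (Bf.filter (fun b => b < α)) (Finset.filter_subset _ _) (m-2)
    have hB := lemB Bf (Bf.filter (fun b => b < α)) (Finset.filter_subset _ _) α hBpos
      (fun b hb => (Finset.mem_filter.1 hb).2) (m-2) (by omega)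
      (by rw [hBfcard, ← hfiltM]; omega) hkey
    have : e ((m-2)+1) < α * e (m-2) := hB
    rw [hform] at hcoeffn
    linarith
  -- lower bound
  have hlb : 2*n - (d+1) ≤ nstar := by
    rcases le_or_gt (2*n) (d+1) with h2n | h2n
    · omega
    · by_contra hlow
      push_neg at hlow
      have hn3 : 3 ≤ n := by omega
      have hsA : (Bf.filter (fun b => α < b)).card = N - nstar := by omega
      have hcoeffn : P.coeff (n-1) < 0 := (hsign (n-1) (by omega)).2 (by omega)
      have hform := hPcoeff (n-1) (by omega) (by omega)
      have hidx1 : N - (n-1-1) = (m-1)+1 := by omega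
      have hidx2 : N - (n-1) = m-1 := by omega
      rw [hidx1, hidx2] at hform
      have hkey := key_identity Bf (Bf.filter (fun b => α < b)) (Finset.filter_subset _ _) (m-1)
      have hA := lemA Bf (Bf.filter (fun b => α < b)) (Finset.filter_subset _ _) α hαpos hBpos
        (fun b hb => (Finset.mem_filter.1 hb).2) (m-1) (by omega)
        (by rw [hsA]; omega) hkey
      have : α * e (m-1) < e ((m-1)+1) := hA
      rw [hform] at hcoeffn
      linarith
  exact ⟨hlb, le_min hub2 hub1⟩
end

section
/- For every m ≥ 1 and n ≥ 1 with m+n = d+1 and n ≤ m, there exists a monic degree d hyperbolic polynomial with all coefficients nonzero whose sign sequence consists of m pluses followed by n minuses, all of whose root moduli are distinct, and which has exactly 2n−2 negative roots of modulus strictly less than the modulus of its unique positive root. -/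
open Polynomial


noncomputable def Rp (l : List ℝ) : Polynomial ℝ := (l.map fun a => X + C a).prod
lemma Rp_nil : Rp [] = 1 := by simp [Rp]
lemma Rp_cons (a : ℝ) (l : List ℝ) : Rp (a :: l) = (X + C a) * Rp l := by simp [Rp]
lemma Rp_monic (l : List ℝ) : (Rp l).Monic := by
  induction l with
  | nil => simp [Rp_nil]
  | cons a l ih => rw [Rp_cons]; exact (monic_X_add_C a).mul ih
lemma Rp_natDegree (l : List ℝ) : (Rp l).natDegree = l.length := by
  induction l with
  | nil => simp [Rp_nil]
  | cons a l ih =>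
    rw [Rp_cons, (monic_X_add_C a).natDegree_mul (Rp_monic l), natDegree_X_add_C, ih,
      List.length_cons]; omega
lemma Rp_coeff_zero (l : List ℝ) (j : ℕ) (h : l.length < j) : (Rp l).coeff j = 0 :=
  coeff_eq_zero_of_natDegree_lt (by rw [Rp_natDegree]; exact h)
lemma Rp_coeff_top (l : List ℝ) : (Rp l).coeff l.length = 1 := by
  have := (Rp_monic l).coeff_natDegree
  rwa [Rp_natDegree] at this
lemma coeff_succ (a : ℝ) (Q : Polynomial ℝ) (j : ℕ) :
    ((X + C a) * Q).coeff (j+1) = Q.coeff j + a * Q.coeff (j+1) := by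
  rw [add_mul, coeff_add, coeff_X_mul, coeff_C_mul]
lemma coeff_zero' (a : ℝ) (Q : Polynomial ℝ) :
    ((X + C a) * Q).coeff 0 = a * Q.coeff 0 := by
  rw [mul_coeff_zero]; simp

lemma Rp_inv (c : ℝ) (hc : 0 ≤ c) (l : List ℝ) (hl : ∀ b ∈ l, c < b ∧ b < 1) :
    (∀ j, 0 ≤ (Rp l).coeff j) ∧
    (∀ j ≤ l.length, 0 < (Rp l).coeff j) ∧
    (∀ j, j < l.length →
      ((j:ℝ)+1)*c*((Rp l).coeff (j+1)) < ((l.length:ℝ) - j) * (Rp l).coeff j ∧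
      ((l.length:ℝ) - j) * (Rp l).coeff j < ((j:ℝ)+1) * (Rp l).coeff (j+1)) := by
  induction l with
  | nil =>
    refine ⟨fun j => ?_, fun j hj => ?_, fun j hj => by simp at hj⟩
    · rw [Rp_nil]; rcases j with _|j <;> simp [coeff_one]
    · obtain rfl := Nat.le_zero.mp hj; simp [Rp_nil]
  | cons b l ih =>
    obtain ⟨hcb, hb1⟩ := hl b (by simp)
    have hb0 : 0 < b := lt_of_le_of_lt hc hcb
    obtain ⟨hnn, hpos, hinv⟩ := ih (fun x hx => hl x (by simp [hx]))
    set N := l.length with hN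
    set r : ℕ → ℝ := fun j => (Rp l).coeff j with hr
    have hzero : ∀ j, N < j → r j = 0 := fun j hj => Rp_coeff_zero l j hj
    have hlen : (b :: l).length = N + 1 := by simp [hN]
    have hcoeff0 : (Rp (b :: l)).coeff 0 = b * r 0 := by rw [Rp_cons, coeff_zero']
    have hcoeffS : ∀ j, (Rp (b :: l)).coeff (j+1) = r j + b * r (j+1) := fun j => by
      rw [Rp_cons, coeff_succ]
    refine ⟨?_, ?_, ?_⟩
    · intro j
      rcases j with _|j
      · rw [hcoeff0]; exact mul_nonneg hb0.le (hnn 0)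
      · rw [hcoeffS]; exact add_nonneg (hnn j) (mul_nonneg hb0.le (hnn (j+1)))
    · intro j hj
      rcases j with _|j
      · rw [hcoeff0]; exact mul_pos hb0 (hpos 0 (Nat.zero_le _))
      · rw [hcoeffS]
        rw [hlen] at hj
        have h1 : 0 < r j := hpos j (by omega)
        have h2 : 0 ≤ r (j+1) := hnn (j+1)
        nlinarith
    · intro j hj
      rw [hlen] at hj ⊢
      push_cast
      rcases j with _|i
      · -- j = 0
        rw [hcoeff0, hcoeffS]
        rcases Nat.eq_zero_or_pos N with h0 | h0
        · have e0 : r 0 = 1 := by have := Rp_coeff_top l; rwa [← hN, h0] at this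
          have e1 : r 1 = 0 := hzero 1 (by omega)
          rw [e0, e1, h0]; push_cast; constructor <;> nlinarith
        · obtain ⟨hlow, hhigh⟩ := hinv 0 h0
          push_cast at hlow hhigh
          have hr0 : 0 < r 0 := hpos 0 (Nat.zero_le _)
          have hr1 : 0 < r 1 := hpos 1 h0
          push_cast
          constructor
          · nlinarith
          · nlinarith
      · -- j = i+1, with i+1 < N+1 i.e. i < N
        have hiN : i < N := by omega
        rw [hcoeffS, hcoeffS]
        obtain ⟨hlo1, hhi1⟩ := hinv i hiN
        have hri : 0 < r i := hpos i (by omega)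
        have hri1 : 0 < r (i+1) := hpos (i+1) (by omega)
        rcases Nat.lt_or_ge (i+1) N with h2 | h2
        · obtain ⟨hlo2, hhi2⟩ := hinv (i+1) h2
          push_cast at hlo1 hhi1 hlo2 hhi2 ⊢
          constructor
          · nlinarith
          · nlinarith
        · -- i+1 = N
          have hiN' : i + 1 = N := by omega
          have e2 : r (i+1+1) = 0 := hzero (i+1+1) (by omega)
          have hNr : (N:ℝ) = (i:ℝ) + 1 := by exact_mod_cast hiN'.symm
          rw [hNr] at hlo1 hhi1
          push_cast
          rw [e2, hNr]
          constructor
          · nlinarith [mul_lt_mul_of_pos_right hcb hri1]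
          · nlinarith [mul_lt_mul_of_pos_right hb1 hri1]

noncomputable def Bl (ν : ℕ) : List ℝ :=
  (List.range (2*ν)).map fun i : ℕ => 1 - ((i:ℝ)+1)/(4*((ν:ℝ)+1)^2)

lemma Bl_length (ν : ℕ) : (Bl ν).length = 2*ν := by simp [Bl]

lemma Bl_mem (ν : ℕ) {b : ℝ} (hb : b ∈ Bl ν) :
    1 - 1/((ν:ℝ)+1) < b ∧ b < 1 := by
  simp only [Bl, List.mem_map, List.mem_range] at hb
  obtain ⟨i, hi, rfl⟩ := hb
  have hν : (0:ℝ) < (ν:ℝ)+1 := by positivity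
  have hir : (i:ℝ) + 1 < 4*((ν:ℝ)+1) := by
    have : (i:ℝ) < 2*ν := by exact_mod_cast hi
    nlinarith
  constructor
  · have h1 : ((i:ℝ)+1)/(4*((ν:ℝ)+1)^2) < 1/((ν:ℝ)+1) := by
      rw [div_lt_div_iff₀ (by positivity) hν]
      nlinarith
    linarith
  · have : (0:ℝ) < ((i:ℝ)+1)/(4*((ν:ℝ)+1)^2) := by positivity
    linarith

lemma Bl_nodup (ν : ℕ) : (Bl ν).Nodup := by
  refine List.Nodup.map ?_ List.nodup_range
  intro i j h
  have hD : (4*((ν:ℝ)+1)^2) ≠ 0 := by positivity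
  field_simp at h
  have h' : (i:ℝ) = j := by linarith
  exact_mod_cast h'


lemma coeff_succ_sub (Q : Polynomial ℝ) (j : ℕ) :
    ((X - C 1) * Q).coeff (j+1) = Q.coeff j - Q.coeff (j+1) := by
  rw [sub_mul, coeff_sub, coeff_X_mul, coeff_C_mul, one_mul]

lemma coeff_zero_sub (Q : Polynomial ℝ) :
    ((X - C 1) * Q).coeff 0 = -Q.coeff 0 := by
  rw [mul_coeff_zero]; simp

lemma Tsigns (ν : ℕ) :
    (∀ j, j < ν+1 → ((X - C 1) * Rp (Bl ν)).coeff j < 0) ∧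
    (∀ j, ν+1 ≤ j → j ≤ 2*ν+1 → 0 < ((X - C 1) * Rp (Bl ν)).coeff j) := by
  set c : ℝ := 1 - 1/((ν:ℝ)+1) with hcdef
  have hν : (0:ℝ) < (ν:ℝ)+1 := by positivity
  have hc : 0 ≤ c := by
    rw [hcdef, sub_nonneg]
    rw [div_le_one hν]; linarith
  obtain ⟨hnn, hpos, hinv⟩ := Rp_inv c hc (Bl ν) (fun b hb => Bl_mem ν hb)
  rw [Bl_length] at hpos hinv
  set r : ℕ → ℝ := fun j => (Rp (Bl ν)).coeff j with hr
  have hzero : ∀ j, 2*ν < j → r j = 0 := fun j hj =>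
    Rp_coeff_zero _ j (by rw [Bl_length]; exact hj)
  have htop : r (2*ν) = 1 := by
    have := Rp_coeff_top (Bl ν); rwa [Bl_length] at this
  constructor
  · intro j hj
    rcases j with _|i
    · rw [coeff_zero_sub]
      have := hpos 0 (Nat.zero_le _)
      simpa using neg_neg_of_pos this
    · -- i+1 ≤ ν, so ν ≥ 1, i < ν
      rw [coeff_succ_sub]
      have hiν : i + 1 ≤ ν := by omega
      have hi2ν : i < 2*ν := by omega
      obtain ⟨hlo, hhi⟩ := hinv i hi2ν
      have hri : 0 < r i := hpos i (by omega)
      have hri1 : 0 < r (i+1) := hpos (i+1) (by omega)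
      have hcast : ((i:ℝ)+1) ≤ 2*(ν:ℝ) - i := by
        have : (i:ℝ) + 1 ≤ (ν:ℝ) := by exact_mod_cast hiν
        linarith
      have h2 : ((i:ℝ)+1) * r i ≤ (2*(ν:ℝ) - i) * r i :=
        mul_le_mul_of_nonneg_right hcast hri.le
      push_cast at hhi
      nlinarith
  · intro j hj1 hj2
    rcases j with _|i
    · omega
    · rw [coeff_succ_sub]
      rcases Nat.lt_or_ge i (2*ν) with hi2ν | hi2ν
      · have hiν : ν ≤ i := by omega
        obtain ⟨hlo, hhi⟩ := hinv i hi2ν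
        have hri : 0 < r i := hpos i (by omega)
        have hri1 : 0 < r (i+1) := hpos (i+1) (by omega)
        have hcast : 2*(ν:ℝ) - i ≤ ((i:ℝ)+1) * c := by
          have hiν' : (ν:ℝ) ≤ i := by exact_mod_cast hiν
          have hce : c * ((ν:ℝ)+1) = ν := by
            rw [hcdef]; field_simp; ring
          nlinarith
        have hone : (1:ℝ) ≤ 2*(ν:ℝ) - i := by
          have : (i:ℝ) < 2*(ν:ℝ) := by exact_mod_cast hi2ν
          have : (i:ℝ) + 1 ≤ 2*(ν:ℝ) := by
            have h' : (i+1 : ℕ) ≤ 2*ν := by omega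
            exact_mod_cast h'
          linarith
        have h2 : (2*(ν:ℝ) - i) * r (i+1) ≤ ((i:ℝ)+1) * c * r (i+1) := by
          nlinarith
        push_cast at hlo
        nlinarith
      · -- i = 2ν (since i+1 ≤ 2ν+1)
        have : i = 2*ν := by omega
        subst this
        have h1 := htop
        have h2 := hzero (2*ν+1) (by omega)
        simp only [hr] at h1 h2
        rw [h1, h2]
        norm_num

lemma Rp_perm {l l' : List ℝ} (h : l.Perm l') : Rp l = Rp l' :=
  (h.map _).prod_eq

lemma P_monic (l : List ℝ) : ((X - C 1) * Rp l).Monic :=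
  (monic_X_sub_C 1).mul (Rp_monic l)

lemma P_natDegree (l : List ℝ) : ((X - C 1) * Rp l).natDegree = l.length + 1 := by
  rw [(monic_X_sub_C 1).natDegree_mul (Rp_monic l), natDegree_X_sub_C, Rp_natDegree]
  omega

lemma stageB (ν : ℕ) (k : ℕ) : ∃ E : List ℝ, E.length = k ∧ E.Nodup ∧ (∀ a ∈ E, 1 < a) ∧
    (∀ j, j < ν+1 → ((X - C 1) * Rp (Bl ν ++ E)).coeff j < 0) ∧
    (∀ j, ν+1 ≤ j → j ≤ 2*ν+1+k → 0 < ((X - C 1) * Rp (Bl ν ++ E)).coeff j) := by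
  induction k with
  | zero =>
    refine ⟨[], rfl, List.nodup_nil, by simp, ?_, ?_⟩ <;>
      · rw [List.append_nil]
        first
          | exact fun j hj => (Tsigns ν).1 j hj
          | exact fun j hj1 hj2 => (Tsigns ν).2 j hj1 (by omega)
  | succ k ih =>
    obtain ⟨E, hElen, hEnodup, hEgt, hneg, hpos⟩ := ih
    set L := Bl ν ++ E with hL
    set P := (X - C 1) * Rp L with hP
    have hLlen : L.length = 2*ν + k := by
      rw [hL, List.length_append, Bl_length, hElen]
    have hPdeg : P.natDegree = 2*ν + k + 1 := by rw [hP, P_natDegree, hLlen]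
    have hq : 0 < P.coeff (ν+1) := hpos (ν+1) le_rfl (by omega)
    have hp : P.coeff ν < 0 := hneg ν (by omega)
    set p := P.coeff ν
    set q := P.coeff (ν+1)
    set S : ℝ := (L.map fun a => |a|).sum with hS
    have hS0 : 0 ≤ S := List.sum_nonneg (by
      intro x hx
      obtain ⟨a, _, rfl⟩ := List.mem_map.mp hx
      exact abs_nonneg a)
    set Nn : ℝ := max ((|p|+1)/q) 1 + S + 1 with hNn
    have hN1 : 1 < Nn := by
      have := le_max_right ((|p|+1)/q) 1
      rw [hNn]; linarith
    have hN0 : 0 < Nn := by linarith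
    have hNa : ∀ a ∈ L, a < Nn := by
      intro a ha
      have h1 : |a| ∈ L.map fun a => |a| := List.mem_map.mpr ⟨a, ha, rfl⟩
      have h2 : |a| ≤ S := List.single_le_sum (fun x hx => by
        obtain ⟨b, _, rfl⟩ := List.mem_map.mp hx; exact abs_nonneg b) _ h1
      have := le_max_right ((|p|+1)/q) 1
      have := le_abs_self a
      rw [hNn]; linarith
    have hNq : 0 < p + Nn * q := by
      have h1 : (|p|+1)/q < Nn := by
        have := le_max_left ((|p|+1)/q) 1
        rw [hNn]; linarith
      have h2 : |p| + 1 < Nn * q := by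
        rw [div_lt_iff₀ hq] at h1
        linarith
      have := neg_abs_le p
      linarith
    have hperm : Rp (Bl ν ++ Nn :: E) = (X + C Nn) * Rp L := by
      rw [Rp_perm List.perm_middle, Rp_cons]
    have hPP : (X - C 1) * Rp (Bl ν ++ Nn :: E) = (X + C Nn) * P := by
      rw [hperm, hP]; ring
    refine ⟨Nn :: E, by simp [hElen], ?_, ?_, ?_, ?_⟩
    · exact List.nodup_cons.mpr ⟨fun h => absurd (hNa Nn (by simp [hL, h])) (lt_irrefl _),
        hEnodup⟩
    · intro a ha
      rcases List.mem_cons.mp ha with rfl | ha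
      · exact hN1
      · exact hEgt a ha
    · rw [hPP]
      intro j hj
      rcases j with _|i
      · rw [mul_coeff_zero]
        simp only [coeff_add, coeff_X_zero, coeff_C_zero, zero_add]
        exact mul_neg_of_pos_of_neg hN0 (hneg 0 (by omega))
      · rw [add_mul, coeff_add, coeff_X_mul, coeff_C_mul]
        have h1 := hneg i (by omega)
        have h2 := hneg (i+1) (by omega)
        nlinarith
    · rw [hPP]
      intro j hj1 hj2
      rcases j with _|i
      · omega
      · rw [add_mul, coeff_add, coeff_X_mul, coeff_C_mul]
        rcases Nat.eq_or_lt_of_le hj1 with heq | hlt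
        · have : i = ν := by omega
          subst this
          exact hNq
        · have hi1 : ν + 1 ≤ i := by omega
          have h1 : 0 < P.coeff i := hpos i hi1 (by omega)
          have h2 : 0 ≤ P.coeff (i+1) := by
            rcases Nat.lt_or_ge (2*ν+1+k) (i+1) with h | h
            · rw [coeff_eq_zero_of_natDegree_lt (by omega)]
            · exact (hpos (i+1) (by omega) h).le
          nlinarith

lemma Bl_pos (ν : ℕ) {b : ℝ} (hb : b ∈ Bl ν) : 0 < b := by
  have h := (Bl_mem ν hb).1
  have hν : (0:ℝ) < (ν:ℝ)+1 := by positivity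
  have : 1/((ν:ℝ)+1) ≤ 1 := by
    rw [div_le_one hν]; linarith
  linarith

/-- For every `m, n ≥ 1` with `m + n = d + 1` and `n ≤ m`, there exists a
monic degree-`d` hyperbolic polynomial with all coefficients nonzero, sign sequence
`m` pluses followed by `n` minuses, all root moduli pairwise distinct, having exactly
`2n - 2` negative roots of modulus strictly less than the modulus of its unique
positive root. -/
theorem stmt4 (d m n : ℕ) (hm1 : 1 ≤ m) (hn1 : 1 ≤ n) (hmn : m + n = d + 1)
    (hnm : n ≤ m) :
    ∃ P : Polynomial ℝ, P.Monic ∧ P.natDegree = d ∧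
      Multiset.card P.roots = d ∧
      (∀ j ≤ d, (n ≤ j → 0 < P.coeff j) ∧ (j < n → P.coeff j < 0)) ∧
      P.roots.Nodup ∧
      (∀ x ∈ P.roots, ∀ y ∈ P.roots, |x| = |y| → x = y) ∧
      ∃ α ∈ P.roots, 0 < α ∧
        Multiset.card (P.roots.filter (fun x => x < 0 ∧ |x| < α)) = 2 * n - 2 := by
  obtain ⟨ν, rfl⟩ : ∃ ν, n = ν + 1 := ⟨n - 1, by omega⟩
  obtain ⟨k, rfl⟩ : ∃ k, m = ν + 1 + k := ⟨m - (ν+1), by omega⟩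
  have hd : d = 2*ν + k + 1 := by omega
  subst hd
  obtain ⟨E, hElen, hEnodup, hEgt, hneg, hpos⟩ := stageB ν k
  set L := Bl ν ++ E with hLdef
  have hLlen : L.length = 2*ν + k := by
    rw [hLdef, List.length_append, Bl_length, hElen]
  have hLpos : ∀ a ∈ L, 0 < a := by
    intro a ha
    rcases List.mem_append.mp ha with h | h
    · exact Bl_pos ν h
    · linarith [hEgt a h]
  have hLne1 : ∀ a ∈ L, a ≠ 1 := by
    intro a ha
    rcases List.mem_append.mp ha with h | h
    · exact ne_of_lt (Bl_mem ν h).2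
    · exact ne_of_gt (hEgt a h)
  set P := (X - C 1) * Rp L with hP
  set M : Multiset ℝ := 1 ::ₘ ((L.map fun a => -a : List ℝ) : Multiset ℝ) with hM
  have hPM : P = (M.map fun r => X - C r).prod := by
    rw [hM, Multiset.map_cons, Multiset.prod_cons, Multiset.map_coe, Multiset.prod_coe,
      List.map_map, hP, Rp]
    have he : List.map ((fun r => X - C r) ∘ fun a : ℝ => -a) L
        = List.map (fun a : ℝ => X + C a) L :=
      List.map_congr_left fun a _ => by simp [Function.comp, map_neg, sub_neg_eq_add]
    rw [he]
  have hroots : P.roots = M := by rw [hPM, roots_multiset_prod_X_sub_C]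
  have hmemM : ∀ z ∈ M, z = 1 ∨ ∃ a ∈ L, z = -a := by
    intro z hz
    rcases Multiset.mem_cons.mp hz with rfl | hz
    · exact Or.inl rfl
    · right
      obtain ⟨a, ha, rfl⟩ := List.mem_map.mp (Multiset.mem_coe.mp hz)
      exact ⟨a, ha, rfl⟩
  refine ⟨P, P_monic L, ?_, ?_, ?_, ?_, ?_, 1, ?_, one_pos, ?_⟩
  · rw [hP, P_natDegree, hLlen]
  · rw [hroots, hM]
    simp [hLlen]
  · intro j hj
    constructor
    · intro hj2
      exact hpos j hj2 (by omega)
    · intro hj2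
      exact hneg j hj2
  · rw [hroots, hM]
    refine Multiset.nodup_cons.mpr ⟨?_, ?_⟩
    · intro h
      obtain ⟨a, ha, h2⟩ := List.mem_map.mp (Multiset.mem_coe.mp h)
      have := hLpos a ha
      linarith [h2]
    · rw [Multiset.coe_nodup]
      refine List.Nodup.map neg_injective ?_
      refine List.Nodup.append (Bl_nodup ν) hEnodup ?_
      intro a haB haE
      exact absurd (hEgt a haE) (not_lt.mpr (Bl_mem ν haB).2.le)
  · rw [hroots]
    intro x hx y hy hxy
    rcases hmemM x hx with rfl | ⟨a, ha, rfl⟩ <;>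
      rcases hmemM y hy with rfl | ⟨b, hb, rfl⟩
    · rfl
    · exfalso
      rw [abs_one, abs_neg, abs_of_pos (hLpos b hb)] at hxy
      exact hLne1 b hb hxy.symm
    · exfalso
      rw [abs_one, abs_neg, abs_of_pos (hLpos a ha)] at hxy
      exact hLne1 a ha hxy
    · rw [abs_neg, abs_neg, abs_of_pos (hLpos a ha), abs_of_pos (hLpos b hb)] at hxy
      rw [hxy]
  · rw [hroots, hM]
    exact Multiset.mem_cons_self (1:ℝ) _
  · rw [hroots, hM]
    rw [Multiset.filter_cons_of_neg _ (by norm_num)]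
    rw [← Multiset.countP_eq_card_filter]
    have : ((L.map fun a => -a : List ℝ) : Multiset ℝ) =
        Multiset.map (fun a => -a) (L : Multiset ℝ) := by
      rw [Multiset.map_coe]
    rw [this, Multiset.countP_map]
    have hsplit : (L : Multiset ℝ) = (Bl ν : Multiset ℝ) + (E : Multiset ℝ) := by
      rw [hLdef]; exact (Multiset.coe_add _ _).symm ▸ rfl
    rw [hsplit, Multiset.filter_add, Multiset.card_add]
    have h1 : Multiset.filter (fun a => -a < 0 ∧ |-a| < 1) (Bl ν : Multiset ℝ) =
        (Bl ν : Multiset ℝ) := by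
      rw [Multiset.filter_eq_self]
      intro a ha
      have haB := Multiset.mem_coe.mp ha
      have h0 := Bl_pos ν haB
      have h1 := (Bl_mem ν haB).2
      constructor
      · linarith
      · rw [abs_neg, abs_of_pos h0]; exact h1
    have h2 : Multiset.filter (fun a => -a < 0 ∧ |-a| < 1) (E : Multiset ℝ) = 0 := by
      rw [Multiset.filter_eq_nil]
      intro a ha h
      have := hEgt a (Multiset.mem_coe.mp ha)
      rw [abs_neg, abs_of_pos (by linarith)] at h
      linarith [h.2]
    rw [h1, h2]
    simp [Bl_length]
    omega
end

section
/- Let d ≥ 4 and let P be a monic degree d hyperbolic polynomial with all coefficients nonzero realizing the sign pattern Σ_{1,d−1,1}: the leading coefficient is +, the next d−1 coefficients are negative, and the constant coefficient is positive. Then, denoting by β ≤ α the moduli of the two positive roots and by γ_1 ≤ ... ≤ γ_{d−2} the moduli of the negative roots, one has β < γ_j < α for all j = 1, …, d−2. -/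
open Polynomial Filter

/-- AM-HM: (card s)^2 ≤ s.sum * Σ 1/x. -/
lemma amhm (s : Multiset ℝ) (hs : ∀ a ∈ s, 0 < a) :
    (Multiset.card s : ℝ)^2 ≤ s.sum * (s.map (·⁻¹)).sum := by
  induction s using Multiset.induction with
  | empty => simp
  | cons a s ih =>
    have ha : 0 < a := hs a (Multiset.mem_cons_self a s)
    have hs' : ∀ b ∈ s, 0 < b := fun b hb => hs b (Multiset.mem_cons_of_mem hb)
    have hS : 0 ≤ s.sum := Multiset.sum_nonneg (fun b hb => (hs' b hb).le)
    have hT : 0 ≤ (s.map (·⁻¹)).sum := by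
      apply Multiset.sum_nonneg
      intro b hb
      obtain ⟨c, hc, rfl⟩ := Multiset.mem_map.1 hb
      exact (inv_nonneg.2 (hs' c hc).le)
    have ih' := ih hs'
    set n := (Multiset.card s : ℝ)
    have hn : 0 ≤ n := Nat.cast_nonneg _
    simp only [Multiset.card_cons, Multiset.sum_cons, Multiset.map_cons]
    push_cast
    set S := s.sum
    set T := (s.map (·⁻¹)).sum
    -- key: a*T + S/a ≥ 2n
    have huv : (a * T) * (S * a⁻¹) = S * T := by
      field_simp
    have key : 2 * n ≤ a * T + S * a⁻¹ := by
      by_contra hk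
      push_neg at hk
      have h1 : 0 ≤ a * T := mul_nonneg ha.le hT
      have h2 : 0 ≤ S * a⁻¹ := mul_nonneg hS (inv_nonneg.2 ha.le)
      nlinarith [sq_nonneg (a * T - S * a⁻¹), huv, ih']
    have expand : (a + S) * (a⁻¹ + T) = 1 + (a * T + S * a⁻¹) + S * T := by
      field_simp
      ring
    rw [expand]
    nlinarith [ih']

/-- Sign of products of negative reals. -/
lemma prod_neg_multiset (s : Multiset ℝ) (hs : ∀ a ∈ s, a < 0) :
    (Odd (Multiset.card s) → s.prod < 0) ∧ (Even (Multiset.card s) → 0 < s.prod) := by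
  induction s using Multiset.induction with
  | empty => simp [Nat.even_iff]
  | cons a s ih =>
    have ha := hs a (Multiset.mem_cons_self a s)
    obtain ⟨iho, ihe⟩ := ih (fun b hb => hs b (Multiset.mem_cons_of_mem hb))
    constructor
    · intro h
      rw [Multiset.card_cons, Nat.odd_add_one] at h
      have := ihe (Nat.not_odd_iff_even.1 h)
      rw [Multiset.prod_cons]
      exact mul_neg_of_neg_of_pos ha this
    · intro h
      rw [Multiset.card_cons, Nat.even_add_one] at h
      have := iho (Nat.not_even_iff_odd.1 h)
      rw [Multiset.prod_cons]
      exact mul_pos_of_neg_of_neg ha this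

/-- coeff 1 of ∏ (X - r). -/
lemma coeff_one_prod (s : Multiset ℝ) (hs : ∀ r ∈ s, r ≠ 0) :
    ((s.map (fun r => X - C r)).prod).coeff 1 =
      ((s.map (fun r => -r)).prod) * (s.map (fun r => -r⁻¹)).sum := by
  induction s using Multiset.induction with
  | empty => simp [Polynomial.coeff_one]
  | cons a s ih =>
    have ha := hs a (Multiset.mem_cons_self a s)
    have ih' := ih (fun b hb => hs b (Multiset.mem_cons_of_mem hb))
    simp only [Multiset.map_cons, Multiset.prod_cons, Multiset.sum_cons]
    have hc0 : ((s.map (fun r => X - C r)).prod).coeff 0 = (s.map (fun r => -r)).prod := by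
      rw [Polynomial.coeff_zero_eq_eval_zero, Polynomial.eval_multiset_prod, Multiset.map_map]
      congr 1
      apply Multiset.map_congr rfl
      intro r _
      simp
    have expand : ((X - C a) * (s.map (fun r => X - C r)).prod).coeff 1
        = ((s.map (fun r => X - C r)).prod).coeff 0
          - a * ((s.map (fun r => X - C r)).prod).coeff 1 := by
      rw [sub_mul, Polynomial.coeff_sub]
      rw [show (1:ℕ) = 0 + 1 from rfl, Polynomial.coeff_X_mul]
      simp [Polynomial.coeff_C_mul]
    rw [expand, hc0, ih']
    field_simp
    ring

/-- three ordered elements from a finset of card ≥ 3 -/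
lemma finset_triple (F : Finset ℝ) (h : 3 ≤ F.card) :
    ∃ x ∈ F, ∃ y ∈ F, ∃ z ∈ F, x < y ∧ y < z := by
  have hne : F.Nonempty := Finset.card_pos.1 (by omega)
  set x := F.min' hne
  set z := F.max' hne
  have hxz : x < z := F.min'_lt_max'_of_card (by omega)
  have hzx : z ∈ F.erase x := Finset.mem_erase.2 ⟨ne_of_gt hxz, F.max'_mem hne⟩
  have hcard : 1 ≤ ((F.erase x).erase z).card := by
    rw [Finset.card_erase_of_mem hzx, Finset.card_erase_of_mem (F.min'_mem hne)]
    omega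
  obtain ⟨y, hy⟩ := Finset.card_pos.1 (by omega : 0 < ((F.erase x).erase z).card)
  have hyz : y ≠ z := (Finset.mem_erase.1 hy).1
  have hy' := (Finset.mem_erase.1 hy).2
  have hyx : y ≠ x := (Finset.mem_erase.1 hy').1
  have hyF : y ∈ F := (Finset.mem_erase.1 hy').2
  refine ⟨x, F.min'_mem hne, y, hyF, z, F.max'_mem hne, ?_, ?_⟩
  · exact lt_of_le_of_ne (F.min'_le y hyF) (Ne.symm hyx)
  · exact lt_of_le_of_ne (F.le_max' y hyF) hyz


lemma even_case_eval (d : ℕ) (P : Polynomial ℝ) (hd : 4 ≤ d) (hdeg : P.natDegree = d)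
    (hsignneg : ∀ j, 1 ≤ j → j ≤ d - 1 → P.coeff j < 0)
    (hdeven : Even d) (γ : ℝ) (hγ : 0 < γ) (hroot : P.eval (-γ) = 0) :
    P.eval γ < 0 := by
  have e1 : P.eval γ = ∑ i ∈ Finset.range (d+1), P.coeff i * γ^i := by
    rw [Polynomial.eval_eq_sum_range, hdeg]
  have e2 : (0:ℝ) = ∑ i ∈ Finset.range (d+1), P.coeff i * (-γ)^i := by
    rw [← hroot, Polynomial.eval_eq_sum_range, hdeg]
  have e3 : P.eval γ = ∑ i ∈ Finset.range (d+1), P.coeff i * (γ^i - (-γ)^i) := by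
    have hsplit : ∑ i ∈ Finset.range (d+1), P.coeff i * (γ^i - (-γ)^i)
        = (∑ i ∈ Finset.range (d+1), P.coeff i * γ^i)
          - ∑ i ∈ Finset.range (d+1), P.coeff i * (-γ)^i := by
      rw [← Finset.sum_sub_distrib]
      congr 1
      funext i
      ring
    rw [hsplit, ← e1, ← e2, sub_zero]
  rw [e3]
  have hz : (0:ℝ) = ∑ i ∈ Finset.range (d+1), (0:ℝ) := by simp
  rw [hz]
  apply Finset.sum_lt_sum
  · intro i hmem
    rcases Nat.even_or_odd i with he | ho
    · rw [he.neg_pow]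
      simp
    · rw [ho.neg_pow]
      have hil : 1 ≤ i := by
        obtain ⟨k, hk⟩ := ho
        omega
      have hid : i ≠ d := by
        rintro rfl
        exact (Nat.not_odd_iff_even.2 hdeven) ho
      have hiu : i ≤ d - 1 := by
        have := Finset.mem_range.1 hmem
        omega
      have hc := hsignneg i hil hiu
      have h2 : γ ^ i - -γ ^ i = 2 * γ ^ i := by ring
      rw [h2]
      exact le_of_lt (mul_neg_of_neg_of_pos hc (by positivity))
  · refine ⟨1, Finset.mem_range.2 (by omega), ?_⟩
    rw [(Nat.odd_iff.2 rfl : Odd 1).neg_pow]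
    have hc := hsignneg 1 le_rfl (by omega)
    have h2 : γ ^ 1 - -γ ^ 1 = 2 * γ := by ring
    rw [h2]
    exact mul_neg_of_neg_of_pos hc (by positivity)


lemma conclude_of_eval_neg (d : ℕ) (P : Polynomial ℝ) (hd : 4 ≤ d)
    (hmonic : P.Monic) (hdeg : P.natDegree = d) (hsign0 : 0 < P.coeff 0)
    (α β : ℝ) (hαpos : 0 < α)
    (hminmax : ∀ c ∈ P.roots, 0 < c → β ≤ c ∧ c ≤ α)
    (γ : ℝ) (hγ : 0 < γ) (heval : P.eval γ < 0) : β < γ ∧ γ < α := by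
  have hP0 : P ≠ 0 := hmonic.ne_zero
  have hcont : Continuous fun x => P.eval x := P.continuous
  have heval0 : 0 < P.eval 0 := by
    rwa [← Polynomial.coeff_zero_eq_eval_zero]
  constructor
  · -- root in (0, γ)
    have hsub := intermediate_value_Ioo' hγ.le hcont.continuousOn
      (a := 0) (b := γ)
    have h0mem : (0:ℝ) ∈ Set.Ioo (P.eval γ) (P.eval 0) := ⟨heval, heval0⟩
    obtain ⟨c, hc, hceval⟩ := hsub h0mem
    have hcroot : c ∈ P.roots := by
      rw [Polynomial.mem_roots']
      exact ⟨hP0, hceval⟩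
    have := (hminmax c hcroot hc.1).1
    linarith [hc.2]
  · -- root in (γ, b)
    have hdegpos : 0 < P.degree := by
      rw [← Polynomial.natDegree_pos_iff_degree_pos, hdeg]
      omega
    have ht := Polynomial.tendsto_atTop_of_leadingCoeff_nonneg P hdegpos
      (by rw [hmonic.leadingCoeff]; norm_num)
    obtain ⟨b, hb1, hb2⟩ := ((ht.eventually_gt_atTop 0).and (eventually_gt_atTop γ)).exists
    have hsub := intermediate_value_Ioo hb2.le hcont.continuousOn (a := γ) (b := b)
    have h0mem : (0:ℝ) ∈ Set.Ioo (P.eval γ) (P.eval b) := ⟨heval, hb1⟩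
    obtain ⟨c, hc, hceval⟩ := hsub h0mem
    have hcroot : c ∈ P.roots := by
      rw [Polynomial.mem_roots']
      exact ⟨hP0, hceval⟩
    have := (hminmax c hcroot (hγ.trans hc.1)).2
    linarith [hc.1]


lemma pos_card_le_three (d : ℕ) (P : Polynomial ℝ) (hd : 4 ≤ d)
    (hmonic : P.Monic) (hdeg : P.natDegree = d)
    (hsignneg : ∀ j, 1 ≤ j → j ≤ d - 1 → P.coeff j < 0) (hsign0 : 0 < P.coeff 0) :
    Multiset.card (P.roots.filter (fun r => 0 < r)) ≤ 3 := by
  classical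
  set a0 := P.coeff 0 with ha0
  set J := Finset.Icc 1 (d-1) with hJ
  set b : ℕ → ℝ := fun j => -(P.coeff j) with hb
  have hbpos : ∀ j ∈ J, 0 < b j := by
    intro j hj
    obtain ⟨h1, h2⟩ := Finset.mem_Icc.1 hj
    have := hsignneg j h1 h2
    simp [hb]
    linarith
  set m : ℝ → ℝ := fun t => ∑ j ∈ J, b j * t^j with hm
  set w : ℝ → ℝ := fun t => t^d + a0 with hw
  -- index split
  have hrange : Finset.range (d+1) = insert 0 (insert d J) := by
    ext i
    simp [hJ, Finset.mem_range, Finset.mem_insert, Finset.mem_Icc]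
    omega
  have h0notin : (0:ℕ) ∉ insert d J := by
    simp [hJ, Finset.mem_insert, Finset.mem_Icc]
    omega
  have hdnotin : d ∉ J := by
    simp [hJ, Finset.mem_Icc]
    omega
  have PEV : ∀ t : ℝ, P.eval t = w t - m t := by
    intro t
    rw [Polynomial.eval_eq_sum_range, hdeg, hrange, Finset.sum_insert h0notin,
      Finset.sum_insert hdnotin]
    have hc : P.coeff d = 1 := by
      rw [← hdeg]
      exact hmonic.coeff_natDegree
    rw [hc]
    simp only [hw, hm, hb, pow_zero, mul_one, one_mul]
    simp only [neg_mul]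
    rw [Finset.sum_neg_distrib]
    ring
  have hdR : (4:ℝ) ≤ (d:ℝ) := by exact_mod_cast hd
  -- derivatives
  set w' : ℝ → ℝ := fun t => (d:ℝ) * t^(d-1) with hw'
  set w'' : ℝ → ℝ := fun t => (d:ℝ) * ((d-1:ℕ):ℝ) * t^(d-2) with hw''
  set m' : ℝ → ℝ := fun t => ∑ j ∈ J, b j * (j:ℝ) * t^(j-1) with hm'
  set m'' : ℝ → ℝ := fun t => ∑ j ∈ J, b j * (j:ℝ) * ((j-1:ℕ):ℝ) * t^(j-2) with hm''
  have hw_deriv : ∀ t : ℝ, HasDerivAt w (w' t) t := by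
    intro t
    have := (hasDerivAt_pow d t).add_const a0
    convert this using 1
  have hw'_deriv : ∀ t : ℝ, HasDerivAt w' (w'' t) t := by
    intro t
    have : HasDerivAt (fun y : ℝ => (d:ℝ) * y^(d-1)) _ t := (hasDerivAt_pow (d-1) t).const_mul (d:ℝ)
    convert this using 1
    rw [hw'']
    have : d - 1 - 1 = d - 2 := by omega
    rw [← this]
    ring
  have hm_deriv : ∀ t : ℝ, HasDerivAt m (m' t) t := by
    intro t
    apply HasDerivAt.fun_sum
    intro j hj
    have : HasDerivAt (fun y : ℝ => b j * y^j) _ t := (hasDerivAt_pow j t).const_mul (b j)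
    refine this.congr_deriv ?_
    ring
  have hm'_deriv : ∀ t : ℝ, HasDerivAt m' (m'' t) t := by
    intro t
    apply HasDerivAt.fun_sum
    intro j hj
    have : HasDerivAt (fun y : ℝ => b j * (j:ℝ) * y^(j-1)) _ t := (hasDerivAt_pow (j-1) t).const_mul (b j * (j:ℝ))
    refine this.congr_deriv ?_
    have : j - 1 - 1 = j - 2 := by omega
    rw [← this]
    ring
  have hPd : ∀ t : ℝ, P.derivative.eval t = w' t - m' t := by
    intro t
    have h1 : HasDerivAt (fun s => P.eval s) (P.derivative.eval t) t := P.hasDerivAt t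
    have h2 : HasDerivAt (fun s => w s - m s) (w' t - m' t) t := (hw_deriv t).sub (hm_deriv t)
    have he : (fun s => P.eval s) = fun s => w s - m s := funext PEV
    rw [he] at h1
    exact h1.unique h2
  have hPdd : ∀ t : ℝ, P.derivative.derivative.eval t = w'' t - m'' t := by
    intro t
    have h1 : HasDerivAt (fun s => P.derivative.eval s) (P.derivative.derivative.eval t) t :=
      P.derivative.hasDerivAt t
    have h2 : HasDerivAt (fun s => w' s - m' s) (w'' t - m'' t) t :=
      (hw'_deriv t).sub (hm'_deriv t)
    have he : (fun s => P.derivative.eval s) = fun s => w' s - m' s := funext hPd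
    rw [he] at h1
    exact h1.unique h2
  -- A and B
  set A : ℝ → ℝ := fun t => ∑ j ∈ J, b j * ((d:ℝ) - (j:ℝ)) * t^(d+j-1) with hA
  set B : ℝ → ℝ := fun t => ∑ j ∈ J, b j * (j:ℝ) * a0 * t^(j-1) with hB
  set A' : ℝ → ℝ := fun t => ∑ j ∈ J, b j * ((d:ℝ) - (j:ℝ)) * ((d+j-1:ℕ):ℝ) * t^(d+j-2) with hA'
  set B' : ℝ → ℝ := fun t => ∑ j ∈ J, b j * (j:ℝ) * a0 * ((j-1:ℕ):ℝ) * t^(j-2) with hB'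
  have hA_deriv : ∀ t : ℝ, HasDerivAt A (A' t) t := by
    intro t
    apply HasDerivAt.fun_sum
    intro j hj
    have : HasDerivAt (fun y : ℝ => b j * ((d:ℝ) - (j:ℝ)) * y^(d+j-1)) _ t := (hasDerivAt_pow (d+j-1) t).const_mul (b j * ((d:ℝ) - (j:ℝ)))
    refine this.congr_deriv ?_
    have : d + j - 1 - 1 = d + j - 2 := by omega
    rw [← this]
    ring
  have hB_deriv : ∀ t : ℝ, HasDerivAt B (B' t) t := by
    intro t
    apply HasDerivAt.fun_sum
    intro j hj
    have : HasDerivAt (fun y : ℝ => b j * (j:ℝ) * a0 * y^(j-1)) _ t := (hasDerivAt_pow (j-1) t).const_mul (b j * (j:ℝ) * a0)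
    refine this.congr_deriv ?_
    have : j - 1 - 1 = j - 2 := by omega
    rw [← this]
    ring
  -- N identity
  have hN_eq : ∀ t : ℝ, A t - B t = w' t * m t - w t * m' t := by
    intro t
    rw [hA, hB, hw', hw, hm, hm']
    simp only []
    rw [Finset.mul_sum, Finset.mul_sum, ← Finset.sum_sub_distrib, ← Finset.sum_sub_distrib]
    apply Finset.sum_congr rfl
    intro j hj
    obtain ⟨hj1, hj2⟩ := Finset.mem_Icc.1 (hJ ▸ hj)
    have e1 : t^(d+j-1) = t^(d-1) * (t^(j-1) * t) := by
      rw [← pow_succ, ← pow_add]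
      congr 1
      omega
    have e2 : t^j = t^(j-1) * t := by
      rw [← pow_succ]
      congr 1
      omega
    have e3 : t^d = t^(d-1) * t := by
      rw [← pow_succ]
      congr 1
      omega
    rw [e1, e2, e3]
    ring
  have hN'_eq : ∀ t : ℝ, A' t - B' t = w'' t * m t - w t * m'' t := by
    intro t
    rw [hA', hB', hw'', hw, hm, hm'']
    simp only []
    rw [Finset.mul_sum, Finset.mul_sum, ← Finset.sum_sub_distrib, ← Finset.sum_sub_distrib]
    apply Finset.sum_congr rfl
    intro j hj
    obtain ⟨hj1, hj2⟩ := Finset.mem_Icc.1 (hJ ▸ hj)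
    have hcast1 : ((d+j-1:ℕ):ℝ) = (d:ℝ) + (j:ℝ) - 1 := by
      rw [Nat.cast_sub (by omega), Nat.cast_add, Nat.cast_one]
    have hcast2 : ((d-1:ℕ):ℝ) = (d:ℝ) - 1 := by
      rw [Nat.cast_sub (by omega), Nat.cast_one]
    rcases Nat.lt_or_ge j 2 with hj' | hj'
    · -- j = 1
      have hj1' : j = 1 := by omega
      subst hj1'
      simp only [Nat.sub_self, Nat.cast_zero, mul_zero, zero_mul, sub_zero, pow_one]
      have e2 : t^(d+1-2) = t^(d-2) * t := by
        rw [← pow_succ]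
        congr 1
        omega
      have e4 : d + 1 - 1 = d := by omega
      rw [e2, e4, hcast2]
      push_cast
      ring
    · have hcast3 : ((j-1:ℕ):ℝ) = (j:ℝ) - 1 := by
        rw [Nat.cast_sub (by omega), Nat.cast_one]
      have e1 : t^(d+j-2) = t^(d-2) * (t^(j-2) * (t * t)) := by
        rw [show t * t = t^2 by ring, ← pow_add, ← pow_add]
        congr 1
        omega
      have e2 : t^j = t^(j-2) * (t * t) := by
        rw [show t * t = t^2 by ring, ← pow_add]
        congr 1
        omega
      have e3 : t^d = t^(d-2) * (t * t) := by
        rw [show t * t = t^2 by ring, ← pow_add]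
        congr 1
        omega
      rw [e1, e2, e3, hcast1, hcast2, hcast3]
      push_cast
      ring
  have h1J : 1 ∈ J := by
    rw [hJ, Finset.mem_Icc]
    omega
  have hmpos : ∀ t : ℝ, 0 < t → 0 < m t := by
    intro t ht
    apply Finset.sum_pos'
    · intro j hj
      exact mul_nonneg (hbpos j hj).le (pow_nonneg ht.le j)
    · exact ⟨1, h1J, mul_pos (hbpos 1 h1J) (pow_pos ht 1)⟩
  have hcononneg : ∀ j ∈ J, 0 ≤ (d:ℝ) - (j:ℝ) := by
    intro j hj
    obtain ⟨hj1, hj2⟩ := Finset.mem_Icc.1 (hJ ▸ hj)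
    have : (j:ℝ) ≤ (d:ℝ) := by
      exact_mod_cast (by omega : j ≤ d)
    linarith
  have hApos : ∀ t : ℝ, 0 < t → 0 < A t := by
    intro t ht
    apply Finset.sum_pos'
    · intro j hj
      exact mul_nonneg (mul_nonneg (hbpos j hj).le (hcononneg j hj)) (pow_nonneg ht.le _)
    · refine ⟨1, h1J, ?_⟩
      apply mul_pos (mul_pos (hbpos 1 h1J) ?_) (pow_pos ht _)
      push_cast
      linarith
  -- Rolle
  have hRolle : ∀ ρ ρ' : ℝ, 0 < ρ → ρ < ρ' → P.eval ρ = 0 → P.eval ρ' = 0 →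
      ∃ ξ, ρ < ξ ∧ ξ < ρ' ∧ A ξ = B ξ := by
    intro ρ ρ' hρ hρρ' hev hev'
    set F : ℝ → ℝ := fun t => w t / m t with hF
    have hmcont : Continuous m := by
      apply continuous_finset_sum
      intro j _
      exact continuous_const.mul (continuous_pow j)
    have hwcont : Continuous w := (continuous_pow d).add continuous_const
    have hmne : ∀ t ∈ Set.Icc ρ ρ', m t ≠ 0 := fun t htI =>
      ne_of_gt (hmpos t (lt_of_lt_of_le hρ htI.1))
    have hFcont : ContinuousOn F (Set.Icc ρ ρ') :=
      hwcont.continuousOn.div hmcont.continuousOn hmne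
    have hFval : ∀ s : ℝ, 0 < s → P.eval s = 0 → F s = 1 := by
      intro s hs hevs
      have hwm : w s = m s := by
        have := PEV s
        rw [hevs] at this
        linarith
      rw [hF]
      simp only []
      rw [hwm, div_self (ne_of_gt (hmpos s hs))]
    have hFeq : F ρ = F ρ' := by
      rw [hFval ρ hρ hev, hFval ρ' (hρ.trans hρρ') hev']
    obtain ⟨ξ, hξI, hξd⟩ := exists_deriv_eq_zero hρρ' hFcont hFeq
    have hξpos : 0 < ξ := hρ.trans hξI.1
    have hmξ : m ξ ≠ 0 := ne_of_gt (hmpos ξ hξpos)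
    have hFd : HasDerivAt F ((w' ξ * m ξ - w ξ * m' ξ) / (m ξ)^2) ξ :=
      (hw_deriv ξ).div (hm_deriv ξ) hmξ
    rw [hFd.deriv] at hξd
    have hnum : w' ξ * m ξ - w ξ * m' ξ = 0 := by
      rcases div_eq_zero_iff.1 hξd with h | h
      · exact h
      · exact absurd h (pow_ne_zero 2 hmξ)
    have := hN_eq ξ
    rw [hnum] at this
    exact ⟨ξ, hξI.1, hξI.2, by linarith⟩
  -- no two distinct positive zeros of A - B
  have hNoTwo : ∀ s t : ℝ, 0 < s → s < t → A s = B s → A t = B t → False := by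
    intro s t hs hst hAs hAt
    have ht : 0 < t := hs.trans hst
    have hApt : 0 < A t := hApos t ht
    have key1 : A s * t^d ≤ A t * s^d := by
      rw [hA]
      simp only []
      rw [Finset.sum_mul, Finset.sum_mul]
      apply Finset.sum_le_sum
      intro j hj
      obtain ⟨hj1, hj2⟩ := Finset.mem_Icc.1 (hJ ▸ hj)
      have hco : 0 ≤ b j * ((d:ℝ) - (j:ℝ)) := mul_nonneg (hbpos j hj).le (hcononneg j hj)
      have e1 : s^(d+j-1) * t^d = (s*t)^d * s^(j-1) := by
        rw [show d+j-1 = d+(j-1) by omega, pow_add, mul_pow]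
        ring
      have e2 : t^(d+j-1) * s^d = (s*t)^d * t^(j-1) := by
        rw [show d+j-1 = d+(j-1) by omega, pow_add, mul_pow]
        ring
      have h1 : (s*t)^d * s^(j-1) ≤ (s*t)^d * t^(j-1) :=
        mul_le_mul_of_nonneg_left (pow_le_pow_left₀ hs.le hst.le _)
          (pow_nonneg (mul_nonneg hs.le ht.le) d)
      calc b j * ((d:ℝ) - (j:ℝ)) * s^(d+j-1) * t^d
          = (b j * ((d:ℝ) - (j:ℝ))) * ((s*t)^d * s^(j-1)) := by
            rw [← e1]
            ring
        _ ≤ (b j * ((d:ℝ) - (j:ℝ))) * ((s*t)^d * t^(j-1)) :=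
            mul_le_mul_of_nonneg_left h1 hco
        _ = b j * ((d:ℝ) - (j:ℝ)) * t^(d+j-1) * s^d := by
            rw [← e2]
            ring
    have key2 : A t * s^(d-2) ≤ A s * t^(d-2) := by
      rw [hAt, hAs, hB]
      simp only []
      rw [Finset.sum_mul, Finset.sum_mul]
      apply Finset.sum_le_sum
      intro j hj
      obtain ⟨hj1, hj2⟩ := Finset.mem_Icc.1 (hJ ▸ hj)
      have hco : 0 ≤ b j * (j:ℝ) * a0 :=
        mul_nonneg (mul_nonneg (hbpos j hj).le (Nat.cast_nonneg j)) hsign0.le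
      have e1 : t^(j-1) * s^(d-2) = (s*t)^(j-1) * s^(d-1-j) := by
        rw [show d-2 = (j-1)+(d-1-j) by omega, pow_add, mul_pow]
        ring
      have e2 : s^(j-1) * t^(d-2) = (s*t)^(j-1) * t^(d-1-j) := by
        rw [show d-2 = (j-1)+(d-1-j) by omega, pow_add, mul_pow]
        ring
      have h1 : (s*t)^(j-1) * s^(d-1-j) ≤ (s*t)^(j-1) * t^(d-1-j) :=
        mul_le_mul_of_nonneg_left (pow_le_pow_left₀ hs.le hst.le _)
          (pow_nonneg (mul_nonneg hs.le ht.le) _)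
      calc b j * (j:ℝ) * a0 * t^(j-1) * s^(d-2)
          = (b j * (j:ℝ) * a0) * ((s*t)^(j-1) * s^(d-1-j)) := by
            rw [← e1]
            ring
        _ ≤ (b j * (j:ℝ) * a0) * ((s*t)^(j-1) * t^(d-1-j)) :=
            mul_le_mul_of_nonneg_left h1 hco
        _ = b j * (j:ℝ) * a0 * s^(j-1) * t^(d-2) := by
            rw [← e2]
            ring
    have e5 : t^d = t^(d-2) * t^2 := by
      rw [← pow_add]
      congr 1
      omega
    have e6 : s^d = s^(d-2) * s^2 := by
      rw [← pow_add]
      congr 1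
      omega
    have hs2 : s^2 < t^2 := by nlinarith
    have hP2 : 0 < s^(d-2) := pow_pos hs _
    have m3 : A t * s^(d-2) * t^2 ≤ A s * t^(d-2) * t^2 :=
      mul_le_mul_of_nonneg_right key2 (sq_nonneg t)
    have m4 : A s * t^(d-2) * t^2 = A s * t^d := by
      rw [e5]
      ring
    have m6 : A t * s^d = A t * s^(d-2) * s^2 := by
      rw [e6]
      ring
    have m7 : A t * s^(d-2) * s^2 < A t * s^(d-2) * t^2 :=
      mul_lt_mul_of_pos_left hs2 (mul_pos hApt hP2)
    linarith
  -- no positive zero of A - B which is also zero of A' - B'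
  have hNoDouble : ∀ t : ℝ, 0 < t → A t = B t → A' t = B' t → False := by
    intro t ht hN hN'
    have d1 : (d:ℝ) * A t ≤ t * A' t := by
      rw [hA, hA']
      simp only []
      rw [Finset.mul_sum, Finset.mul_sum]
      apply Finset.sum_le_sum
      intro j hj
      obtain ⟨hj1, hj2⟩ := Finset.mem_Icc.1 (hJ ▸ hj)
      have hco : 0 ≤ b j * ((d:ℝ) - (j:ℝ)) := mul_nonneg (hbpos j hj).le (hcononneg j hj)
      have e1 : t * t^(d+j-2) = t^(d+j-1) := by
        rw [← pow_succ']
        congr 1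
        omega
      have hcst : (d:ℝ) ≤ ((d+j-1:ℕ):ℝ) := by
        exact_mod_cast (by omega : d ≤ d+j-1)
      calc (d:ℝ) * (b j * ((d:ℝ) - (j:ℝ)) * t^(d+j-1))
          = (d:ℝ) * ((b j * ((d:ℝ) - (j:ℝ))) * t^(d+j-1)) := by ring
        _ ≤ ((d+j-1:ℕ):ℝ) * ((b j * ((d:ℝ) - (j:ℝ))) * t^(d+j-1)) := by
            apply mul_le_mul_of_nonneg_right hcst
            exact mul_nonneg hco (pow_nonneg ht.le _)
        _ = t * (b j * ((d:ℝ) - (j:ℝ)) * ((d+j-1:ℕ):ℝ) * t^(d+j-2)) := by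
            rw [← e1]
            ring
    have d2 : t * B' t ≤ ((d:ℝ) - 2) * B t := by
      rw [hB, hB']
      simp only []
      rw [Finset.mul_sum, Finset.mul_sum]
      apply Finset.sum_le_sum
      intro j hj
      obtain ⟨hj1, hj2⟩ := Finset.mem_Icc.1 (hJ ▸ hj)
      have hco : 0 ≤ b j * (j:ℝ) * a0 :=
        mul_nonneg (mul_nonneg (hbpos j hj).le (Nat.cast_nonneg j)) hsign0.le
      rcases Nat.lt_or_ge j 2 with hj' | hj'
      · have hj1' : j = 1 := by omega
        subst hj1'
        simp only [Nat.sub_self, Nat.cast_zero, mul_zero, zero_mul]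
        have : (0:ℝ) ≤ ((d:ℝ) - 2) * (b 1 * (1:ℕ) * a0 * t^(1-1)) := by
          apply mul_nonneg (by linarith)
          exact mul_nonneg hco (pow_nonneg ht.le _)
        simpa using this
      · have e1 : t * t^(j-2) = t^(j-1) := by
          rw [← pow_succ']
          congr 1
          omega
        have hcst : ((j-1:ℕ):ℝ) ≤ (d:ℝ) - 2 := by
          have h1 : ((j-1:ℕ):ℝ) ≤ ((d-2:ℕ):ℝ) := by
            exact_mod_cast (by omega : j - 1 ≤ d - 2)
          have h2 : ((d-2:ℕ):ℝ) = (d:ℝ) - 2 := by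
            rw [Nat.cast_sub (by omega)]
            norm_num
          linarith [h2 ▸ h1]
        calc t * (b j * (j:ℝ) * a0 * ((j-1:ℕ):ℝ) * t^(j-2))
            = ((j-1:ℕ):ℝ) * ((b j * (j:ℝ) * a0) * t^(j-1)) := by
              rw [← e1]
              ring
          _ ≤ ((d:ℝ) - 2) * ((b j * (j:ℝ) * a0) * t^(j-1)) := by
              apply mul_le_mul_of_nonneg_right hcst
              exact mul_nonneg hco (pow_nonneg ht.le _)
          _ = ((d:ℝ) - 2) * (b j * (j:ℝ) * a0 * t^(j-1)) := by ring
    rw [hN] at d1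
    rw [hN'] at d1
    have := hApos t ht
    rw [hN] at this
    nlinarith
  -- from vanishing conditions to A/B equalities
  have hNzero : ∀ ρ : ℝ, P.eval ρ = 0 → P.derivative.eval ρ = 0 → A ρ = B ρ := by
    intro ρ h2 h3
    have hwm : w ρ = m ρ := by
      have := PEV ρ
      rw [h2] at this
      linarith
    have hwm' : w' ρ = m' ρ := by
      have := hPd ρ
      rw [h3] at this
      linarith
    have hh := hN_eq ρ
    rw [hwm, hwm'] at hh
    have h0 : m' ρ * m ρ - m ρ * m' ρ = 0 := by ring
    linarith
  have hNzero' : ∀ ρ : ℝ, P.eval ρ = 0 → P.derivative.derivative.eval ρ = 0 → A' ρ = B' ρ := by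
    intro ρ h2 h3
    have hwm : w ρ = m ρ := by
      have := PEV ρ
      rw [h2] at this
      linarith
    have hwm'' : w'' ρ = m'' ρ := by
      have := hPdd ρ
      rw [h3] at this
      linarith
    have hh := hN'_eq ρ
    rw [hwm, hwm''] at hh
    have h0 : m'' ρ * m ρ - m ρ * m'' ρ = 0 := by ring
    linarith
  -- multiplicity
  have hmult2 : ∀ ρ : ℝ, 2 ≤ P.roots.count ρ → P.derivative.eval ρ = 0 := by
    intro ρ hc
    rw [Polynomial.count_roots] at hc
    have hdvd : (X - C ρ)^2 ∣ P :=
      dvd_trans (pow_dvd_pow _ hc) (P.pow_rootMultiplicity_dvd ρ)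
    obtain ⟨q, hq⟩ := hdvd
    rw [hq]
    simp [Polynomial.derivative_mul, Polynomial.derivative_pow]
  have hmult3 : ∀ ρ : ℝ, 3 ≤ P.roots.count ρ → P.derivative.derivative.eval ρ = 0 := by
    intro ρ hc
    rw [Polynomial.count_roots] at hc
    have hdvd : (X - C ρ)^3 ∣ P :=
      dvd_trans (pow_dvd_pow _ hc) (P.pow_rootMultiplicity_dvd ρ)
    obtain ⟨q, hq⟩ := hdvd
    rw [hq]
    simp [Polynomial.derivative_mul, Polynomial.derivative_pow]
  -- final counting
  set Pos := P.roots.filter (fun r => 0 < r) with hPos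
  by_contra hcon
  push_neg at hcon
  set F : Finset ℝ := Pos.toFinset with hFdef
  have hsumc : ∑ r ∈ F, Pos.count r = Multiset.card Pos := Multiset.toFinset_sum_count_eq Pos
  have hmemF : ∀ r ∈ F, 0 < r ∧ P.eval r = 0 := by
    intro r hr
    have hrP := Multiset.mem_toFinset.1 hr
    refine ⟨Multiset.of_mem_filter hrP, ?_⟩
    have := Multiset.mem_of_mem_filter hrP
    exact (Polynomial.mem_roots'.1 this).2
  have hcnt : ∀ r ∈ F, Pos.count r = P.roots.count r := by
    intro r hr
    apply Multiset.count_filter_of_pos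
    exact (hmemF r hr).1
  rcases Nat.lt_or_ge F.card 3 with hFc | hFc
  · rcases Nat.lt_or_ge F.card 1 with h1 | h1
    · have hFe : F = ∅ := Finset.card_eq_zero.1 (show F.card = 0 by omega)
      rw [hFe] at hsumc
      simp at hsumc
      omega
    · rcases Nat.lt_or_ge F.card 2 with h2 | h2
      · obtain ⟨ρ, hFρ⟩ := Finset.card_eq_one.1 (show F.card = 1 by omega)
        have hρF : ρ ∈ F := by
          rw [hFρ]
          exact Finset.mem_singleton_self ρ
        have hcount : 4 ≤ P.roots.count ρ := by
          rw [← hcnt ρ hρF]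
          rw [hFρ, Finset.sum_singleton] at hsumc
          omega
        obtain ⟨hρpos, hρev⟩ := hmemF ρ hρF
        exact hNoDouble ρ hρpos (hNzero ρ hρev (hmult2 ρ (by omega)))
          (hNzero' ρ hρev (hmult3 ρ (by omega)))
      · obtain ⟨u, v, huv, hFuv⟩ := Finset.card_eq_two.1 (show F.card = 2 by omega)
        have huF : u ∈ F := by
          rw [hFuv]
          simp
        have hvF : v ∈ F := by
          rw [hFuv]
          simp
        obtain ⟨hupos, huev⟩ := hmemF u huF
        obtain ⟨hvpos, hvev⟩ := hmemF v hvF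
        have hsum2 : Pos.count u + Pos.count v = Multiset.card Pos := by
          rw [← hsumc, hFuv, Finset.sum_pair huv]
        have hor : 2 ≤ P.roots.count u ∨ 2 ≤ P.roots.count v := by
          rw [hcnt u huF, hcnt v hvF] at hsum2
          omega
        rcases lt_or_gt_of_ne huv with hlt | hgt
        · obtain ⟨ξ, hξ1, hξ2, hξN⟩ := hRolle u v hupos hlt huev hvev
          rcases hor with hu2 | hv2
          · exact hNoTwo u ξ hupos hξ1 (hNzero u huev (hmult2 u hu2)) hξN
          · exact hNoTwo ξ v (hupos.trans hξ1) hξ2 hξN (hNzero v hvev (hmult2 v hv2))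
        · obtain ⟨ξ, hξ1, hξ2, hξN⟩ := hRolle v u hvpos hgt hvev huev
          rcases hor with hu2 | hv2
          · exact hNoTwo ξ u (hvpos.trans hξ1) hξ2 hξN (hNzero u huev (hmult2 u hu2))
          · exact hNoTwo v ξ hvpos hξ1 (hNzero v hvev (hmult2 v hv2)) hξN
  · obtain ⟨x, hxF, y, hyF, z, hzF, hxy, hyz⟩ := finset_triple F hFc
    obtain ⟨hxpos, hxev⟩ := hmemF x hxF
    obtain ⟨hypos, hyev⟩ := hmemF y hyF
    obtain ⟨hzpos, hzev⟩ := hmemF z hzF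
    obtain ⟨ξ1, hξ11, hξ12, hξ1N⟩ := hRolle x y hxpos hxy hxev hyev
    obtain ⟨ξ2, hξ21, hξ22, hξ2N⟩ := hRolle y z hypos hyz hyev hzev
    exact hNoTwo ξ1 ξ2 (hxpos.trans hξ11) (hξ12.trans hξ21) hξ1N hξ2N

lemma odd_case (d : ℕ) (P : Polynomial ℝ) (hd : 4 ≤ d)
    (hmonic : P.Monic) (hdeg : P.natDegree = d)
    (hhyp : Multiset.card P.roots = d)
    (hsignneg : ∀ j, 1 ≤ j → j ≤ d - 1 → P.coeff j < 0)
    (hsign0 : 0 < P.coeff 0)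
    (α β : ℝ) (hα : α ∈ P.roots) (hβ : β ∈ P.roots)
    (hαpos : 0 < α) (hβpos : 0 < β)
    (hminmax : ∀ c ∈ P.roots, 0 < c → β ≤ c ∧ c ≤ α)
    (hdodd : Odd d)
    (x : ℝ) (hx : x ∈ P.roots) (hxneg : x < 0) : β < -x ∧ -x < α := by
  classical
  have hP0 : P ≠ 0 := hmonic.ne_zero
  have hd5 : 5 ≤ d := by
    rcases hdodd with ⟨k, hk⟩
    omega
  -- no zero roots
  have hzero : ∀ r ∈ P.roots, r ≠ 0 := by
    intro r hr h0
    have := (Polynomial.mem_roots'.1 hr).2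
    rw [h0] at this
    rw [Polynomial.IsRoot, ← Polynomial.coeff_zero_eq_eval_zero] at this
    linarith
  -- product representation
  have hprodrep : (P.roots.map (fun r => X - C r)).prod = P :=
    Polynomial.prod_multiset_X_sub_C_of_monic_of_roots_card_eq hmonic (by rw [hhyp, hdeg])
  -- eval 0
  have heval0 : P.eval 0 = (P.roots.map (fun r => -r)).prod := by
    conv_lhs => rw [← hprodrep]
    rw [Polynomial.eval_multiset_prod, Multiset.map_map]
    congr 1
    apply Multiset.map_congr rfl
    intro r _
    simp
  have ha0pos : 0 < (P.roots.map (fun r => -r)).prod := by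
    rw [← heval0, ← Polynomial.coeff_zero_eq_eval_zero]
    exact hsign0
  -- Vieta: sum of roots positive
  have hsplits : P.Splits := by
    rw [Polynomial.splits_iff_card_roots, hhyp, hdeg]
  have hnext : P.nextCoeff = -P.roots.sum :=
    hsplits.nextCoeff_eq_neg_sum_roots_of_monic hmonic
  have hnext2 : P.nextCoeff = P.coeff (d-1) := by
    rw [Polynomial.nextCoeff, hdeg]
    have : ¬ d = 0 := by omega
    simp [this]
  have hsumpos : 0 < P.roots.sum := by
    have hc := hsignneg (d-1) (by omega) le_rfl
    rw [← hnext2, hnext] at hc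
    linarith
  -- Vieta: sum of inverses positive
  have hinvpos : 0 < (P.roots.map (fun r => r⁻¹)).sum := by
    have hc1 := hsignneg 1 le_rfl (by omega)
    have := coeff_one_prod P.roots hzero
    rw [hprodrep] at this
    rw [this] at hc1
    have hneg : (P.roots.map (fun r => -r⁻¹)).sum < 0 := by
      by_contra hcon
      push_neg at hcon
      nlinarith
    have : (P.roots.map (fun r => -r⁻¹)).sum = -(P.roots.map (fun r => r⁻¹)).sum := by
      have : (P.roots.map (fun r => -r⁻¹)) = ((P.roots.map (fun r => r⁻¹)).map Neg.neg) := by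
        rw [Multiset.map_map]
        rfl
      rw [this, Multiset.sum_map_neg']
    linarith [this ▸ hneg]
  -- split into positive and negative roots
  set PosM := P.roots.filter (fun r => 0 < r) with hPosM
  set NegM := P.roots.filter (fun r => ¬ 0 < r) with hNegM
  have hsplit : PosM + NegM = P.roots := Multiset.filter_add_not _ _
  have hnegneg : ∀ r ∈ NegM, r < 0 := by
    intro r hr
    have h1 := Multiset.of_mem_filter hr
    have h2 := Multiset.mem_of_mem_filter hr
    have := hzero r h2
    push_neg at h1
    exact lt_of_le_of_ne h1 this
  -- k even
  have hprodsplit : (P.roots.map (fun r => -r)).prod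
      = (PosM.map (fun r => -r)).prod * (NegM.map (fun r => -r)).prod := by
    rw [← hsplit, Multiset.map_add, Multiset.prod_add]
  have hnegprodpos : 0 < (NegM.map (fun r => -r)).prod := by
    apply Multiset.prod_pos
    intro a ha'
    obtain ⟨r, hr, rfl⟩ := Multiset.mem_map.1 ha'
    linarith [hnegneg r hr]
  have hkeven : Even (Multiset.card PosM) := by
    by_contra hodd
    have hodd' : Odd (Multiset.card (PosM.map (fun r => -r))) := by
      rw [Multiset.card_map]
      exact Nat.not_even_iff_odd.1 hodd
    have hlt : (PosM.map (fun r => -r)).prod < 0 := by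
      apply (prod_neg_multiset _ ?_).1 hodd'
      intro a ha'
      obtain ⟨r, hr, rfl⟩ := Multiset.mem_map.1 ha'
      have := Multiset.of_mem_filter hr
      linarith
    nlinarith [hprodsplit ▸ ha0pos]
  -- k = 2
  have hαmem : α ∈ PosM := Multiset.mem_filter.2 ⟨hα, hαpos⟩
  have hk1 : 1 ≤ Multiset.card PosM := by
    rw [Nat.one_le_iff_ne_zero]
    intro h
    rw [Multiset.card_eq_zero] at h
    rw [h] at hαmem
    simp at hαmem
  have hk3 := pos_card_le_three d P hd hmonic hdeg hsignneg hsign0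
  have hk2 : Multiset.card PosM = 2 := by
    rcases hkeven with ⟨k, hk⟩
    rw [hPosM] at *
    omega
  -- PosM = {α, β}
  have hPosMab : PosM = {α, β} := by
    obtain ⟨u, v, huv⟩ := Multiset.card_eq_two.1 hk2
    have humem : u ∈ PosM := by
      rw [huv]
      exact Multiset.mem_cons_self _ _
    have hvmem : v ∈ PosM := by
      rw [huv]
      simp
    have hub := hminmax u (Multiset.mem_of_mem_filter humem) (Multiset.of_mem_filter humem)
    have hvb := hminmax v (Multiset.mem_of_mem_filter hvmem) (Multiset.of_mem_filter hvmem)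
    have hβmem : β ∈ PosM := Multiset.mem_filter.2 ⟨hβ, hβpos⟩
    have hαuv : α = u ∨ α = v := by
      have := huv ▸ hαmem
      simpa [Multiset.mem_cons, Multiset.mem_singleton] using this
    have hβuv : β = u ∨ β = v := by
      have := huv ▸ hβmem
      simpa [Multiset.mem_cons, Multiset.mem_singleton] using this
    have hswap : ({β, α} : Multiset ℝ) = {α, β} := Multiset.cons_swap β α 0
    rcases hαuv with hau | hav
    · rcases hβuv with hbu | hbv
      · -- α = u = β, so v = α = β
        have hveq : v = β := by
          have hab : α = β := by rw [hau, ← hbu]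
          have := hvb.1
          have := hvb.2
          linarith
        rw [huv, ← hau, hveq]
      · rw [huv, ← hau, ← hbv]
    · rcases hβuv with hbu | hbv
      · rw [huv, ← hav, ← hbu, hswap]
      · -- β = v = α, so u = α = β
        have hueq : u = α := by
          have hab : α = β := by rw [hav, ← hbv]
          have := hub.1
          have := hub.2
          linarith
        rw [huv, hueq, ← hbv]
  have hsumPos : PosM.sum = α + β := by
    rw [hPosMab]
    simp [Multiset.sum_cons]
  have hinvPos : (PosM.map (fun r => r⁻¹)).sum = α⁻¹ + β⁻¹ := by
    rw [hPosMab]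
    simp [Multiset.sum_cons]
  -- negative roots
  have hxNeg : x ∈ NegM := Multiset.mem_filter.2 ⟨hx, by linarith⟩
  set O := NegM.erase x with hO
  have hNegMx : NegM = x ::ₘ O := (Multiset.cons_erase hxNeg).symm
  have hcardNeg : Multiset.card NegM = d - 2 := by
    have h1 : Multiset.card PosM + Multiset.card NegM = d := by
      rw [← Multiset.card_add, hsplit, hhyp]
    omega
  have hcardO : Multiset.card O = d - 3 := by
    have : Multiset.card NegM = Multiset.card O + 1 := by
      rw [hNegMx, Multiset.card_cons]
    omega
  set Omod := O.map (fun r => -r) with hOmod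
  have hOpos : ∀ a ∈ Omod, 0 < a := by
    intro a ha'
    obtain ⟨r, hr, rfl⟩ := Multiset.mem_map.1 ha'
    have := hnegneg r (Multiset.mem_of_mem_erase hr)
    linarith
  set S := Omod.sum with hS
  set T := (Omod.map (fun r => r⁻¹)).sum with hT
  have hSnonneg : 0 ≤ S := Multiset.sum_nonneg (fun a ha => (hOpos a ha).le)
  have hTnonneg : 0 ≤ T := by
    apply Multiset.sum_nonneg
    intro b hb
    obtain ⟨c, hc, rfl⟩ := Multiset.mem_map.1 hb
    exact inv_nonneg.2 (hOpos c hc).le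
  have hOsum : O.sum = -S := by
    rw [hS, hOmod]
    have : (O.map (fun r => -r)) = O.map Neg.neg := rfl
    rw [this, Multiset.sum_map_neg']
    ring
  have hOinvsum : (O.map (fun r => r⁻¹)).sum = -T := by
    rw [hT, hOmod, Multiset.map_map]
    have he : (O.map ((fun r => r⁻¹) ∘ (fun r => -r))) = (O.map (fun r => r⁻¹)).map Neg.neg := by
      rw [Multiset.map_map]
      apply Multiset.map_congr rfl
      intro r _
      exact inv_neg
    rw [he, Multiset.sum_map_neg']
    ring
  set γ := -x with hγdef
  have hγpos : 0 < γ := by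
    rw [hγdef]
    linarith
  -- main numeric inequalities
  have hsum_ineq : S < α + β - γ := by
    have h1 : P.roots.sum = PosM.sum + NegM.sum := by
      rw [← hsplit, Multiset.sum_add]
    rw [h1, hsumPos, hNegMx, Multiset.sum_cons, hOsum] at hsumpos
    have hx' : x = -γ := by rw [hγdef]; ring
    rw [hx'] at hsumpos
    linarith
  have hinv_ineq : T < α⁻¹ + β⁻¹ - γ⁻¹ := by
    have h1 : (P.roots.map (fun r => r⁻¹)).sum
        = (PosM.map (fun r => r⁻¹)).sum + (NegM.map (fun r => r⁻¹)).sum := by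
      rw [← hsplit, Multiset.map_add, Multiset.sum_add]
    rw [h1, hinvPos, hNegMx] at hinvpos
    simp only [Multiset.map_cons, Multiset.sum_cons] at hinvpos
    rw [hOinvsum] at hinvpos
    have hx' : x⁻¹ = -γ⁻¹ := by
      rw [hγdef, inv_neg, neg_neg]
    rw [hx'] at hinvpos
    linarith
  have hAM : ((d - 3 : ℕ) : ℝ)^2 ≤ S * T := by
    have := amhm Omod hOpos
    rwa [hOmod, Multiset.card_map, hcardO] at this
  have h4le : (4:ℝ) ≤ S * T := by
    have h2 : (2:ℝ) ≤ ((d - 3 : ℕ) : ℝ) := by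
      have : (2:ℕ) ≤ d - 3 := by omega
      exact_mod_cast this
    nlinarith
  have hβα : β ≤ α := (hminmax α hα hαpos).1
  have hαinv : α⁻¹ ≤ β⁻¹ := by
    apply inv_anti₀ hβpos hβα
  have hβinv : 0 < β⁻¹ := inv_pos.2 hβpos
  have hγinv : 0 < γ⁻¹ := inv_pos.2 hγpos
  constructor
  · -- β < γ
    by_contra hcon
    push_neg at hcon
    -- γ ≤ β : T < α⁻¹, S < 2α
    have hγβinv : β⁻¹ ≤ γ⁻¹ := inv_anti₀ hγpos hcon
    have hT2 : T < α⁻¹ := by linarith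
    have hS2 : S < 2 * α := by linarith
    have e1 : S * T ≤ (2*α) * T := mul_le_mul_of_nonneg_right hS2.le hTnonneg
    have e2 : (2*α) * T < (2*α) * α⁻¹ := by
      apply mul_lt_mul_of_pos_left hT2
      positivity
    have e3 : (2*α) * α⁻¹ = 2 := by
      field_simp
    linarith
  · -- γ < α
    by_contra hcon
    push_neg at hcon
    -- α ≤ γ : S < β, T < 2 β⁻¹
    have hγαinv : γ⁻¹ ≤ α⁻¹ := inv_anti₀ hαpos hcon
    have hS2 : S < β := by linarith
    have hT2 : T < 2 * β⁻¹ := by linarith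
    have e1 : S * T ≤ β * T := mul_le_mul_of_nonneg_right hS2.le hTnonneg
    have e2 : β * T < β * (2*β⁻¹) := by
      apply mul_lt_mul_of_pos_left hT2 hβpos
    have e3 : β * (2*β⁻¹) = 2 := by
      field_simp
    linarith

/-- For `d ≥ 4`, a monic degree-`d` hyperbolic polynomial realizing the
sign pattern `Σ_{1,d-1,1}` (leading `+`, then `d-1` minuses, constant `+`) satisfies
`β < γ_j < α` for every modulus `γ_j` of a negative root, where `β ≤ α` are the moduli
of the two positive roots. -/
theorem stmt5 (d : ℕ) (P : Polynomial ℝ)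
    (hd : 4 ≤ d)
    (hmonic : P.Monic) (hdeg : P.natDegree = d)
    (hhyp : Multiset.card P.roots = d)
    (hsignneg : ∀ j, 1 ≤ j → j ≤ d - 1 → P.coeff j < 0)
    (hsign0 : 0 < P.coeff 0)
    (α β : ℝ) (hα : α ∈ P.roots) (hβ : β ∈ P.roots)
    (hαpos : 0 < α) (hβpos : 0 < β)
    (hminmax : ∀ c ∈ P.roots, 0 < c → β ≤ c ∧ c ≤ α) :
    ∀ x ∈ P.roots, x < 0 → β < |x| ∧ |x| < α := by
  intro x hx hxneg
  have habs : |x| = -x := abs_of_neg hxneg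
  rw [habs]
  rcases Nat.even_or_odd d with he | ho
  · have hroot : P.eval (-(-x)) = 0 := by
      rw [neg_neg]
      exact (Polynomial.mem_roots'.1 hx).2
    have hev := even_case_eval d P hd hdeg hsignneg he (-x) (by linarith) hroot
    exact conclude_of_eval_neg d P hd hmonic hdeg hsign0 α β hαpos hminmax (-x)
      (by linarith) hev
  · exact odd_case d P hd hmonic hdeg hhyp hsignneg hsign0 α β hα hβ hαpos hβpos
      hminmax ho x hx hxneg
end

section
/- Let P be a monic hyperbolic polynomial of degree d ≥ 4 with all coefficients nonzero realizing a sign pattern Σ_{m,n,1} (m pluses, then n minuses, then a final plus, with m,n ≥ 1, m+n = d). Denote by β ≤ α the moduli of its two positive roots and by γ_1 ≤ ... ≤ γ_{d−2} the moduli of its negative roots. Then either β < γ_1 (the root of smallest modulus is positive), or γ_1 ≤ β ≤ α < γ_2 ≤ ... ≤ γ_{d−2}. -/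
open Polynomial



lemma coeff0_prod (s : Multiset ℝ) :
    ((s.map fun r => X - C r).prod).coeff 0 = (s.map fun r => -r).prod := by
  induction s using Multiset.induction with
  | empty => simp
  | cons a t ih =>
    simp only [Multiset.map_cons, Multiset.prod_cons, Polynomial.mul_coeff_zero, ih]
    simp [mul_comm]

lemma coeff1_prod (s : Multiset ℝ) (h0 : (0:ℝ) ∉ s) :
    ((s.map fun r => X - C r).prod).coeff 1
      = ((s.map fun r => X - C r).prod).coeff 0 * (-(s.map fun r => r⁻¹).sum) := by
  induction s using Multiset.induction with
  | empty => simp [Polynomial.coeff_one]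
  | cons a t ih =>
    have ha : a ≠ 0 := fun h => h0 (by simp [← h])
    have h0t : (0:ℝ) ∉ t := fun h => h0 (Multiset.mem_cons_of_mem h)
    simp only [Multiset.map_cons, Multiset.prod_cons, Multiset.sum_cons]
    have e : (X - C a) * (t.map fun r => X - C r).prod
        = X * (t.map fun r => X - C r).prod - C a * (t.map fun r => X - C r).prod := by ring
    set Q := (t.map fun r => X - C r).prod with hQ
    rw [e]
    have hc1 : (X * Q - C a * Q).coeff 1 = Q.coeff 0 - a * Q.coeff 1 := by
      simp [Polynomial.coeff_X_mul]
    have hc0 : (X * Q - C a * Q).coeff 0 = - a * Q.coeff 0 := by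
      simp
    rw [hc1, hc0, ih h0t]
    field_simp
    ring

lemma pos_roots_le_two (d n : ℕ) (P : Polynomial ℝ) (hn1 : 1 ≤ n) (hnd : n < d)
    (hmonic : P.Monic) (hdeg : P.natDegree = d)
    (hsignhi : ∀ j, n + 1 ≤ j → j ≤ d → 0 < P.coeff j)
    (hsignmid : ∀ j, 1 ≤ j → j ≤ n → P.coeff j < 0)
    (hsign0 : 0 < P.coeff 0) :
    Multiset.card (P.roots.filter (fun x => 0 < x)) ≤ 2 := by
  have hd1 : 1 ≤ d := by omega
  have hP0 : P ≠ 0 := hmonic.ne_zero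
  set g : Polynomial ℝ := X * derivative P - C (n : ℝ) * P with hg
  -- coefficients of g
  have hgc : ∀ j : ℕ, g.coeff j = ((j : ℝ) - n) * P.coeff j := by
    intro j
    rcases j with _ | k
    · simp [hg]
    · simp only [hg, coeff_sub, coeff_X_mul, coeff_derivative, coeff_C_mul]
      push_cast
      ring
  -- coefficients of g'
  have hgd : ∀ k : ℕ, (derivative g).coeff k = ((k : ℝ) + 1 - n) * P.coeff (k + 1) * ((k : ℝ) + 1) := by
    intro k
    rw [coeff_derivative, hgc]
    push_cast
    ring
  have hcoeffd : P.coeff d = 1 := by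
    have := hmonic.coeff_natDegree
    rwa [hdeg] at this
  have hgdnonneg : ∀ k : ℕ, 0 ≤ (derivative g).coeff k := by
    intro k
    rw [hgd]
    rcases le_or_gt (k + 1) n with hk | hk
    · have h1 : P.coeff (k + 1) < 0 := hsignmid (k + 1) (Nat.succ_le_succ (Nat.zero_le k)) hk
      have h2 : ((k : ℝ) + 1) - n ≤ 0 := by
        have : ((k : ℝ) + 1) ≤ n := by exact_mod_cast hk
        linarith
      have h3 : (0:ℝ) ≤ (k:ℝ) + 1 := by positivity
      nlinarith [mul_nonneg (neg_nonneg.mpr h2) (neg_nonneg.mpr h1.le)]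
    · rcases le_or_gt (k + 1) d with hkd | hkd
      · have h1 : 0 < P.coeff (k + 1) := hsignhi (k + 1) hk hkd
        have h2 : (0:ℝ) ≤ ((k : ℝ) + 1) - n := by
          have : (n:ℝ) < (k:ℝ) + 1 := by exact_mod_cast hk
          linarith
        positivity
      · have : P.coeff (k + 1) = 0 := by
          apply coeff_eq_zero_of_natDegree_lt; omega
        simp [this]
  have hgdtop : 0 < (derivative g).coeff (d - 1) := by
    rw [hgd]
    have h1 : (d : ℝ) - 1 + 1 = d := by
      have : (1:ℝ) ≤ (d:ℝ) := by exact_mod_cast hd1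
      push_cast [Nat.cast_sub hd1]; ring
    have hdd : d - 1 + 1 = d := Nat.succ_pred_eq_of_pos (Nat.lt_of_lt_of_le Nat.zero_lt_one hd1)
    rw [hdd]
    rw [hcoeffd]
    have h2 : (0:ℝ) < ((d - 1 : ℕ) : ℝ) + 1 - n := by
      push_cast [Nat.cast_sub hd1]
      have : (n:ℝ) < d := by exact_mod_cast hnd
      linarith
    have h3 : (0:ℝ) < ((d - 1 : ℕ) : ℝ) + 1 := by positivity
    nlinarith
  have hgdeg : natDegree (derivative g) < d := by
    have h1 : natDegree g ≤ d := by
      apply le_trans (natDegree_sub_le _ _)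
      apply max_le
      · apply le_trans (natDegree_mul_le)
        have := natDegree_derivative_le P
        simp only [natDegree_X]
        omega
      · apply le_trans (natDegree_mul_le)
        simp only [natDegree_C]
        omega
    have := natDegree_derivative_le g
    omega
  -- g' is positive on (0, ∞)
  have hg'pos : ∀ x : ℝ, 0 < x → 0 < eval x (derivative g) := by
    intro x hx
    rw [eval_eq_sum_range' hgdeg]
    apply Finset.sum_pos'
    · intro i _
      have := hgdnonneg i
      positivity
    · refine ⟨d - 1, Finset.mem_range.mpr (by omega), ?_⟩
      have := hgdtop
      positivity
  -- g is strictly monotone on (0, ∞)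
  have hmono : StrictMonoOn (fun x => eval x g) (Set.Ioi (0:ℝ)) := by
    apply strictMonoOn_of_deriv_pos (convex_Ioi 0) ((Polynomial.continuous g).continuousOn)
    · intro x hx
      rw [interior_Ioi] at hx
      rw [Polynomial.deriv]
      exact hg'pos x hx
  -- g has at most one zero in (0,∞)
  have gInj : ∀ z₁ z₂ : ℝ, 0 < z₁ → 0 < z₂ → eval z₁ g = 0 → eval z₂ g = 0 → z₁ = z₂ := by
    intro z₁ z₂ h1 h2 e1 e2
    rcases lt_trichotomy z₁ z₂ with h | h | h
    · exfalso
      have := hmono (Set.mem_Ioi.mpr h1) (Set.mem_Ioi.mpr h2) h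
      simp only [e1, e2] at this
      exact lt_irrefl _ this
    · exact h
    · exfalso
      have := hmono (Set.mem_Ioi.mpr h2) (Set.mem_Ioi.mpr h1) h
      simp only [e1, e2] at this
      exact lt_irrefl _ this
  -- Rolle step for f = P / x^n
  have hRolle : ∀ u v : ℝ, 0 < u → u < v → eval u P = 0 → eval v P = 0 →
      ∃ z, u < z ∧ z < v ∧ eval z g = 0 := by
    intro u v hu huv hPu hPv
    set f : ℝ → ℝ := fun x => eval x P / x ^ n with hf
    have hcont : ContinuousOn f (Set.Icc u v) := by
      apply ContinuousOn.div (Polynomial.continuous P).continuousOn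
        ((continuous_pow n).continuousOn)
      intro x hx
      have : 0 < x := lt_of_lt_of_le hu hx.1
      positivity
    have hfu : f u = 0 := by simp [hf, hPu]
    have hfv : f v = 0 := by simp [hf, hPv]
    obtain ⟨c, hc, hdc⟩ := exists_deriv_eq_zero huv hcont (hfu.trans hfv.symm)
    have hc0 : 0 < c := lt_trans hu hc.1
    have hpow : c ^ n ≠ 0 := by positivity
    have hder : HasDerivAt f ((eval c (derivative P) * c ^ n
        - eval c P * ((n:ℝ) * c ^ (n-1))) / (c ^ n) ^ 2) c :=
      HasDerivAt.div (Polynomial.hasDerivAt P c) (hasDerivAt_pow n c) hpow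
    have hz : (eval c (derivative P) * c ^ n - eval c P * ((n:ℝ) * c ^ (n-1))) / (c ^ n) ^ 2 = 0 := by
      rw [← hder.deriv]; exact hdc
    have hnum : eval c (derivative P) * c ^ n - eval c P * ((n:ℝ) * c ^ (n-1)) = 0 :=
      (div_eq_zero_iff.mp hz).resolve_right (pow_ne_zero 2 hpow)
    refine ⟨c, hc.1, hc.2, ?_⟩
    have e : eval c g = c * eval c (derivative P) - (n:ℝ) * eval c P := by
      simp [hg]
    have h2 : (c:ℝ) ^ n = c * c ^ (n-1) := by
      rw [← pow_succ', show n - 1 + 1 = n by omega]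
    rw [h2] at hnum
    have h3 : (c * eval c (derivative P) - (n:ℝ) * eval c P) * c ^ (n-1) = 0 := by
      linear_combination hnum
    rw [e]
    exact (mul_eq_zero.mp h3).resolve_right (pow_ne_zero _ (ne_of_gt hc0))
  -- multiplicity ≥ 2 gives a zero of g
  have hpairroot : ∀ x : ℝ, 2 ≤ P.rootMultiplicity x → eval x g = 0 := by
    intro x hx
    have h0 : P.IsRoot x := (rootMultiplicity_pos hP0).mp (by omega)
    have h1 : (derivative P).IsRoot x := by
      have := isRoot_iterate_derivative_of_lt_rootMultiplicity (p := P) (t := x) (n := 1) (by omega)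
      simpa using this
    simp [hg, h0.eq_zero, h1.eq_zero]
  -- helper: distinct pair with one double root is impossible
  have hpaircase : ∀ x y : ℝ, 0 < x → 0 < y → x ≠ y → 2 ≤ P.rootMultiplicity x →
      P.IsRoot y → False := by
    intro x y hx hy hxy hmult hry
    have hrx : P.IsRoot x := (rootMultiplicity_pos hP0).mp (by omega)
    have hgx : eval x g = 0 := hpairroot x hmult
    rcases lt_or_gt_of_ne hxy with h | h
    · obtain ⟨z, hz1, hz2, hz3⟩ := hRolle x y hx h hrx.eq_zero hry.eq_zero
      exact (ne_of_lt hz1) (gInj x z hx (lt_trans hx hz1) hgx hz3)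
    · obtain ⟨z, hz1, hz2, hz3⟩ := hRolle y x hy h hry.eq_zero hrx.eq_zero
      exact (ne_of_lt hz2) (gInj x z hx (lt_trans hy hz1) hgx hz3).symm
  -- three distinct roots impossible
  have key3 : ∀ u v w : ℝ, 0 < u → u < v → v < w →
      P.IsRoot u → P.IsRoot v → P.IsRoot w → False := by
    intro u v w hu huv hvw h1 h2 h3
    obtain ⟨z1, hz11, hz12, hz13⟩ := hRolle u v hu huv h1.eq_zero h2.eq_zero
    obtain ⟨z2, hz21, hz22, hz23⟩ := hRolle v w (lt_trans hu huv) hvw h2.eq_zero h3.eq_zero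
    have heq := gInj z1 z2 (lt_trans hu hz11) (lt_trans (lt_trans hu huv) hz21) hz13 hz23
    exact (ne_of_lt (lt_trans hz12 hz21)) heq
  -- triple root impossible
  have htriple : ∀ x : ℝ, 0 < x → 3 ≤ P.rootMultiplicity x → False := by
    intro x hx hm
    have h1 : (derivative P).IsRoot x := by
      simpa using isRoot_iterate_derivative_of_lt_rootMultiplicity (p := P) (t := x) (n := 1)
        (by omega)
    have h2 : (derivative (derivative P)).IsRoot x := by
      have := isRoot_iterate_derivative_of_lt_rootMultiplicity (p := P) (t := x) (n := 2) (by omega)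
      simpa [Function.iterate_succ_apply'] using this
    have hzero : eval x (derivative g) = 0 := by
      simp [hg, derivative_mul, h1.eq_zero, h2.eq_zero]
    linarith [hg'pos x hx]
  -- final counting
  by_contra hcard
  push_neg at hcard
  set pos := Multiset.filter (fun x => 0 < x) P.roots with hposdef
  obtain ⟨a, ha⟩ : ∃ a, a ∈ pos := Multiset.exists_mem_of_ne_zero
    (by intro h; rw [h] at hcard; simp at hcard)
  obtain ⟨t1, ht1⟩ := Multiset.exists_cons_of_mem ha
  obtain ⟨b, hbmem⟩ : ∃ b, b ∈ t1 := by
    apply Multiset.exists_mem_of_ne_zero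
    intro h; rw [ht1, h] at hcard; simp at hcard
  obtain ⟨t2, ht2⟩ := Multiset.exists_cons_of_mem hbmem
  obtain ⟨c, hcmem⟩ : ∃ c, c ∈ t2 := by
    apply Multiset.exists_mem_of_ne_zero
    intro h; rw [ht1, ht2, h] at hcard; simp at hcard
  have hb : b ∈ pos := by rw [ht1]; exact Multiset.mem_cons_of_mem hbmem
  have hc : c ∈ pos := by
    rw [ht1]; exact Multiset.mem_cons_of_mem (by rw [ht2]; exact Multiset.mem_cons_of_mem hcmem)
  have hroots : ∀ x, x ∈ pos → P.IsRoot x ∧ 0 < x := by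
    intro x hx
    rw [hposdef, Multiset.mem_filter] at hx
    exact ⟨(mem_roots hP0).mp hx.1, hx.2⟩
  have hposa := hroots a ha
  have hposb := hroots b hb
  have hposc := hroots c hc
  have hmultle : ∀ (x : ℝ) (k : ℕ), k ≤ Multiset.count x pos → k ≤ P.rootMultiplicity x := by
    intro x k hk
    have hle := Multiset.count_le_of_le x (Multiset.filter_le (fun x => 0 < x) P.roots)
    rw [← hposdef, count_roots] at hle
    omega
  rcases eq_or_ne a b with hab | hab
  · rcases eq_or_ne a c with hac | hac
    · -- a = b = c : triple root
      refine htriple a hposa.2 (hmultle a 3 ?_)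
      have h1 : a ∈ t2 := hac ▸ hcmem
      rw [ht1, ht2, ← hab, Multiset.count_cons_self, Multiset.count_cons_self]
      have := Multiset.count_pos.mpr h1
      omega
    · -- a = b, c distinct
      refine hpaircase a c hposa.2 hposc.2 hac (hmultle a 2 ?_) hposc.1
      rw [ht1, ht2, ← hab, Multiset.count_cons_self, Multiset.count_cons_self]
      omega
  · rcases eq_or_ne b c with hbc | hbc
    · -- b = c, a distinct
      refine hpaircase b a hposb.2 hposa.2 (Ne.symm hab) (hmultle b 2 ?_) hposa.1
      have h1 : b ∈ t2 := hbc ▸ hcmem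
      have h2 := Multiset.count_le_count_cons b a t1
      rw [ht2, Multiset.count_cons_self] at h2
      rw [ht1, ht2]
      have := Multiset.count_pos.mpr h1
      omega
    · rcases eq_or_ne a c with hac | hac
      · -- a = c, b distinct
        refine hpaircase a b hposa.2 hposb.2 hab (hmultle a 2 ?_) hposb.1
        have h1 : a ∈ t1 := by rw [ht2]; exact Multiset.mem_cons_of_mem (hac ▸ hcmem)
        rw [ht1, Multiset.count_cons_self]
        have := Multiset.count_pos.mpr h1
        omega
      · -- all distinct
        rcases lt_trichotomy a b with h1 | h1 | h1
        · rcases lt_trichotomy b c with h2 | h2 | h2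
          · exact key3 a b c hposa.2 h1 h2 hposa.1 hposb.1 hposc.1
          · exact hbc h2
          · rcases lt_trichotomy a c with h3 | h3 | h3
            · exact key3 a c b hposa.2 h3 h2 hposa.1 hposc.1 hposb.1
            · exact hac h3
            · exact key3 c a b hposc.2 h3 h1 hposc.1 hposa.1 hposb.1
        · exact hab h1
        · rcases lt_trichotomy a c with h2 | h2 | h2
          · exact key3 b a c hposb.2 h1 h2 hposb.1 hposa.1 hposc.1
          · exact hac h2
          · rcases lt_trichotomy b c with h3 | h3 | h3
            · exact key3 b c a hposb.2 h3 h2 hposb.1 hposc.1 hposa.1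
            · exact hbc h3
            · exact key3 c b a hposc.2 h3 h1 hposc.1 hposb.1 hposa.1



/-- For `d ≥ 4`, a monic degree-`d` hyperbolic polynomial realizing the
sign pattern `Σ_{m,n,1}` (`m` pluses, `n` minuses, a final plus, `m + n = d`)
satisfies: either its root of smallest modulus is positive (`β < |x|` for every
negative root `x`), or `γ₁ ≤ β ≤ α < γ₂ ≤ ⋯ ≤ γ_{d-2}` (exactly one negative root has
modulus `≤ α`, and that modulus is `≤ β`). -/
theorem stmt6 (d m n : ℕ) (P : Polynomial ℝ)
    (hd : 4 ≤ d) (hm1 : 1 ≤ m) (hn1 : 1 ≤ n) (hmn : m + n = d)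
    (hmonic : P.Monic) (hdeg : P.natDegree = d)
    (hhyp : Multiset.card P.roots = d)
    (hsignhi : ∀ j, n + 1 ≤ j → j ≤ d → 0 < P.coeff j)
    (hsignmid : ∀ j, 1 ≤ j → j ≤ n → P.coeff j < 0)
    (hsign0 : 0 < P.coeff 0)
    (α β : ℝ) (hα : α ∈ P.roots) (hβ : β ∈ P.roots)
    (hαpos : 0 < α) (hβpos : 0 < β)
    (hminmax : ∀ c ∈ P.roots, 0 < c → β ≤ c ∧ c ≤ α) :
    (∀ x ∈ P.roots, x < 0 → β < |x|) ∨
      (Multiset.card (P.roots.filter (fun x => x < 0 ∧ |x| ≤ α)) = 1 ∧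
        ∃ x ∈ P.roots, x < 0 ∧ |x| ≤ β) := by
  have hP0 : P ≠ 0 := hmonic.ne_zero
  have hβα : β ≤ α := (hminmax β hβ hβpos).2
  have hc1 : P.coeff 1 < 0 := hsignmid 1 le_rfl hn1
  have hzero_notroot : (0:ℝ) ∉ P.roots := by
    intro h
    have h2 : P.IsRoot 0 := (mem_roots hP0).mp h
    rw [IsRoot, ← coeff_zero_eq_eval_zero] at h2
    linarith
  have hrootsneg : ∀ x ∈ P.roots, ¬ 0 < x → x < 0 := by
    intro x hx hnx
    rcases lt_trichotomy x 0 with h | h | h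
    · exact h
    · exact absurd (h ▸ hx) hzero_notroot
    · exact absurd h hnx
  have hprod : (P.roots.map fun a => X - C a).prod = P :=
    prod_multiset_X_sub_C_of_monic_of_roots_card_eq hmonic (by rw [hhyp, hdeg])
  have hS : P.coeff 1 = P.coeff 0 * (-(P.roots.map fun r => r⁻¹).sum) := by
    have h1 := coeff1_prod P.roots hzero_notroot
    rw [hprod] at h1
    exact h1
  have hSpos : 0 < (P.roots.map fun r => r⁻¹).sum := by
    by_contra h
    push_neg at h
    nlinarith
  have hnd : n < d := by omega
  have hp2 := pos_roots_le_two d n P hn1 hnd hmonic hdeg hsignhi hsignmid hsign0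
  by_cases hmain : ∀ x ∈ P.roots, x < 0 → β < |x|
  · exact Or.inl hmain
  push_neg at hmain
  obtain ⟨x₀, hx₀mem, hx₀neg, hx₀le⟩ := hmain
  right
  refine ⟨?_, x₀, hx₀mem, hx₀neg, hx₀le⟩
  set F := Multiset.filter (fun x => x < 0 ∧ |x| ≤ α) P.roots with hFdef
  have hx₀F : x₀ ∈ F := by
    rw [hFdef, Multiset.mem_filter]
    exact ⟨hx₀mem, hx₀neg, le_trans hx₀le hβα⟩
  have hcard1 : 1 ≤ Multiset.card F := by
    have : 0 < Multiset.card F := Multiset.card_pos.mpr (fun h => by simp [h] at hx₀F)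
    omega
  by_contra hne
  have hF2 : 2 ≤ Multiset.card F := by omega
  obtain ⟨F1, hF1⟩ := Multiset.exists_cons_of_mem hx₀F
  obtain ⟨y, hy⟩ : ∃ y, y ∈ F1 := Multiset.exists_mem_of_ne_zero
    (by intro h; rw [hF1, h] at hF2; simp at hF2)
  obtain ⟨F2, hF2'⟩ := Multiset.exists_cons_of_mem hy
  have hymem : y ∈ F := by rw [hF1]; exact Multiset.mem_cons_of_mem hy
  have hyprop : y < 0 ∧ |y| ≤ α := by
    rw [hFdef, Multiset.mem_filter] at hymem
    exact hymem.2
  -- decompose the sum of inverses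
  set posM := Multiset.filter (fun x => 0 < x) P.roots with hposM
  set negM := Multiset.filter (fun x => ¬ 0 < x) P.roots with hnegM
  have hsplit : posM + negM = P.roots := Multiset.filter_add_not _ _
  have hsumsplit : (P.roots.map fun r => r⁻¹).sum
      = (posM.map fun r => r⁻¹).sum + (negM.map fun r => r⁻¹).sum := by
    rw [← hsplit, Multiset.map_add, Multiset.sum_add]
  -- bound the positive part
  have hposbound : (posM.map fun r => r⁻¹).sum ≤ α⁻¹ + β⁻¹ := by
    rcases eq_or_ne α β with hαβ | hαβ
    · have hall : ∀ z ∈ posM.map fun r => r⁻¹, z ≤ α⁻¹ := by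
        intro z hz
        obtain ⟨r, hr, rfl⟩ := Multiset.mem_map.mp hz
        rw [hposM, Multiset.mem_filter] at hr
        have h1 := hminmax r hr.1 hr.2
        have h2 : r = α := le_antisymm h1.2 (hαβ ▸ h1.1)
        rw [h2]
      have := Multiset.sum_le_card_nsmul _ _ hall
      rw [Multiset.card_map] at this
      have hcle : Multiset.card posM • α⁻¹ ≤ 2 • α⁻¹ := by
        apply smul_le_smul_of_nonneg_right hp2
        positivity
      have h2 : (2:ℕ) • α⁻¹ = α⁻¹ + α⁻¹ := two_nsmul α⁻¹
      rw [hαβ]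
      calc (posM.map fun r => r⁻¹).sum ≤ Multiset.card posM • α⁻¹ := this
        _ ≤ 2 • α⁻¹ := hcle
        _ = α⁻¹ + α⁻¹ := h2
        _ = β⁻¹ + β⁻¹ := by rw [hαβ]
    · have hαm : α ∈ posM := by rw [hposM, Multiset.mem_filter]; exact ⟨hα, hαpos⟩
      have hβm : β ∈ posM := by rw [hposM, Multiset.mem_filter]; exact ⟨hβ, hβpos⟩
      obtain ⟨t, ht⟩ := Multiset.exists_cons_of_mem hαm
      have hβt : β ∈ t := by
        have h1 := hβm
        rw [ht, Multiset.mem_cons] at h1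
        exact h1.resolve_left (Ne.symm hαβ)
      obtain ⟨u, hu⟩ := Multiset.exists_cons_of_mem hβt
      have hu0 : u = 0 := by
        have h1 := hp2
        rw [ht, hu, Multiset.card_cons, Multiset.card_cons] at h1
        exact Multiset.card_eq_zero.mp (by omega)
      rw [ht, hu, hu0]
      simp
  -- bound the negative part
  have hFsub : F ≤ negM := by
    rw [hFdef, hnegM]
    apply Multiset.monotone_filter_right
    intro z hz
    exact not_lt.mpr (le_of_lt hz.1)
  obtain ⟨w, hw⟩ := Multiset.le_iff_exists_add.mp hFsub
  have hnegbound : (negM.map fun r => r⁻¹).sum ≤ x₀⁻¹ + y⁻¹ := by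
    have hrest : ((F2 + w).map fun r => r⁻¹).sum ≤ 0 := by
      have hall : ∀ z ∈ (F2 + w).map fun r => r⁻¹, z ≤ (0:ℝ) := by
        intro z hz
        obtain ⟨r, hr, rfl⟩ := Multiset.mem_map.mp hz
        have hrneg : r < 0 := by
          have hrF : r ∈ negM := by
            rw [hw]
            rcases Multiset.mem_add.mp hr with h | h
            · exact Multiset.mem_add.mpr (Or.inl (by
                rw [hF1, hF2']
                exact Multiset.mem_cons_of_mem (Multiset.mem_cons_of_mem h)))
            · exact Multiset.mem_add.mpr (Or.inr h)
          rw [hnegM, Multiset.mem_filter] at hrF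
          exact hrootsneg r hrF.1 hrF.2
        rw [inv_nonpos]
        exact le_of_lt hrneg
      have := Multiset.sum_le_card_nsmul _ _ hall
      simpa using this
    have heq : negM = x₀ ::ₘ y ::ₘ (F2 + w) := by
      rw [hw, hF1, hF2', Multiset.cons_add, Multiset.cons_add]
    rw [heq]
    simp only [Multiset.map_cons, Multiset.sum_cons]
    linarith
  -- final contradiction
  have hx₀inv : x₀⁻¹ ≤ -β⁻¹ := by
    have habs : |x₀| = -x₀ := abs_of_neg hx₀neg
    have h1 : 0 < |x₀| := abs_pos.mpr (ne_of_lt hx₀neg)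
    have h2 : β⁻¹ ≤ |x₀|⁻¹ := by
      apply inv_anti₀ h1 hx₀le
    rw [habs] at h2
    rw [inv_neg] at h2
    linarith
  have hyinv : y⁻¹ ≤ -α⁻¹ := by
    have habs : |y| = -y := abs_of_neg hyprop.1
    have h1 : 0 < |y| := abs_pos.mpr (ne_of_lt hyprop.1)
    have h2 : α⁻¹ ≤ |y|⁻¹ := by
      apply inv_anti₀ h1 hyprop.2
    rw [habs] at h2
    rw [inv_neg] at h2
    linarith
  linarith [hSpos, hsumsplit, hposbound, hnegbound]
end

section
/- Let P be a monic hyperbolic polynomial of degree d ≥ 4 with all coefficients nonzero realizing a sign pattern Σ_{m,n,1} (m pluses, then n minuses, then a final plus), and suppose its root moduli satisfy γ_1 ≤ β ≤ α < γ_2 ≤ ... ≤ γ_{d−2}, where β ≤ α are the moduli of the positive roots and γ_1 ≤ ... ≤ γ_{d−2} those of the negative roots. Then n = 2 or n = 3. -/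
open Polynomial


lemma coeff_lin_mul_zero (a : ℝ) (T : ℝ[X]) : ((X - C a) * T).coeff 0 = -a * T.coeff 0 := by
  rw [mul_coeff_zero]
  simp

lemma coeff_lin_mul_succ (a : ℝ) (T : ℝ[X]) (j : ℕ) :
    ((X - C a) * T).coeff (j+1) = T.coeff j - a * T.coeff (j+1) := by
  rw [sub_mul, coeff_sub, coeff_X_mul, coeff_C_mul]

lemma Tfacts (Γ : Multiset ℝ) (hΓ : ∀ g ∈ Γ, g < 0) :
    0 < ((Γ.map fun g => X - C g).prod).coeff 0 ∧
    (∀ j, 0 ≤ ((Γ.map fun g => X - C g).prod).coeff j) ∧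
    2 * ((Γ.map fun g => X - C g).prod).coeff 2 * ((Γ.map fun g => X - C g).prod).coeff 0
      ≤ (((Γ.map fun g => X - C g).prod).coeff 1)^2 ∧
    ((Γ.map fun g => X - C g).prod).coeff 3 * ((Γ.map fun g => X - C g).prod).coeff 0
      ≤ ((Γ.map fun g => X - C g).prod).coeff 1 * ((Γ.map fun g => X - C g).prod).coeff 2 := by
  induction Γ using Multiset.induction_on with
  | empty =>
    simp [coeff_one]
    intro j; split <;> norm_num
  | cons a s ih =>
    have ha : a < 0 := hΓ a (Multiset.mem_cons_self a s)
    obtain ⟨h0, hnn, hn2, hn3⟩ := ih (fun g hg => hΓ g (Multiset.mem_cons_of_mem hg))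
    rw [Multiset.map_cons, Multiset.prod_cons]
    set T := (s.map fun g => X - C g).prod with hT
    have c0 := coeff_lin_mul_zero a T
    have c1 := coeff_lin_mul_succ a T 0
    have c2 := coeff_lin_mul_succ a T 1
    have c3 := coeff_lin_mul_succ a T 2
    refine ⟨?_, ?_, ?_, ?_⟩
    · rw [c0]; exact mul_pos (by linarith) h0
    · intro j
      cases j with
      | zero => rw [c0]; exact (mul_pos (by linarith) h0).le
      | succ k =>
        rw [coeff_lin_mul_succ]
        have := hnn k; have := hnn (k+1)
        nlinarith
    · rw [c0, c1, c2]
      have := hnn 0; have := hnn 1; have := hnn 2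
      nlinarith [mul_nonneg (sq_nonneg a) (by linarith : (0:ℝ) ≤ T.coeff 1 ^2 - 2*T.coeff 2 * T.coeff 0), sq_nonneg (T.coeff 0)]
    · rw [c0, c1, c2, c3]
      have := hnn 0; have := hnn 1; have := hnn 2; have := hnn 3
      nlinarith [mul_nonneg (sq_nonneg a) (by linarith : (0:ℝ) ≤ T.coeff 1 * T.coeff 2 - T.coeff 3 * T.coeff 0),
        mul_nonneg (mul_nonneg (by linarith : (0:ℝ) ≤ -a) (hnn 1)) (hnn 1),
        mul_nonneg (hnn 0) (hnn 1)]


lemma evalPos (q : ℝ[X]) (hnn : ∀ j, 0 ≤ q.coeff j) (t : ℕ) (ht : 0 < q.coeff t) (x : ℝ)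
    (hx : 0 < x) : 0 < q.eval x := by
  have htle : t ≤ q.natDegree := le_natDegree_of_ne_zero ht.ne'
  rw [eval_eq_sum_range]
  have h1 : q.coeff t * x^t ≤ ∑ i ∈ Finset.range (q.natDegree + 1), q.coeff i * x ^ i :=
    Finset.single_le_sum (fun i _ => mul_nonneg (hnn i) (pow_pos hx i).le)
      (Finset.mem_range.2 (by omega))
  have h2 : 0 < q.coeff t * x ^ t := mul_pos ht (pow_pos hx t)
  linarith

section descartes
variable (P : ℝ[X]) (d n : ℕ)

lemma descartes2 (hdeg : P.natDegree = d) (hn1 : 1 ≤ n) (hnd : n < d)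
    (hsignhi : ∀ j, n + 1 ≤ j → j ≤ d → 0 < P.coeff j)
    (hsignmid : ∀ j, 1 ≤ j → j ≤ n → P.coeff j < 0)
    (x y z : ℝ) (hmem : (x ::ₘ y ::ₘ {z}) ≤ P.roots)
    (hx : 0 < x) (hy : 0 < y) (hz : 0 < z) : False := by
  have hd1 : 1 ≤ d := le_trans hn1 hnd.le
  have hpd : 0 < P.coeff d := hsignhi d (by omega) le_rfl
  have hP0 : P ≠ 0 := fun h => by simp [h] at hpd
  set h : ℝ[X] := X * derivative P - C (n:ℝ) * P with hh
  have hc : ∀ j : ℕ, h.coeff j = ((j:ℝ) - n) * P.coeff j := by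
    intro j
    cases j with
    | zero =>
      rw [hh, coeff_sub, mul_coeff_zero, coeff_X_zero, coeff_C_mul]
      push_cast
      ring
    | succ k =>
      rw [hh, coeff_sub, coeff_X_mul, coeff_derivative, coeff_C_mul]
      push_cast
      ring
  have hdc : ∀ j : ℕ, (derivative h).coeff j = ((j:ℝ)+1) * (((j:ℝ)+1) - n) * P.coeff (j+1) := by
    intro j
    rw [coeff_derivative, hc]
    push_cast
    ring
  have hnn : ∀ j, 0 ≤ (derivative h).coeff j := by
    intro j
    rw [hdc]
    rcases le_or_gt (j+1) n with hj | hj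
    · have h1 : P.coeff (j+1) < 0 := hsignmid (j+1) (by omega) hj
      have h2 : ((j:ℝ)+1) - n ≤ 0 := by
        have : ((j:ℝ)+1) ≤ n := by exact_mod_cast hj
        linarith
      have h3 : (0:ℝ) ≤ ((j:ℝ)+1) := by positivity
      nlinarith [mul_nonneg (mul_nonneg h3 (neg_nonneg.2 h2)) (le_of_lt (neg_pos.2 h1))]
    · rcases le_or_gt (j+1) d with hjd | hjd
      · have h1 : 0 < P.coeff (j+1) := hsignhi (j+1) (by omega) hjd
        have h2 : (0:ℝ) ≤ ((j:ℝ)+1) - n := by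
          have : (n:ℝ) < ((j:ℝ)+1) := by exact_mod_cast hj
          linarith
        positivity
      · have : P.coeff (j+1) = 0 := coeff_eq_zero_of_natDegree_lt (by omega)
        rw [this]; ring_nf; exact le_rfl
  obtain ⟨e, he⟩ : ∃ e, d = e + 1 := ⟨d - 1, by omega⟩
  have hposc : 0 < (derivative h).coeff (d-1) := by
    have hd' : d - 1 = e := by omega
    rw [hdc, hd']
    have h2 : (0:ℝ) < ((e:ℝ)+1) - n := by
      have : (n:ℝ) < e + 1 := by exact_mod_cast (he ▸ hnd)
      linarith
    have h3 : (0:ℝ) < ((e:ℝ)+1) := by positivity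
    have h4 : 0 < P.coeff (e+1) := he ▸ hpd
    exact mul_pos (mul_pos h3 h2) h4
  have hevalpos : ∀ t : ℝ, 0 < t → 0 < (derivative h).eval t :=
    fun t ht => evalPos _ hnn (d-1) hposc t ht
  have hmono : StrictMonoOn (fun t => h.eval t) (Set.Ici (0:ℝ)) := by
    apply strictMonoOn_of_deriv_pos (convex_Ici 0)
    · exact (Polynomial.continuous h).continuousOn
    · intro t ht
      rw [interior_Ici, Set.mem_Ioi] at ht
      rw [Polynomial.deriv]
      exact hevalpos t ht
  have htwo : ∀ u v : ℝ, 0 ≤ u → u < v → h.eval u = 0 → h.eval v = 0 → False := by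
    intro u v hu huv h1 h2
    have := hmono (Set.mem_Ici.2 hu) (Set.mem_Ici.2 (by linarith)) huv
    simp only [h1, h2] at this
    exact lt_irrefl 0 this
  -- Rolle
  obtain ⟨k, rfl⟩ : ∃ k, n = k + 1 := ⟨n - 1, by omega⟩
  have hrolle : ∀ a b : ℝ, 0 < a → a < b → P.eval a = 0 → P.eval b = 0 →
      ∃ c, a < c ∧ c < b ∧ h.eval c = 0 := by
    intro a b ha hab hPa hPb
    have hderiv : ∀ t ∈ Set.Ioo a b, HasDerivAt (fun s => P.eval s / s^(k+1))
        (h.eval t / t^(k+2)) t := by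
      intro t ht
      have ht0 : 0 < t := lt_trans ha ht.1
      have hd := (P.hasDerivAt t).div (hasDerivAt_pow (k+1) t) (pow_ne_zero _ ht0.ne')
      refine hd.congr_deriv ?_
      have hev : h.eval t = t * (derivative P).eval t - ((k:ℝ)+1) * P.eval t := by
        simp [hh]
      rw [hev]
      simp only [Nat.add_sub_cancel, Nat.cast_add, Nat.cast_one]
      field_simp
      ring
    have hcont : ContinuousOn (fun s => P.eval s / s^(k+1)) (Set.Icc a b) := by
      apply ContinuousOn.div (Polynomial.continuous P).continuousOn
        (continuous_pow (k+1)).continuousOn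
      intro t ht
      exact pow_ne_zero _ (ne_of_gt (lt_of_lt_of_le ha ht.1))
    have hfab : P.eval a / a^(k+1) = P.eval b / b^(k+1) := by rw [hPa, hPb, zero_div, zero_div]
    obtain ⟨c, hc, hc0⟩ := exists_hasDerivAt_eq_zero hab hcont hfab hderiv
    refine ⟨c, hc.1, hc.2, ?_⟩
    have hcpos : 0 < c := lt_trans ha hc.1
    rcases div_eq_zero_iff.1 hc0 with h1 | h1
    · exact h1
    · exact absurd h1 (pow_ne_zero _ hcpos.ne')
  -- multiplicity facts
  have hdouble : ∀ w : ℝ, 2 ≤ P.roots.count w → h.eval w = 0 := by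
    intro w hw
    rw [count_roots] at hw
    have hdvd : (X - C w)^2 ∣ P := dvd_trans (pow_dvd_pow _ hw) (P.pow_rootMultiplicity_dvd w)
    obtain ⟨q, hq⟩ := hdvd
    have hP'w : (derivative P).eval w = 0 := by
      have : (X - C w)^(2-1) ∣ derivative P := pow_sub_one_dvd_derivative_of_pow_dvd ⟨q, hq⟩
      obtain ⟨r, hr⟩ := this
      rw [hr]
      simp
    have hPw : P.eval w = 0 := by rw [hq]; simp
    simp [hh, hP'w, hPw]
  have htriple : ∀ w : ℝ, 0 < w → 3 ≤ P.roots.count w → False := by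
    intro w hw0 hw
    rw [count_roots] at hw
    have hdvd : (X - C w)^3 ∣ P := dvd_trans (pow_dvd_pow _ hw) (P.pow_rootMultiplicity_dvd w)
    have hP' : (X - C w)^2 ∣ derivative P := by
      have := pow_sub_one_dvd_derivative_of_pow_dvd hdvd
      simpa using this
    have hP'w : (derivative P).eval w = 0 := by
      obtain ⟨r, hr⟩ := hP'
      rw [hr]; simp
    have hP''w : (derivative (derivative P)).eval w = 0 := by
      have : (X - C w)^(2-1) ∣ derivative (derivative P) := pow_sub_one_dvd_derivative_of_pow_dvd hP'
      obtain ⟨r, hr⟩ := this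
      rw [hr]; simp
    have : (derivative h).eval w = 0 := by
      simp [hh, derivative_mul, hP'w, hP''w]
    have := hevalpos w hw0
    linarith
  -- members are roots
  have hroot : ∀ w : ℝ, w ∈ P.roots → P.eval w = 0 := by
    intro w hw
    exact (mem_roots'.1 hw).2
  have hxr : P.eval x = 0 := hroot x (Multiset.mem_of_le hmem (by simp))
  have hyr : P.eval y = 0 := hroot y (Multiset.mem_of_le hmem (by simp))
  have hzr : P.eval z = 0 := hroot z (Multiset.mem_of_le hmem (by simp))
  -- case analysis
  have hcount : ∀ w : ℝ, (x ::ₘ y ::ₘ {z}).count w ≤ P.roots.count w :=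
    fun w => Multiset.count_le_of_le w hmem
  -- helper: pair with double root
  have hpair : ∀ u v : ℝ, 0 < u → 0 < v → u ≠ v → h.eval u = 0 → P.eval u = 0 → P.eval v = 0 → False := by
    intro u v hu hv huv hhu hPu hPv
    rcases lt_or_gt_of_ne huv with hlt | hlt
    · obtain ⟨c, hc1, hc2, hc3⟩ := hrolle u v hu hlt hPu hPv
      exact htwo u c hu.le hc1 hhu hc3
    · obtain ⟨c, hc1, hc2, hc3⟩ := hrolle v u hv hlt hPv hPu
      exact htwo c u (le_of_lt (lt_trans hv hc1)) hc2 hc3 hhu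
  by_cases hxy : x = y
  · by_cases hyz : y = z
    · -- triple
      subst hxy; subst hyz
      apply htriple x hx
      have := hcount x
      simpa [Multiset.count_cons, Multiset.count_singleton] using this
    · -- x = y ≠ z
      subst hxy
      have hxz' : x ≠ z := hyz
      have hcx : 2 ≤ P.roots.count x := by
        have := hcount x
        simpa [Multiset.count_cons, Multiset.count_singleton, hxz'] using this
      exact hpair x z hx hz hxz' (hdouble x hcx) hxr hzr
  · by_cases hyz : y = z
    · -- y = z ≠ x
      subst hyz
      have hyx' : y ≠ x := fun h => hxy h.symm
      have hcy : 2 ≤ P.roots.count y := by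
        have := hcount y
        simpa [Multiset.count_cons, Multiset.count_singleton, hyx'] using this
      exact hpair y x hy hx hyx' (hdouble y hcy) hyr hxr
    · by_cases hxz : x = z
      · -- x = z ≠ y
        subst hxz
        have hcx : 2 ≤ P.roots.count x := by
          have := hcount x
          simpa [Multiset.count_cons, Multiset.count_singleton, hxy] using this
        exact hpair x y hx hy hxy (hdouble x hcx) hxr hyr
      · -- all distinct: order them
        have horder : ∃ a b c : ℝ, a < b ∧ b < c ∧ 0 < a ∧
            P.eval a = 0 ∧ P.eval b = 0 ∧ P.eval c = 0 := by
          rcases lt_trichotomy x y with h1 | h1 | h1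
          · rcases lt_trichotomy y z with h2 | h2 | h2
            · exact ⟨x, y, z, h1, h2, hx, hxr, hyr, hzr⟩
            · exact absurd h2 hyz
            · rcases lt_trichotomy x z with h3 | h3 | h3
              · exact ⟨x, z, y, h3, h2, hx, hxr, hzr, hyr⟩
              · exact absurd h3 hxz
              · exact ⟨z, x, y, h3, h1, hz, hzr, hxr, hyr⟩
          · exact absurd h1 hxy
          · rcases lt_trichotomy x z with h2 | h2 | h2
            · exact ⟨y, x, z, h1, h2, hy, hyr, hxr, hzr⟩
            · exact absurd h2 hxz
            · rcases lt_trichotomy y z with h3 | h3 | h3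
              · exact ⟨y, z, x, h3, h2, hy, hyr, hzr, hxr⟩
              · exact absurd h3 hyz
              · exact ⟨z, y, x, h3, h1, hz, hzr, hyr, hxr⟩
        obtain ⟨a, b, c, hab, hbc, ha, hPa, hPb, hPc⟩ := horder
        obtain ⟨c1, hc11, hc12, hc13⟩ := hrolle a b ha hab hPa hPb
        obtain ⟨c2, hc21, hc22, hc23⟩ := hrolle b c (lt_trans ha hab) hbc hPb hPc
        exact htwo c1 c2 (le_of_lt (lt_trans ha hc11)) (lt_trans hc12 hc21) hc13 hc23
end descartes


lemma abs1 (a1 a2 G s1 s2 : ℝ) (ha1 : 0 < a1) (ha2 : 0 < a2) (h2 : a2 ≤ G)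
    (hs1 : 0 ≤ s1) (hN2 : 2*s2 ≤ s1^2)
    (hE1 : G - a1 - a2 + s1 < 0) :
    a1*a2 - G*(a1+a2) + (G - a1 - a2)*s1 + s2 < 0 := by
  nlinarith [mul_nonneg hs1 (by linarith : (0:ℝ) ≤ a1 + a2 - G - s1),
    mul_nonneg (le_of_lt ha2) (by linarith : (0:ℝ) ≤ G - a2), sq_nonneg s1, sq_nonneg a2,
    mul_pos ha1 ha2]

lemma excl_n1 (r1 r2 w t0 t1 t2 : ℝ) (hw : 0 < w) (h1 : w ≤ r1) (h2 : w ≤ r2)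
    (ht0 : 0 < t0) (ht1 : 0 ≤ t1) (ht2 : 0 ≤ t2) (hN2 : 2*t2*t0 ≤ t1^2)
    (hq1 : (r1*r2 - w*(r1+r2))*t0 + r1*r2*w*t1 < 0)
    (hq2 : 0 < (w-r1-r2)*t0 + (r1*r2-w*(r1+r2))*t1 + r1*r2*w*t2) : False := by
  have hr1 : 0 < r1 := lt_of_lt_of_le hw h1
  have hr2 : 0 < r2 := lt_of_lt_of_le hw h2
  have hD : 0 < r1*r2*w*t0 := by positivity
  have ha1 : 0 < r1⁻¹ := inv_pos.2 hr1
  have ha2 : 0 < r2⁻¹ := inv_pos.2 hr2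
  have hG2 : r2⁻¹ ≤ w⁻¹ := by
    apply inv_anti₀ hw h2
  have hs1 : 0 ≤ t1/t0 := div_nonneg ht1 ht0.le
  have hN2' : 2*(t2/t0) ≤ (t1/t0)^2 := by
    rw [div_pow, show 2*(t2/t0) = (2*t2)/t0 by ring, div_le_div_iff₀ ht0 (pow_pos ht0 2)]
    nlinarith
  have hE1 : w⁻¹ - r1⁻¹ - r2⁻¹ + t1/t0 < 0 := by
    have key : w⁻¹ - r1⁻¹ - r2⁻¹ + t1/t0
        = ((r1*r2 - w*(r1+r2))*t0 + r1*r2*w*t1)/(r1*r2*w*t0) := by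
      field_simp
      ring
    rw [key]
    exact div_neg_of_neg_of_pos hq1 hD
  have hE2 := abs1 r1⁻¹ r2⁻¹ w⁻¹ (t1/t0) (t2/t0) ha1 ha2 hG2 hs1 hN2' hE1
  have key2 : r1⁻¹*r2⁻¹ - w⁻¹*(r1⁻¹+r2⁻¹) + (w⁻¹ - r1⁻¹ - r2⁻¹)*(t1/t0) + t2/t0
      = ((w-r1-r2)*t0 + (r1*r2-w*(r1+r2))*t1 + r1*r2*w*t2)/(r1*r2*w*t0) := by
    field_simp
    ring
  rw [key2] at hE2
  have := div_pos hq2 hD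
  linarith


lemma phi_ineq (a1 a2 G u : ℝ) (ha1 : 0 < a1) (ha2 : 0 < a2) (h1 : a1 ≤ G) (h2 : a2 ≤ G)
    (hu : u = a1 + a2 - G) (hu0 : 0 < u) :
    (G*(a1+a2) - a1*a2)*u + u^3 ≤ 2*G*(a1*a2) := by
  have h1u : u ≤ a1 := by linarith
  have h2u : u ≤ a2 := by linarith
  have key : 2*G*(a1*a2) - ((G*(a1+a2) - a1*a2)*u + u^3)
      = (a1+a2)*(a1*(a2-u)) + (a1+a2)*(a2*(a1-u)) - u*((a1-u)*(a2-u)) := by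
    rw [hu]; ring
  have hmm : u*(a1-u) ≤ a1*a1 :=
    mul_le_mul h1u (by linarith) (by linarith) ha1.le
  have h3 : u*((a1-u)*(a2-u)) ≤ a1*(a1*(a2-u)) := by
    nlinarith [mul_nonneg (by linarith : (0:ℝ) ≤ a2 - u) (by linarith : (0:ℝ) ≤ a1*a1 - u*(a1-u))]
  have h4 : a1*(a1*(a2-u)) ≤ (a1+a2)*(a1*(a2-u)) := by
    apply mul_le_mul_of_nonneg_right (by linarith)
    exact mul_nonneg ha1.le (by linarith)
  have h5 : 0 ≤ (a1+a2)*(a2*(a1-u)) :=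
    mul_nonneg (by linarith) (mul_nonneg ha2.le (by linarith))
  linarith

lemma abs4 (a1 a2 G s1 s2 s3 s4 : ℝ) (ha1 : 0 < a1) (ha2 : 0 < a2) (h1 : a1 ≤ G) (h2 : a2 ≤ G)
    (hs1 : 0 ≤ s1) (hs2 : 0 ≤ s2) (hs3 : 0 ≤ s3) (hs4 : 0 ≤ s4)
    (hN2 : 2*s2 ≤ s1^2) (hN3 : s3 ≤ s1*s2)
    (hE1 : G - a1 - a2 + s1 < 0)
    (hE3 : G*(a1*a2) + (a1*a2 - G*(a1+a2))*s1 + (G - a1 - a2)*s2 + s3 < 0)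
    (hE4 : G*(a1*a2)*s1 + (a1*a2 - G*(a1+a2))*s2 + (G - a1 - a2)*s3 + s4 < 0) :
    False := by
  obtain ⟨u, hu⟩ : ∃ u : ℝ, u = a1 + a2 - G := ⟨_, rfl⟩
  have hG : 0 < G := lt_of_lt_of_le ha1 h1
  have hu0 : 0 < u := by rw [hu]; linarith
  have hs1u : s1 < u := by rw [hu]; linarith
  have hGsP : 0 < G*(a1+a2) - a1*a2 := by
    nlinarith [mul_nonneg ha1.le (by linarith : (0:ℝ) ≤ G - a2), mul_pos hG ha2]
  have hs1pos : 0 < s1 := by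
    rcases hs1.lt_or_eq with h | h
    · exact h
    · exfalso
      have e1 : s1 = 0 := h.symm
      rw [e1] at hN2 hN3
      have e2 : s2 = 0 := by linarith
      have e3 : s3 = 0 := by rw [e2] at hN3; simpa using le_antisymm (by linarith) hs3
      rw [e1, e2, e3] at hE3
      nlinarith [mul_pos (mul_pos hG ha1) ha2]
  have step1 : G*(a1*a2)*s1 < (G*(a1+a2) - a1*a2)*s2 + u*s3 := by rw [hu]; nlinarith
  have step2 : (G*(a1+a2) - a1*a2)*s2 ≤ (G*(a1+a2) - a1*a2)*(s1^2/2) :=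
    mul_le_mul_of_nonneg_left (by linarith) hGsP.le
  have step3 : u*s3 ≤ u*(s1*(s1^2/2)) := by
    apply mul_le_mul_of_nonneg_left _ hu0.le
    calc s3 ≤ s1*s2 := hN3
    _ ≤ s1*(s1^2/2) := mul_le_mul_of_nonneg_left (by linarith) hs1
  have main : G*(a1*a2) < (G*(a1+a2) - a1*a2)*(s1/2) + u*(s1^2/2) := by
    have expand : ((G*(a1+a2) - a1*a2)*(s1/2) + u*(s1^2/2))*s1
        = (G*(a1+a2) - a1*a2)*(s1^2/2) + u*(s1*(s1^2/2)) := by ring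
    have hfac : G*(a1*a2)*s1 < ((G*(a1+a2) - a1*a2)*(s1/2) + u*(s1^2/2))*s1 := by
      rw [expand]; linarith
    exact lt_of_mul_lt_mul_right hfac hs1
  have b1 : (G*(a1+a2) - a1*a2)*(s1/2) < (G*(a1+a2) - a1*a2)*(u/2) := by
    apply mul_lt_mul_of_pos_left _ hGsP; linarith
  have b2 : u*(s1^2/2) ≤ u*(u^2/2) := by
    apply mul_le_mul_of_nonneg_left _ hu0.le
    nlinarith
  have phi := phi_ineq a1 a2 G u ha1 ha2 h1 h2 hu hu0
  nlinarith [main, b1, b2, phi]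

lemma excl_n4 (r1 r2 w t0 t1 t2 t3 t4 : ℝ) (hw : 0 < w) (h1 : w ≤ r1) (h2 : w ≤ r2)
    (ht0 : 0 < t0) (ht1 : 0 ≤ t1) (ht2 : 0 ≤ t2) (ht3 : 0 ≤ t3) (ht4 : 0 ≤ t4)
    (hN2 : 2*t2*t0 ≤ t1^2) (hN3 : t3*t0 ≤ t1*t2)
    (hq1 : (r1*r2 - w*(r1+r2))*t0 + r1*r2*w*t1 < 0)
    (hq3 : t0 + (w-r1-r2)*t1 + (r1*r2-w*(r1+r2))*t2 + r1*r2*w*t3 < 0)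
    (hq4 : t1 + (w-r1-r2)*t2 + (r1*r2-w*(r1+r2))*t3 + r1*r2*w*t4 < 0) : False := by
  have hr1 : 0 < r1 := lt_of_lt_of_le hw h1
  have hr2 : 0 < r2 := lt_of_lt_of_le hw h2
  have hD : 0 < r1*r2*w*t0 := by positivity
  have ha1 : 0 < r1⁻¹ := inv_pos.2 hr1
  have ha2 : 0 < r2⁻¹ := inv_pos.2 hr2
  have hG1 : r1⁻¹ ≤ w⁻¹ := inv_anti₀ hw h1
  have hG2 : r2⁻¹ ≤ w⁻¹ := inv_anti₀ hw h2
  have hs1 : 0 ≤ t1/t0 := div_nonneg ht1 ht0.le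
  have hs2 : 0 ≤ t2/t0 := div_nonneg ht2 ht0.le
  have hs3 : 0 ≤ t3/t0 := div_nonneg ht3 ht0.le
  have hs4 : 0 ≤ t4/t0 := div_nonneg ht4 ht0.le
  have hN2' : 2*(t2/t0) ≤ (t1/t0)^2 := by
    rw [div_pow, show 2*(t2/t0) = (2*t2)/t0 by ring, div_le_div_iff₀ ht0 (pow_pos ht0 2)]
    nlinarith
  have hN3' : t3/t0 ≤ (t1/t0)*(t2/t0) := by
    rw [show (t1/t0)*(t2/t0) = (t1*t2)/(t0^2) by ring, div_le_div_iff₀ ht0 (pow_pos ht0 2)]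
    nlinarith
  have hE1 : w⁻¹ - r1⁻¹ - r2⁻¹ + t1/t0 < 0 := by
    have key : w⁻¹ - r1⁻¹ - r2⁻¹ + t1/t0
        = ((r1*r2 - w*(r1+r2))*t0 + r1*r2*w*t1)/(r1*r2*w*t0) := by
      field_simp
      ring
    rw [key]
    exact div_neg_of_neg_of_pos hq1 hD
  have hE3 : w⁻¹*(r1⁻¹*r2⁻¹) + (r1⁻¹*r2⁻¹ - w⁻¹*(r1⁻¹+r2⁻¹))*(t1/t0)
      + (w⁻¹ - r1⁻¹ - r2⁻¹)*(t2/t0) + t3/t0 < 0 := by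
    have key : w⁻¹*(r1⁻¹*r2⁻¹) + (r1⁻¹*r2⁻¹ - w⁻¹*(r1⁻¹+r2⁻¹))*(t1/t0)
        + (w⁻¹ - r1⁻¹ - r2⁻¹)*(t2/t0) + t3/t0
        = (t0 + (w-r1-r2)*t1 + (r1*r2-w*(r1+r2))*t2 + r1*r2*w*t3)/(r1*r2*w*t0) := by
      field_simp
      ring
    rw [key]
    exact div_neg_of_neg_of_pos hq3 hD
  have hE4 : w⁻¹*(r1⁻¹*r2⁻¹)*(t1/t0) + (r1⁻¹*r2⁻¹ - w⁻¹*(r1⁻¹+r2⁻¹))*(t2/t0)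
      + (w⁻¹ - r1⁻¹ - r2⁻¹)*(t3/t0) + t4/t0 < 0 := by
    have key : w⁻¹*(r1⁻¹*r2⁻¹)*(t1/t0) + (r1⁻¹*r2⁻¹ - w⁻¹*(r1⁻¹+r2⁻¹))*(t2/t0)
        + (w⁻¹ - r1⁻¹ - r2⁻¹)*(t3/t0) + t4/t0
        = (t1 + (w-r1-r2)*t2 + (r1*r2-w*(r1+r2))*t3 + r1*r2*w*t4)/(r1*r2*w*t0) := by
      field_simp
      ring
    rw [key]
    exact div_neg_of_neg_of_pos hq4 hD
  exact abs4 r1⁻¹ r2⁻¹ w⁻¹ (t1/t0) (t2/t0) (t3/t0) (t4/t0) ha1 ha2 hG1 hG2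
    hs1 hs2 hs3 hs4 hN2' hN3' hE1 hE3 hE4

lemma three_of_card {α : Type*} (s : Multiset α) (h : 3 ≤ Multiset.card s) :
    ∃ x y z, (x ::ₘ y ::ₘ {z}) ≤ s := by
  obtain ⟨x, hx⟩ := (Multiset.card_pos_iff_exists_mem (s := s)).1 (by omega)
  obtain ⟨s1, rfl⟩ := Multiset.exists_cons_of_mem hx
  rw [Multiset.card_cons] at h
  obtain ⟨y, hy⟩ := (Multiset.card_pos_iff_exists_mem (s := s1)).1 (by omega)
  obtain ⟨s2, rfl⟩ := Multiset.exists_cons_of_mem hy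
  rw [Multiset.card_cons] at h
  obtain ⟨z, hz⟩ := (Multiset.card_pos_iff_exists_mem (s := s2)).1 (by omega)
  exact ⟨x, y, z, Multiset.cons_le_cons x (Multiset.cons_le_cons y (Multiset.singleton_le.2 hz))⟩


/-- For `d ≥ 4`, if a monic degree-`d` hyperbolic polynomial realizes the
sign pattern `Σ_{m,n,1}` (`m + n = d`) and its root moduli satisfy
`γ₁ ≤ β ≤ α < γ₂ ≤ ⋯ ≤ γ_{d-2}` (exactly one negative root has modulus `≤ α`, and that
modulus is `≤ β`), then `n = 2` or `n = 3`. -/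
theorem stmt7 (d m n : ℕ) (P : Polynomial ℝ)
    (hd : 4 ≤ d) (hm1 : 1 ≤ m) (hn1 : 1 ≤ n) (hmn : m + n = d)
    (hmonic : P.Monic) (hdeg : P.natDegree = d)
    (hhyp : Multiset.card P.roots = d)
    (hsignhi : ∀ j, n + 1 ≤ j → j ≤ d → 0 < P.coeff j)
    (hsignmid : ∀ j, 1 ≤ j → j ≤ n → P.coeff j < 0)
    (hsign0 : 0 < P.coeff 0)
    (α β : ℝ) (hα : α ∈ P.roots) (hβ : β ∈ P.roots)
    (hαpos : 0 < α) (hβpos : 0 < β)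
    (hminmax : ∀ c ∈ P.roots, 0 < c → β ≤ c ∧ c ≤ α)
    (hii₁ : Multiset.card (P.roots.filter (fun x => x < 0 ∧ |x| ≤ α)) = 1)
    (hii₂ : ∃ x ∈ P.roots, x < 0 ∧ |x| ≤ β) :
    n = 2 ∨ n = 3 := by
  classical
  have hnd : n < d := by omega
  have hfact : P = (P.roots.map fun a => X - C a).prod :=
    (prod_multiset_X_sub_C_of_monic_of_roots_card_eq hmonic (by rw [hhyp, hdeg])).symm
  have hzero_notroot : (0:ℝ) ∉ P.roots := by
    intro h0
    have h1 := (mem_roots'.1 h0).2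
    rw [IsRoot, ← coeff_zero_eq_eval_zero] at h1
    linarith
  set F := P.roots.filter (fun x => 0 < x) with hF
  set Fneg := P.roots.filter (fun x => ¬ 0 < x) with hFneg
  have hsplit : F + Fneg = P.roots := Multiset.filter_add_not _ _
  have hFneg_neg : ∀ x ∈ Fneg, x < 0 := by
    intro x hx
    have hx1 := Multiset.mem_filter.1 hx
    rcases lt_trichotomy x 0 with h | h | h
    · exact h
    · exact absurd (h ▸ hx1.1) hzero_notroot
    · exact absurd h hx1.2
  -- at most two positive roots
  have hk2 : Multiset.card F ≤ 2 := by
    by_contra hk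
    push_neg at hk
    obtain ⟨x, y, z, hxyz⟩ := three_of_card F (by omega)
    have hle : (x ::ₘ y ::ₘ {z}) ≤ P.roots := le_trans hxyz (Multiset.filter_le _ _)
    have hxF : x ∈ F := Multiset.mem_of_le hxyz (by simp)
    have hyF : y ∈ F := Multiset.mem_of_le hxyz (by simp)
    have hzF : z ∈ F := Multiset.mem_of_le hxyz (by simp)
    exact descartes2 P d n hdeg hn1 hnd hsignhi hsignmid x y z hle
      (Multiset.mem_filter.1 hxF).2 (Multiset.mem_filter.1 hyF).2 (Multiset.mem_filter.1 hzF).2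
  -- parity: card F is even
  have hcoeff0 : P.coeff 0 = ((F.map fun r : ℝ => -r).prod) * ((Fneg.map fun r : ℝ => -r).prod) := by
    conv_lhs => rw [hfact]
    rw [coeff_zero_eq_eval_zero, eval_multiset_prod, ← hsplit]
    rw [Multiset.map_add, Multiset.map_add, Multiset.prod_add, Multiset.map_map, Multiset.map_map]
    simp
  have hFneg_pos : 0 < (Fneg.map fun r : ℝ => -r).prod := by
    apply Multiset.prod_pos
    intro a ha
    obtain ⟨b, hb, rfl⟩ := Multiset.mem_map.1 ha
    have := hFneg_neg b hb
    linarith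
  have hFprod_pos : 0 < F.prod := by
    apply Multiset.prod_pos
    intro a ha
    exact (Multiset.mem_filter.1 ha).2
  have heven : Even (Multiset.card F) := by
    by_contra hodd
    rw [Nat.not_even_iff_odd] at hodd
    have hmapneg : (F.map fun r : ℝ => -r).prod = (-1)^(Multiset.card F) * F.prod := by
      exact Multiset.prod_map_neg F
    rw [hodd.neg_one_pow] at hmapneg
    have : P.coeff 0 < 0 := by
      rw [hcoeff0, hmapneg]
      have : -1 * F.prod < 0 := by linarith
      exact mul_neg_of_neg_of_pos this hFneg_pos
    linarith
  have hαF : α ∈ F := Multiset.mem_filter.2 ⟨hα, hαpos⟩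
  have hcardF : Multiset.card F = 2 := by
    have h1 : 0 < Multiset.card F := Multiset.card_pos_iff_exists_mem.2 ⟨α, hαF⟩
    obtain ⟨c, hc⟩ := heven
    omega
  obtain ⟨r1, r2, hF2⟩ := Multiset.card_eq_two.1 hcardF
  have hr1F : r1 ∈ F := by rw [hF2]; simp
  have hr2F : r2 ∈ F := by rw [hF2]; simp
  have hr1pos : 0 < r1 := (Multiset.mem_filter.1 hr1F).2
  have hr2pos : 0 < r2 := (Multiset.mem_filter.1 hr2F).2
  have hβr1 : β ≤ r1 :=
    (hminmax r1 (Multiset.mem_of_le (Multiset.filter_le _ _) hr1F) hr1pos).1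
  have hβr2 : β ≤ r2 :=
    (hminmax r2 (Multiset.mem_of_le (Multiset.filter_le _ _) hr2F) hr2pos).1
  -- the small negative root
  obtain ⟨ν, hνroot, hνneg, hνβ⟩ := hii₂
  have hνF : ν ∈ Fneg := Multiset.mem_filter.2 ⟨hνroot, by intro h; linarith⟩
  obtain ⟨Γ, hΓeq⟩ := Multiset.exists_cons_of_mem hνF
  have hΓneg : ∀ g ∈ Γ, g < 0 := fun g hg =>
    hFneg_neg g (hΓeq ▸ Multiset.mem_cons_of_mem hg)
  set w : ℝ := -ν with hwdef
  have hw : 0 < w := by simp [hwdef]; linarith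
  have hwβ : w ≤ β := by
    have : |ν| = w := by rw [abs_of_neg hνneg]
    linarith [this ▸ hνβ]
  have hwr1 : w ≤ r1 := le_trans hwβ hβr1
  have hwr2 : w ≤ r2 := le_trans hwβ hβr2
  -- factorization
  set T : ℝ[X] := (Γ.map fun g => X - C g).prod with hT
  have hPfact : P = (X - C r1) * (X - C r2) * (X - C ν) * T := by
    conv_lhs => rw [hfact]
    rw [← hsplit, hF2, hΓeq]
    rw [Multiset.map_add, Multiset.prod_add, Multiset.map_cons, Multiset.prod_cons]
    have h2 : ({r1, r2} : Multiset ℝ).map (fun a : ℝ => X - C a) = {X - C r1, X - C r2} := by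
      rfl
    rw [h2]
    simp [Multiset.prod_cons]
    ring
  -- cubic coefficients
  obtain ⟨e2, he2⟩ : ∃ e2 : ℝ, e2 = -(r1+r2+ν) := ⟨_, rfl⟩
  obtain ⟨e1, he1⟩ : ∃ e1 : ℝ, e1 = r1*r2 + r1*ν + r2*ν := ⟨_, rfl⟩
  obtain ⟨e0, he0⟩ : ∃ e0 : ℝ, e0 = -(r1*r2*ν) := ⟨_, rfl⟩
  have hPP : P = T * X^3 + C e2 * (T * X^2) + C e1 * (T * X^1) + C e0 * T := by
    rw [hPfact, he2, he1, he0]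
    simp only [C_neg, C_add, C_mul]
    ring
  obtain ⟨ht0, htnn, htN2, htN3⟩ := Tfacts Γ hΓneg
  rw [← hT] at ht0 htnn htN2 htN3
  have hc1 : P.coeff 1 = e1 * T.coeff 0 + e0 * T.coeff 1 := by
    conv_lhs => rw [hPP]
    simp [coeff_add, coeff_C_mul, coeff_mul_X_pow']
  have hc2 : P.coeff 2 = e2 * T.coeff 0 + e1 * T.coeff 1 + e0 * T.coeff 2 := by
    conv_lhs => rw [hPP]
    simp [coeff_add, coeff_C_mul, coeff_mul_X_pow']
  have hc3 : P.coeff 3 = T.coeff 0 + e2 * T.coeff 1 + e1 * T.coeff 2 + e0 * T.coeff 3 := by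
    conv_lhs => rw [hPP]
    simp [coeff_add, coeff_C_mul, coeff_mul_X_pow']
  have hc4 : P.coeff 4 = T.coeff 1 + e2 * T.coeff 2 + e1 * T.coeff 3 + e0 * T.coeff 4 := by
    conv_lhs => rw [hPP]
    simp [coeff_add, coeff_C_mul, coeff_mul_X_pow']
  -- rewrite in terms of w
  have hν_w : ν = -w := by simp [hwdef]
  rw [hν_w] at he0 he1 he2
  have he0' : e0 = r1*r2*w := by rw [he0]; ring
  have he1' : e1 = r1*r2 - w*(r1+r2) := by rw [he1]; ring
  have he2' : e2 = w - r1 - r2 := by rw [he2]; ring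
  rw [he0', he1'] at hc1
  rw [he0', he1', he2'] at hc2 hc3 hc4
  -- exclude n = 1
  have hn_ne1 : n ≠ 1 := by
    intro hn
    have hq1 : P.coeff 1 < 0 := hsignmid 1 le_rfl (by omega)
    have hq2 : 0 < P.coeff 2 := hsignhi 2 (by omega) (by omega)
    rw [hc1] at hq1
    rw [hc2] at hq2
    exact excl_n1 r1 r2 w (T.coeff 0) (T.coeff 1) (T.coeff 2) hw hwr1 hwr2 ht0
      (htnn 1) (htnn 2) (by linarith [htN2]) hq1 hq2
  -- exclude n ≥ 4
  have hn_le3 : n ≤ 3 := by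
    by_contra hn4
    push_neg at hn4
    have hq1 : P.coeff 1 < 0 := hsignmid 1 le_rfl (by omega)
    have hq3 : P.coeff 3 < 0 := hsignmid 3 (by omega) (by omega)
    have hq4 : P.coeff 4 < 0 := hsignmid 4 (by omega) (by omega)
    rw [hc1] at hq1
    rw [hc3] at hq3
    rw [hc4] at hq4
    exact excl_n4 r1 r2 w (T.coeff 0) (T.coeff 1) (T.coeff 2) (T.coeff 3) (T.coeff 4)
      hw hwr1 hwr2 ht0 (htnn 1) (htnn 2) (htnn 3) (htnn 4)
      (by linarith [htN2]) (by linarith [htN3]) hq1 hq3 hq4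
  omega
end

section
/- There exists no monic hyperbolic polynomial of degree d with all coefficients nonzero realizing the sign pattern Σ_{d−1,1,1} (d−1 pluses, one minus, one final plus), i.e., with coefficients a_j > 0 for j ≥ 2, a_1 < 0, a_0 > 0, whose root moduli satisfy γ_1 ≤ β, where β is the smaller modulus of the two positive roots and γ_1 is the smallest modulus of a negative root. -/
open Polynomial

/-! If `P(β) = P(-y) = 0` with `0 < y ≤ β`, look at `y P(β) + β P(-y)`, which must vanish.
Its `j`-th summand is `a_j (y β^j + β (-y)^j)`: this is `0` for `j = 1` whatever the sign
of `a_1`, is `a_0 (y + β) > 0` for `j = 0`, and is `≥ 0` for `j ≥ 2` because `a_j > 0` and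
`|(-y)^(j-1)| ≤ β^(j-1)`. So the sum is positive, a contradiction. -/

section

variable {R : Type*} [CommRing R] [LinearOrder R] [IsStrictOrderedRing R]

lemma mul_pow_add_mul_neg_pow_nonneg {y b : R} (hy : 0 ≤ y) (hyb : y ≤ b) (j : ℕ) :
    0 ≤ y * b ^ j + b * (-y) ^ j := by
  cases j with
  | zero => simpa using add_nonneg hy (hy.trans hyb)
  | succ k =>
    have hpow : (-y) ^ k ≤ b ^ k := calc
      (-y) ^ k ≤ |(-y) ^ k| := le_abs_self _
      _ = y ^ k := by rw [abs_pow, abs_neg, abs_of_nonneg hy]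
      _ ≤ b ^ k := pow_le_pow_left₀ hy hyb k
    have hfactor : y * b ^ (k + 1) + b * (-y) ^ (k + 1) = y * b * (b ^ k - (-y) ^ k) := by ring
    rw [hfactor]
    exact mul_nonneg (mul_nonneg hy (hy.trans hyb)) (sub_nonneg.mpr hpow)

lemma mul_eval_add_mul_eval_neg_pos {P : R[X]} (h0 : 0 < P.coeff 0)
    (hcoeff : ∀ j, 2 ≤ j → j ≤ P.natDegree → 0 ≤ P.coeff j)
    {y b : R} (hy : 0 < y) (hyb : y ≤ b) :
    0 < y * P.eval b + b * P.eval (-y) := by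
  have hsum : y * P.eval b + b * P.eval (-y) =
      ∑ j ∈ Finset.range (P.natDegree + 1), P.coeff j * (y * b ^ j + b * (-y) ^ j) := by
    simp only [eval_eq_sum_range, Finset.mul_sum, ← Finset.sum_add_distrib]
    exact Finset.sum_congr rfl fun j _ => by ring
  have hconst : 0 < P.coeff 0 * (y * b ^ 0 + b * (-y) ^ 0) := by
    simpa using mul_pos h0 (add_pos hy (hy.trans_le hyb))
  rw [hsum]
  refine Finset.sum_pos' (fun j hj => ?_) ⟨0, by simp, hconst⟩
  rcases Nat.lt_or_ge j 2 with hj2 | hj2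
  · interval_cases j
    · exact hconst.le
    · simp [mul_comm y b]
  · exact mul_nonneg (hcoeff j hj2 (Nat.lt_succ_iff.mp (Finset.mem_range.mp hj)))
      (mul_pow_add_mul_neg_pow_nonneg hy.le hyb j)

end

theorem stmt8_general (d : ℕ) (P : Polynomial ℝ)
    (hdeg : P.natDegree = d)
    (hsignhi : ∀ j, 2 ≤ j → j ≤ d → 0 < P.coeff j)
    (hsign0 : 0 < P.coeff 0)
    (β : ℝ) (hβ : β ∈ P.roots)
    (x : ℝ) (hx : x ∈ P.roots) (hxneg : x < 0) (hxβ : |x| ≤ β) :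
    False := by
  have hy : 0 < -x := neg_pos.mpr hxneg
  have hyβ : -x ≤ β := by rwa [abs_of_neg hxneg] at hxβ
  have hpos := mul_eval_add_mul_eval_neg_pos hsign0
    (fun j hj hjd => (hsignhi j hj (hdeg ▸ hjd)).le) hy hyβ
  rw [neg_neg, (isRoot_of_mem_roots hβ).eq_zero, (isRoot_of_mem_roots hx).eq_zero] at hpos
  simp at hpos

/-- There is no monic degree-`d` hyperbolic polynomial realizing the sign
pattern `Σ_{d-1,1,1}` (coefficients `a_j > 0` for `j ≥ 2`, `a_1 < 0`, `a_0 > 0`) whose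
root moduli satisfy `γ₁ ≤ β`, where `β` is the smaller positive-root modulus and `γ₁`
the smallest negative-root modulus. -/
theorem stmt8 (d : ℕ) (P : Polynomial ℝ)
    (hd : 3 ≤ d)
    (hmonic : P.Monic) (hdeg : P.natDegree = d)
    (hhyp : Multiset.card P.roots = d)
    (hsignhi : ∀ j, 2 ≤ j → j ≤ d → 0 < P.coeff j)
    (hsign1 : P.coeff 1 < 0)
    (hsign0 : 0 < P.coeff 0)
    (β : ℝ) (hβ : β ∈ P.roots) (hβpos : 0 < β)
    (hβmin : ∀ c ∈ P.roots, 0 < c → β ≤ c)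
    (x : ℝ) (hx : x ∈ P.roots) (hxneg : x < 0) (hxβ : |x| ≤ β) :
    False :=
  stmt8_general d P hdeg hsignhi hsign0 β hβ x hx hxneg hxβ
end

section
/- There exists no real polynomial P = Σ_{j=0}^d a_j x^j with exactly one negative coefficient a_k (all other coefficients positive) having two real roots r and −r with r > 0. -/
open Polynomial

/-- There is no real polynomial of degree `d` with exactly one negative
coefficient `a_k` (all other coefficients positive) having two real roots `r` and `-r`
with `r > 0`. -/
theorem stmt10 :
    ¬ ∃ (d k : ℕ) (P : Polynomial ℝ) (r : ℝ),
      P.natDegree = d ∧ k ≤ d ∧ P.coeff k < 0 ∧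
      (∀ j ≤ d, j ≠ k → 0 < P.coeff j) ∧
      0 < r ∧ P.eval r = 0 ∧ P.eval (-r) = 0 := by
  rintro ⟨d, k, P, r, hdeg, hk, hneg, hpos, hr, hr1, hr2⟩
  have h1 : ∑ i ∈ Finset.range (d + 1), P.coeff i * r ^ i = 0 := by
    rw [← hdeg, ← Polynomial.eval_eq_sum_range]; exact hr1
  have h2 : ∑ i ∈ Finset.range (d + 1), P.coeff i * (-r) ^ i = 0 := by
    rw [← hdeg, ← Polynomial.eval_eq_sum_range]; exact hr2
  set s := Finset.range (d + 1) with hs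
  set A := ∑ i ∈ s.filter (fun i => Even i), P.coeff i * r ^ i with hA
  set B := ∑ i ∈ s.filter (fun i => ¬ Even i), P.coeff i * r ^ i with hB
  have hAB : A + B = 0 := by
    rw [hA, hB, Finset.sum_filter_add_sum_filter_not]; exact h1
  have hAB' : A - B = 0 := by
    have : ∑ i ∈ s, P.coeff i * (-r) ^ i =
        (∑ i ∈ s.filter (fun i => Even i), P.coeff i * (-r) ^ i) +
        ∑ i ∈ s.filter (fun i => ¬ Even i), P.coeff i * (-r) ^ i := by
      rw [Finset.sum_filter_add_sum_filter_not]
    rw [this] at h2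
    have e1 : ∑ i ∈ s.filter (fun i => Even i), P.coeff i * (-r) ^ i = A := by
      rw [hA]
      refine Finset.sum_congr rfl fun i hi => ?_
      have hev : Even i := (Finset.mem_filter.mp hi).2
      rw [hev.neg_pow]
    have e2 : ∑ i ∈ s.filter (fun i => ¬ Even i), P.coeff i * (-r) ^ i = -B := by
      rw [hB, ← Finset.sum_neg_distrib]
      refine Finset.sum_congr rfl fun i hi => ?_
      have hod : Odd i := Nat.not_even_iff_odd.mp (Finset.mem_filter.mp hi).2
      rw [hod.neg_pow]; ring
    rw [e1, e2] at h2
    linarith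
  have hA0 : A = 0 := by linarith
  have hB0 : B = 0 := by linarith
  rcases Nat.even_or_odd k with hke | hko
  · -- k even; if d = 0 then A = coeff 0 < 0, else B > 0
    rcases Nat.eq_zero_or_pos d with hd0 | hd1
    · subst hd0
      have hk0 : k = 0 := Nat.le_zero.mp hk
      have : A = P.coeff 0 := by
        rw [hA]
        have hss : s.filter (fun i => Even i) = {0} := by
          simp [hs, Finset.range_one, Finset.filter_singleton]
        rw [hss, Finset.sum_singleton, pow_zero, mul_one]
      rw [hk0] at hneg
      rw [this] at hA0
      exact absurd hA0 (ne_of_lt hneg)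
    · have hBpos : 0 < B := by
        rw [hB]
        refine Finset.sum_pos ?_ ⟨1, ?_⟩
        · intro i hi
          obtain ⟨his, hio⟩ := Finset.mem_filter.mp hi
          have hine : i ≠ k := by
            intro h; exact hio (h ▸ hke)
          have : i ≤ d := Nat.lt_succ_iff.mp (Finset.mem_range.mp his)
          exact mul_pos (hpos i this hine) (pow_pos hr i)
        · refine Finset.mem_filter.mpr ⟨Finset.mem_range.mpr (by omega), ?_⟩
          simp [Nat.even_iff]
      linarith
  · -- k odd; A > 0
    have hApos : 0 < A := by
      rw [hA]
      refine Finset.sum_pos ?_ ⟨0, ?_⟩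
      · intro i hi
        obtain ⟨his, hie⟩ := Finset.mem_filter.mp hi
        have hine : i ≠ k := by
          intro h; subst h; exact (Nat.not_even_iff_odd.mpr hko) hie
        have : i ≤ d := Nat.lt_succ_iff.mp (Finset.mem_range.mp his)
        exact mul_pos (hpos i this hine) (pow_pos hr i)
      · exact Finset.mem_filter.mpr ⟨Finset.mem_range.mpr (by omega), Even.zero⟩
    linarith
end

section
/- Suppose the monic real polynomials P_1 and P_2 of degrees d_1 and d_2 realize the sign patterns σ_1 = (+, σ̂_1) and σ_2 = (+, σ̂_2) and have exactly (pos_1, neg_1) and (pos_2, neg_2) positive and negative real roots respectively, all real roots being simple. If the last entry of σ̂_1 is +, then for all sufficiently small ε > 0 the polynomial ε^{d_2} P_1(x) P_2(x/ε) realizes the sign pattern (+, σ̂_1, σ̂_2) and has exactly pos_1 + pos_2 positive and neg_1 + neg_2 negative real roots. -/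
/-!
For `ε ≠ 0` the concatenation is `P₁ * P₂.scaleRoots ε`, so its roots are those of `P₁` together
with `ε` times those of `P₂`; for `ε > 0` this preserves signs of roots.

Write `d₂ = natDegree P₂`. The coefficient of `x^j` in `P₁ * P₂.scaleRoots ε` is continuous
in `ε`. For `j ≥ d₂` it tends to the coefficient of `x^{j - d₂}` in `P₁`, because
`P₂.scaleRoots 0 = X^{d₂}` for monic `P₂`. For `j ≤ d₂` it is `ε^{d₂ - j}` times the coefficient
of `x^j` in `P₁(εx) P₂(x)`, which tends to `P₁(0) · P₂.coeff j`. Nonzero limits fix the signs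
for all small `ε > 0`.
-/

open Polynomial

/-- The concatenation `ε^{d₂} P₁(x) P₂(x/ε)`. -/
noncomputable def concat (P₁ P₂ : Polynomial ℝ) (d₂ : ℕ) (ε : ℝ) : Polynomial ℝ :=
  C (ε ^ d₂) * P₁ * P₂.comp (C ε⁻¹ * X)

open Filter Topology

theorem Real.sign_mul_of_pos {c : ℝ} (hc : 0 < c) (x : ℝ) : Real.sign (c * x) = Real.sign x := by
  rcases lt_trichotomy x 0 with hx | rfl | hx
  · rw [Real.sign_of_neg hx, Real.sign_of_neg (mul_neg_of_pos_of_neg hc hx)]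
  · rw [mul_zero]
  · rw [Real.sign_of_pos hx, Real.sign_of_pos (mul_pos hc hx)]

theorem ContinuousAt.eventually_sign_eq {α : Type*} [TopologicalSpace α] {f : α → ℝ} {a : α}
    (hf : ContinuousAt f a) (ha : f a ≠ 0) : ∀ᶠ x in 𝓝 a, Real.sign (f x) = Real.sign (f a) := by
  rcases ha.lt_or_gt with ha | ha
  · filter_upwards [hf.eventually (gt_mem_nhds ha)] with x hx
    rw [Real.sign_of_neg hx, Real.sign_of_neg ha]
  · filter_upwards [hf.eventually (lt_mem_nhds ha)] with x hx
    rw [Real.sign_of_pos hx, Real.sign_of_pos ha]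

namespace Polynomial

theorem continuous_coeff_mul {α R : Type*} [TopologicalSpace α] [Semiring R] [TopologicalSpace R]
    [IsTopologicalSemiring R] {f g : α → R[X]} (hf : ∀ i, Continuous fun x => (f x).coeff i)
    (hg : ∀ i, Continuous fun x => (g x).coeff i) (n : ℕ) :
    Continuous fun x => (f x * g x).coeff n := by
  simp only [coeff_mul]
  exact continuous_finsetSum _ fun i _ => (hf i.1).mul (hg i.2)

theorem coeff_mul_scaleRoots_of_le {R : Type*} [CommSemiring R] (p q : R[X]) (s : R) {j : ℕ}
    (hj : j ≤ q.natDegree) :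
    (p * q.scaleRoots s).coeff j = s ^ (q.natDegree - j) * (p.comp (C s * X) * q).coeff j := by
  rw [coeff_mul, coeff_mul, Finset.mul_sum]
  refine Finset.sum_congr rfl fun ab hab => ?_
  rw [Finset.HasAntidiagonal.mem_antidiagonal] at hab
  rw [coeff_scaleRoots, comp_C_mul_X_coeff,
    show q.natDegree - ab.2 = q.natDegree - j + ab.1 by omega, pow_add]
  ring

theorem roots_mul_scaleRoots {R : Type*} [CommRing R] [IsDomain R] {p q : R[X]} (hp : p ≠ 0)
    (hq : q ≠ 0) {s : R} (hs : IsUnit s) :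
    (p * q.scaleRoots s).roots = p.roots + q.roots.map (s * ·) := by
  rw [roots_mul (mul_ne_zero hp (scaleRoots_ne_zero hq s)), roots_scaleRoots q hs]

theorem concat_eq_mul_scaleRoots (P₁ P₂ : ℝ[X]) {ε : ℝ} (hε : ε ≠ 0) :
    concat P₁ P₂ P₂.natDegree ε = P₁ * P₂.scaleRoots ε := by
  rw [concat, mul_comm (C _) P₁, mul_assoc]
  congr 1
  ext i
  rw [coeff_C_mul, comp_C_mul_X_coeff, coeff_scaleRoots]
  rcases le_or_gt i P₂.natDegree with hi | hi
  · rw [pow_sub₀ ε hε hi, inv_pow]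
    ring
  · rw [coeff_eq_zero_of_natDegree_lt hi]
    ring

theorem eventually_sign_coeff_mul_scaleRoots_of_natDegree_le {p q : ℝ[X]} {j : ℕ}
    (hj : q.natDegree ≤ j) (hp : p.coeff (j - q.natDegree) ≠ 0) (hq : 0 < q.leadingCoeff) :
    ∀ᶠ ε in 𝓝 0, Real.sign ((p * q.scaleRoots ε).coeff j) =
      Real.sign (p.coeff (j - q.natDegree)) := by
  have hcont : Continuous fun ε => (p * q.scaleRoots ε).coeff j :=
    continuous_coeff_mul (fun _ => continuous_const) (fun i => by
      simp only [coeff_scaleRoots]; fun_prop) j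
  have hlim : (p * q.scaleRoots 0).coeff j = q.leadingCoeff * p.coeff (j - q.natDegree) := by
    rw [scaleRoots_zero, mul_smul_comm, coeff_smul, coeff_mul_X_pow', if_pos hj, smul_eq_mul]
  have := hcont.continuousAt.eventually_sign_eq (by rw [hlim]; exact mul_ne_zero hq.ne' hp)
  rwa [hlim, Real.sign_mul_of_pos hq] at this

theorem eventually_sign_coeff_mul_scaleRoots_of_le_natDegree {p q : ℝ[X]} {j : ℕ}
    (hj : j ≤ q.natDegree) (hp : 0 < p.coeff 0) (hq : q.coeff j ≠ 0) :
    ∀ᶠ ε in 𝓝[>] 0, Real.sign ((p * q.scaleRoots ε).coeff j) = Real.sign (q.coeff j) := by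
  have hcont : Continuous fun ε => (p.comp (C ε * X) * q).coeff j :=
    continuous_coeff_mul (fun i => by simp only [comp_C_mul_X_coeff]; fun_prop)
      (fun _ => continuous_const) j
  have hlim : (p.comp (C 0 * X) * q).coeff j = p.coeff 0 * q.coeff j := by
    rw [C_0, zero_mul, comp_zero, coeff_C_mul, coeff_zero_eq_eval_zero]
  have := hcont.continuousAt.eventually_sign_eq (by rw [hlim]; exact mul_ne_zero hp.ne' hq)
  rw [hlim, Real.sign_mul_of_pos hp] at this
  filter_upwards [nhdsWithin_le_nhds this, self_mem_nhdsWithin] with ε hε hεpos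
  rw [coeff_mul_scaleRoots_of_le p q ε hj, Real.sign_mul_of_pos (pow_pos hεpos _), hε]

end Polynomial

theorem Multiset.card_filter_pos_map_mul {c : ℝ} (hc : 0 < c) (s : Multiset ℝ) :
    card ((s.map (c * ·)).filter (0 < ·)) = card (s.filter (0 < ·)) := by
  rw [filter_map, card_map]
  congr 1
  exact filter_congr fun x _ => mul_pos_iff_of_pos_left hc

theorem Multiset.card_filter_neg_map_mul {c : ℝ} (hc : 0 < c) (s : Multiset ℝ) :
    card ((s.map (c * ·)).filter (· < 0)) = card (s.filter (· < 0)) := by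
  rw [filter_map, card_map]
  congr 1
  exact filter_congr fun x _ => ⟨fun h => neg_of_mul_neg_right h hc.le, mul_neg_of_pos_of_neg hc⟩

theorem stmt12_general (d₁ d₂ pos₁ neg₁ pos₂ neg₂ : ℕ) (P₁ P₂ : Polynomial ℝ)
    (h₂m : P₂.Monic)
    (h₂d : P₂.natDegree = d₂)
    (h₁c : ∀ j ≤ d₁, P₁.coeff j ≠ 0) (h₂c : ∀ j ≤ d₂, P₂.coeff j ≠ 0)
    (h₁pos : Multiset.card (P₁.roots.filter (fun x => 0 < x)) = pos₁)
    (h₁neg : Multiset.card (P₁.roots.filter (fun x => x < 0)) = neg₁)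
    (h₂pos : Multiset.card (P₂.roots.filter (fun x => 0 < x)) = pos₂)
    (h₂neg : Multiset.card (P₂.roots.filter (fun x => x < 0)) = neg₂)
    (hlast : 0 < P₁.coeff 0) :
    ∃ ε₀ > (0 : ℝ), ∀ ε : ℝ, 0 < ε → ε < ε₀ →
      (∀ j ≤ d₁ + d₂,
        (d₂ ≤ j → Real.sign ((concat P₁ P₂ d₂ ε).coeff j) = Real.sign (P₁.coeff (j - d₂))) ∧
        (j < d₂ → Real.sign ((concat P₁ P₂ d₂ ε).coeff j) = Real.sign (P₂.coeff j))) ∧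
      Multiset.card ((concat P₁ P₂ d₂ ε).roots.filter (fun x => 0 < x)) = pos₁ + pos₂ ∧
      Multiset.card ((concat P₁ P₂ d₂ ε).roots.filter (fun x => x < 0)) = neg₁ + neg₂ := by
  subst h₂d
  have hsigns : ∀ᶠ ε in 𝓝[>] 0, ∀ j ∈ Finset.Iic (d₁ + P₂.natDegree),
      (P₂.natDegree ≤ j → Real.sign ((P₁ * P₂.scaleRoots ε).coeff j) =
        Real.sign (P₁.coeff (j - P₂.natDegree))) ∧
      (j < P₂.natDegree → Real.sign ((P₁ * P₂.scaleRoots ε).coeff j) =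
        Real.sign (P₂.coeff j)) := by
    refine (eventually_all_finset _).mpr fun j hj => ?_
    rw [Finset.mem_Iic] at hj
    refine .and (eventually_imp_distrib_left.mpr fun hd => ?_)
      (eventually_imp_distrib_left.mpr fun hd => ?_)
    · exact nhdsWithin_le_nhds <| eventually_sign_coeff_mul_scaleRoots_of_natDegree_le hd
        (h₁c _ (by omega)) (by rw [h₂m.leadingCoeff]; exact one_pos)
    · exact eventually_sign_coeff_mul_scaleRoots_of_le_natDegree hd.le hlast (h₂c _ hd.le)
  obtain ⟨ε₀, hε₀, hsub⟩ := mem_nhdsGT_iff_exists_Ioo_subset.mp hsigns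
  refine ⟨ε₀, hε₀, fun ε hε hεε₀ => ?_⟩
  have hroots : (concat P₁ P₂ P₂.natDegree ε).roots = P₁.roots + P₂.roots.map (ε * ·) := by
    rw [concat_eq_mul_scaleRoots P₁ P₂ hε.ne']
    exact roots_mul_scaleRoots (fun h => hlast.ne' (by rw [h, coeff_zero])) h₂m.ne_zero
      hε.ne'.isUnit
  refine ⟨fun j hj => ?_, ?_, ?_⟩
  · rw [concat_eq_mul_scaleRoots P₁ P₂ hε.ne']
    exact hsub ⟨hε, hεε₀⟩ j (Finset.mem_Iic.mpr hj)
  · rw [hroots, Multiset.filter_add, Multiset.card_add, Multiset.card_filter_pos_map_mul hε,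
      h₁pos, h₂pos]
  · rw [hroots, Multiset.filter_add, Multiset.card_add, Multiset.card_filter_neg_map_mul hε,
      h₁neg, h₂neg]

/-- Concatenation lemma, part (1). If monic `P₁, P₂` (degrees `d₁, d₂`,
all coefficients nonzero, simple real roots, exactly `posᵢ` positive and `negᵢ`
negative roots) and the constant coefficient of `P₁` is positive, then for all small
`ε > 0` the polynomial `ε^{d₂} P₁(x) P₂(x/ε)` realizes the sign pattern
`(+, σ̂₁, σ̂₂)` and has exactly `pos₁ + pos₂` positive and `neg₁ + neg₂` negative
real roots. -/
theorem stmt12 (d₁ d₂ pos₁ neg₁ pos₂ neg₂ : ℕ) (P₁ P₂ : Polynomial ℝ)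
    (h₁m : P₁.Monic) (h₂m : P₂.Monic)
    (h₁d : P₁.natDegree = d₁) (h₂d : P₂.natDegree = d₂)
    (hd₁ : 1 ≤ d₁) (hd₂ : 1 ≤ d₂)
    (h₁c : ∀ j ≤ d₁, P₁.coeff j ≠ 0) (h₂c : ∀ j ≤ d₂, P₂.coeff j ≠ 0)
    (h₁nd : P₁.roots.Nodup) (h₂nd : P₂.roots.Nodup)
    (h₁pos : Multiset.card (P₁.roots.filter (fun x => 0 < x)) = pos₁)
    (h₁neg : Multiset.card (P₁.roots.filter (fun x => x < 0)) = neg₁)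
    (h₂pos : Multiset.card (P₂.roots.filter (fun x => 0 < x)) = pos₂)
    (h₂neg : Multiset.card (P₂.roots.filter (fun x => x < 0)) = neg₂)
    (hlast : 0 < P₁.coeff 0) :
    ∃ ε₀ > (0 : ℝ), ∀ ε : ℝ, 0 < ε → ε < ε₀ →
      (∀ j ≤ d₁ + d₂,
        (d₂ ≤ j → Real.sign ((concat P₁ P₂ d₂ ε).coeff j) = Real.sign (P₁.coeff (j - d₂))) ∧
        (j < d₂ → Real.sign ((concat P₁ P₂ d₂ ε).coeff j) = Real.sign (P₂.coeff j))) ∧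
      Multiset.card ((concat P₁ P₂ d₂ ε).roots.filter (fun x => 0 < x)) = pos₁ + pos₂ ∧
      Multiset.card ((concat P₁ P₂ d₂ ε).roots.filter (fun x => x < 0)) = neg₁ + neg₂ :=
  stmt12_general d₁ d₂ pos₁ neg₁ pos₂ neg₂ P₁ P₂ h₂m h₂d h₁c h₂c h₁pos h₁neg h₂pos h₂neg hlast
end
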